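/- arXiv:2201.02761 — 10 statements merged into one kernel-verified Lean document; each statement's English description precedes it below -/
import Mathlib

section
/- Suppose the reduced gradient-flow system holds. If s(0) > 0 then s(t) > 0 for every t ≥ 0; and if s(0) = 0 then s(t) = 0 for every t ≥ 0. -/
open Filter Topology

private lemma gronwall_zero {g g' : ℝ → ℝ} {T K : ℝ}
    (hcont : ContinuousOn g (Set.Icc 0 T))
    (hderiv : ∀ x ∈ Set.Ico 0 T, HasDerivWithinAt g (g' x) (Set.Ici x) x)
    (hbound : ∀ x ∈ Set.Ico 0 T, |g' x| ≤ K * |g x|)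
    (h0 : g 0 = 0) : ∀ x ∈ Set.Icc 0 T, g x = 0 := by
  intro x hx
  have h := norm_le_gronwallBound_of_norm_deriv_right_le (δ := 0) (K := K) (ε := 0)
      hcont hderiv (by simp [h0])
      (fun t ht => by simpa [Real.norm_eq_abs] using hbound t ht) x hx
  rw [gronwallBound_ε0] at h
  simp only [zero_mul] at h
  exact norm_le_zero_iff.1 h

theorem stmt0
    (N d dy dx : ℕ) (hN : 2 ≤ N) (hd : 1 ≤ d) (hdy : d ≤ dy) (hdx : d ≤ dx)
    (σ : ℕ → ℝ)
    (hσpos : ∀ i, 1 ≤ i → i ≤ d → 0 < σ i)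
    (hσmono : ∀ i j, 1 ≤ i → i < j → j ≤ d → σ j < σ i)
    (hσzero : ∀ i, d < i → σ i = 0)
    (s : ℝ → ℝ) (a b : ℕ → ℝ → ℝ) (P : ℝ → ℝ)
    (hs_nonneg : ∀ t, 0 ≤ t → 0 ≤ s t)
    (ha_norm : ∀ t, 0 ≤ t → ∑ i ∈ Finset.Icc 1 dy, (a i t) ^ 2 = 1)
    (hb_norm : ∀ t, 0 ≤ t → ∑ j ∈ Finset.Icc 1 dx, (b j t) ^ 2 = 1)
    (hP : ∀ t, P t = ∑ j ∈ Finset.Icc 1 d, σ j * a j t * b j t)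
    (hs' : ∀ t, 0 ≤ t →
      HasDerivAt s ((N : ℝ) * s t ^ ((2 : ℝ) - 2 / (N : ℝ)) * (P t - s t)) t)
    (ha' : ∀ i, 1 ≤ i → i ≤ dy → ∀ t, 0 ≤ t →
      HasDerivAt (a i) (s t ^ ((1 : ℝ) - 2 / (N : ℝ)) * (σ i * b i t - a i t * P t)) t)
    (hb' : ∀ j, 1 ≤ j → j ≤ dx → ∀ t, 0 ≤ t →
      HasDerivAt (b j) (s t ^ ((1 : ℝ) - 2 / (N : ℝ)) * (σ j * a j t - b j t * P t)) t) :
    (0 < s 0 → ∀ t, 0 ≤ t → 0 < s t) ∧ (s 0 = 0 → ∀ t, 0 ≤ t → s t = 0) := by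
  have hN0 : (0:ℝ) < (N:ℝ) := by positivity
  have hp_nonneg : (0:ℝ) ≤ 1 - 2 / (N:ℝ) := by
    rw [sub_nonneg, div_le_one hN0]
    exact_mod_cast hN
  set B : ℝ := ∑ j ∈ Finset.Icc 1 d, σ j with hB
  have hB0 : 0 ≤ B := Finset.sum_nonneg fun j hj => by
    rcases Finset.mem_Icc.1 hj with ⟨h1, h2⟩; exact (hσpos j h1 h2).le
  -- bound on P
  have hPbound : ∀ t, 0 ≤ t → |P t| ≤ B := by
    intro t ht
    rw [hP]
    refine (Finset.abs_sum_le_sum_abs _ _).trans (Finset.sum_le_sum ?_)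
    intro j hj
    rcases Finset.mem_Icc.1 hj with ⟨h1, h2⟩
    have hσj := hσpos j h1 h2
    have haj : |a j t| ≤ 1 := by
      have : (a j t) ^ 2 ≤ 1 := by
        rw [← ha_norm t ht]
        exact Finset.single_le_sum (f := fun i => (a i t)^2)
          (fun i _ => sq_nonneg _) (Finset.mem_Icc.2 ⟨h1, h2.trans hdy⟩)
      nlinarith [sq_abs (a j t), abs_nonneg (a j t)]
    have hbj : |b j t| ≤ 1 := by
      have : (b j t) ^ 2 ≤ 1 := by
        rw [← hb_norm t ht]
        exact Finset.single_le_sum (f := fun i => (b i t)^2)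
          (fun i _ => sq_nonneg _) (Finset.mem_Icc.2 ⟨h1, h2.trans hdx⟩)
      nlinarith [sq_abs (b j t), abs_nonneg (b j t)]
    calc |σ j * a j t * b j t| = σ j * |a j t| * |b j t| := by
          rw [abs_mul, abs_mul, abs_of_pos hσj]
      _ ≤ σ j * 1 * 1 := by
          apply mul_le_mul (mul_le_mul le_rfl haj (abs_nonneg _) hσj.le) hbj
            (abs_nonneg _) (by positivity)
      _ = σ j := by ring
  -- the derivative expression
  set f : ℝ → ℝ := fun t => (N : ℝ) * s t ^ ((2 : ℝ) - 2 / (N : ℝ)) * (P t - s t) with hf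
  -- key: on [0,T], there is K with |f t| ≤ K * |s t|
  have hkey : ∀ T, 0 ≤ T → ∃ K, ∀ t ∈ Set.Icc (0:ℝ) T, |f t| ≤ K * |s t| := by
    intro T hT
    have hcont : ContinuousOn s (Set.Icc 0 T) := fun t ht =>
      ((hs' t ht.1).continuousAt).continuousWithinAt
    obtain ⟨C, hC⟩ := (isCompact_Icc (a := (0:ℝ)) (b := T)).exists_bound_of_continuousOn hcont
    set M : ℝ := max C 0 with hM
    have hM0 : 0 ≤ M := le_max_right _ _
    refine ⟨(N:ℝ) * M ^ ((1:ℝ) - 2 / (N:ℝ)) * (B + M), ?_⟩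
    intro t ht
    have hst : 0 ≤ s t := hs_nonneg t ht.1
    have hsM : s t ≤ M := le_trans (le_trans (le_abs_self _) (hC t ht)) (le_max_left _ _)
    have hsplit : s t ^ ((2:ℝ) - 2 / (N:ℝ)) = s t ^ ((1:ℝ) - 2 / (N:ℝ)) * s t := by
      rcases eq_or_lt_of_le hst with h | h
      · rw [← h]
        rw [Real.zero_rpow (by nlinarith [hp_nonneg] : (2:ℝ) - 2/(N:ℝ) ≠ 0), mul_zero]
      · rw [show (2:ℝ) - 2 / (N:ℝ) = (1 - 2/(N:ℝ)) + 1 by ring,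
          Real.rpow_add h, Real.rpow_one]
    rw [hf]
    simp only
    rw [abs_of_nonneg hst, abs_mul, abs_mul, hsplit]
    have h1 : |(N:ℝ)| = (N:ℝ) := abs_of_pos hN0
    have h2 : |s t ^ ((1:ℝ) - 2/(N:ℝ)) * s t| = s t ^ ((1:ℝ) - 2/(N:ℝ)) * s t := by
      apply abs_of_nonneg; positivity
    rw [h1, h2]
    have h3 : s t ^ ((1:ℝ) - 2/(N:ℝ)) ≤ M ^ ((1:ℝ) - 2/(N:ℝ)) :=
      Real.rpow_le_rpow hst hsM hp_nonneg
    have h4 : |P t - s t| ≤ B + M := by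
      calc |P t - s t| ≤ |P t| + |s t| := abs_sub _ _
        _ ≤ B + M := add_le_add (hPbound t ht.1) (by rw [abs_of_nonneg hst]; exact hsM)
    have h5 : (0:ℝ) ≤ s t ^ ((1:ℝ) - 2/(N:ℝ)) := Real.rpow_nonneg hst _
    have h6 : s t ^ ((1:ℝ) - 2/(N:ℝ)) * |P t - s t| ≤ M ^ ((1:ℝ) - 2/(N:ℝ)) * (B + M) :=
      mul_le_mul h3 h4 (abs_nonneg _) (Real.rpow_nonneg hM0 _)
    have h7 := mul_le_mul_of_nonneg_left h6 (by positivity : (0:ℝ) ≤ (N:ℝ) * s t)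
    nlinarith [h7]
  -- forward vanishing
  have hforward : s 0 = 0 → ∀ t, 0 ≤ t → s t = 0 := by
    intro h0 t ht
    obtain ⟨K, hK⟩ := hkey t ht
    have hcont : ContinuousOn s (Set.Icc 0 t) := fun x hx =>
      ((hs' x hx.1).continuousAt).continuousWithinAt
    exact gronwall_zero hcont
      (fun x hx => ((hs' x hx.1).hasDerivWithinAt))
      (fun x hx => hK x ⟨hx.1, hx.2.le⟩) h0 t ⟨ht, le_rfl⟩
  refine ⟨?_, hforward⟩
  intro hs0 t ht
  rcases (hs_nonneg t ht).lt_or_eq with h | h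
  · exact h
  · exfalso
    -- backward: g τ = s (t - τ)
    obtain ⟨K, hK⟩ := hkey t ht
    set g : ℝ → ℝ := fun τ => s (t - τ) with hg
    have hmem : ∀ τ ∈ Set.Icc (0:ℝ) t, t - τ ∈ Set.Icc (0:ℝ) t := by
      intro τ hτ; constructor <;> [linarith [hτ.2]; linarith [hτ.1]]
    have hgd : ∀ τ ∈ Set.Icc (0:ℝ) t, HasDerivAt g (-(f (t - τ))) τ := by
      intro τ hτ
      have hmem' := hmem τ hτ
      have h1 : HasDerivAt (fun τ : ℝ => t - τ) (-1) τ := by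
        simpa using (hasDerivAt_id τ).const_sub t
      have h2 := (hs' (t - τ) hmem'.1).comp τ h1
      have heq : (N:ℝ) * s (t - τ) ^ ((2:ℝ) - 2 / (N:ℝ)) * (P (t - τ) - s (t - τ)) * (-1)
          = -(f (t - τ)) := by simp only [hf]; ring
      rw [heq] at h2
      exact h2
    have hgcont : ContinuousOn g (Set.Icc 0 t) := fun τ hτ =>
      ((hgd τ hτ).continuousAt).continuousWithinAt
    have := gronwall_zero hgcont
      (fun τ hτ => (hgd τ ⟨hτ.1, hτ.2.le⟩).hasDerivWithinAt)
      (fun τ hτ => by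
        have := hK (t - τ) (hmem τ ⟨hτ.1, hτ.2.le⟩)
        simpa [hg, abs_neg] using this)
      (by simp [hg, ← h]) t ⟨ht, le_rfl⟩
    rw [hg] at this
    simp only [sub_self] at this
    exact absurd this (by linarith)
end

section
/- Suppose the reduced gradient-flow system holds with s(0) > 0. Then for every t ≥ 0 the derivative of P satisfies P'(t) = s(t)^{1−2/N}·[∑_{i=1}^{dy}(s_i·b_i(t) − a_i(t)·P(t))² + ∑_{j=1}^{dx}(s_j·a_j(t) − b_j(t)·P(t))²] ≥ 0; consequently t ↦ P(t) is nondecreasing on [0,∞), satisfies P(t) ≤ s_1 for all t ≥ 0, and converges to a finite limit as t → ∞. -/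
open Filter Topology

lemma key_sum_identity (d dy dx : ℕ) (hdy : d ≤ dy) (hdx : d ≤ dx) (σ : ℕ → ℝ)
    (hσzero : ∀ i, d < i → σ i = 0) (A B : ℕ → ℝ) (e p : ℝ)
    (hA : ∑ i ∈ Finset.Icc 1 dy, A i ^ 2 = 1)
    (hB : ∑ j ∈ Finset.Icc 1 dx, B j ^ 2 = 1)
    (hp : p = ∑ j ∈ Finset.Icc 1 d, σ j * A j * B j) :
    e * ((∑ i ∈ Finset.Icc 1 dy, (σ i * B i - A i * p) ^ 2) +
      ∑ j ∈ Finset.Icc 1 dx, (σ j * A j - B j * p) ^ 2) =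
    ∑ j ∈ Finset.Icc 1 d, σ j *
      (e * (σ j * B j - A j * p) * B j + A j * (e * (σ j * A j - B j * p))) := by
  have h1 : ∑ i ∈ Finset.Icc 1 dy, (σ i * B i - A i * p) ^ 2 =
      (∑ i ∈ Finset.Icc 1 d, (σ i ^ 2 * B i ^ 2 - 2 * (σ i * A i * B i) * p)) + p ^ 2 := by
    have hexp : ∀ i, (σ i * B i - A i * p) ^ 2 =
        (σ i ^ 2 * B i ^ 2 - 2 * (σ i * A i * B i) * p) + A i ^ 2 * p ^ 2 := fun i => by ring
    simp_rw [hexp]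
    rw [Finset.sum_add_distrib, ← Finset.sum_mul, hA, one_mul]
    congr 1
    refine (Finset.sum_subset (Finset.Icc_subset_Icc_right hdy) ?_).symm
    intro i hi hni
    have h1i := (Finset.mem_Icc.mp hi).1
    have hdi : d < i := by
      by_contra h
      exact hni (Finset.mem_Icc.mpr ⟨h1i, not_lt.mp h⟩)
    rw [hσzero i hdi]; ring
  have h2 : ∑ j ∈ Finset.Icc 1 dx, (σ j * A j - B j * p) ^ 2 =
      (∑ j ∈ Finset.Icc 1 d, (σ j ^ 2 * A j ^ 2 - 2 * (σ j * A j * B j) * p)) + p ^ 2 := by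
    have hexp : ∀ j, (σ j * A j - B j * p) ^ 2 =
        (σ j ^ 2 * A j ^ 2 - 2 * (σ j * A j * B j) * p) + B j ^ 2 * p ^ 2 := fun j => by ring
    simp_rw [hexp]
    rw [Finset.sum_add_distrib, ← Finset.sum_mul, hB, one_mul]
    congr 1
    refine (Finset.sum_subset (Finset.Icc_subset_Icc_right hdx) ?_).symm
    intro i hi hni
    have h1i := (Finset.mem_Icc.mp hi).1
    have hdi : d < i := by
      by_contra h
      exact hni (Finset.mem_Icc.mpr ⟨h1i, not_lt.mp h⟩)
    rw [hσzero i hdi]; ring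
  have hp2 : p ^ 2 = ∑ j ∈ Finset.Icc 1 d, (σ j * A j * B j) * p := by
    rw [← Finset.sum_mul, ← hp]; ring
  rw [h1, h2, hp2, ← Finset.sum_add_distrib, ← Finset.sum_add_distrib,
    ← Finset.sum_add_distrib, Finset.mul_sum]
  exact Finset.sum_congr rfl fun j _ => by ring

theorem stmt1
    (N d dy dx : ℕ) (hN : 2 ≤ N) (hd : 1 ≤ d) (hdy : d ≤ dy) (hdx : d ≤ dx)
    (σ : ℕ → ℝ)
    (hσpos : ∀ i, 1 ≤ i → i ≤ d → 0 < σ i)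
    (hσmono : ∀ i j, 1 ≤ i → i < j → j ≤ d → σ j < σ i)
    (hσzero : ∀ i, d < i → σ i = 0)
    (s : ℝ → ℝ) (a b : ℕ → ℝ → ℝ) (P : ℝ → ℝ)
    (hs_nonneg : ∀ t, 0 ≤ t → 0 ≤ s t)
    (ha_norm : ∀ t, 0 ≤ t → ∑ i ∈ Finset.Icc 1 dy, (a i t) ^ 2 = 1)
    (hb_norm : ∀ t, 0 ≤ t → ∑ j ∈ Finset.Icc 1 dx, (b j t) ^ 2 = 1)
    (hP : ∀ t, P t = ∑ j ∈ Finset.Icc 1 d, σ j * a j t * b j t)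
    (hs' : ∀ t, 0 ≤ t →
      HasDerivAt s ((N : ℝ) * s t ^ ((2 : ℝ) - 2 / (N : ℝ)) * (P t - s t)) t)
    (ha' : ∀ i, 1 ≤ i → i ≤ dy → ∀ t, 0 ≤ t →
      HasDerivAt (a i) (s t ^ ((1 : ℝ) - 2 / (N : ℝ)) * (σ i * b i t - a i t * P t)) t)
    (hb' : ∀ j, 1 ≤ j → j ≤ dx → ∀ t, 0 ≤ t →
      HasDerivAt (b j) (s t ^ ((1 : ℝ) - 2 / (N : ℝ)) * (σ j * a j t - b j t * P t)) t)
    (hs0 : 0 < s 0) :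
    (∀ t, 0 ≤ t →
      HasDerivAt P (s t ^ ((1 : ℝ) - 2 / (N : ℝ)) *
        ((∑ i ∈ Finset.Icc 1 dy, (σ i * b i t - a i t * P t) ^ 2) +
         ∑ j ∈ Finset.Icc 1 dx, (σ j * a j t - b j t * P t) ^ 2)) t ∧
      0 ≤ s t ^ ((1 : ℝ) - 2 / (N : ℝ)) *
        ((∑ i ∈ Finset.Icc 1 dy, (σ i * b i t - a i t * P t) ^ 2) +
         ∑ j ∈ Finset.Icc 1 dx, (σ j * a j t - b j t * P t) ^ 2)) ∧
    MonotoneOn P (Set.Ici 0) ∧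
    (∀ t, 0 ≤ t → P t ≤ σ 1) ∧
    (∃ L : ℝ, Tendsto P atTop (nhds L)) := by
  -- nonnegativity of the candidate derivative
  have hnn : ∀ t, 0 ≤ t → 0 ≤ s t ^ ((1 : ℝ) - 2 / (N : ℝ)) *
      ((∑ i ∈ Finset.Icc 1 dy, (σ i * b i t - a i t * P t) ^ 2) +
       ∑ j ∈ Finset.Icc 1 dx, (σ j * a j t - b j t * P t) ^ 2) := by
    intro t ht
    apply mul_nonneg (Real.rpow_nonneg (hs_nonneg t ht) _)
    exact add_nonneg (Finset.sum_nonneg fun i _ => sq_nonneg _)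
      (Finset.sum_nonneg fun j _ => sq_nonneg _)
  -- the derivative
  have hderiv : ∀ t, 0 ≤ t → HasDerivAt P (s t ^ ((1 : ℝ) - 2 / (N : ℝ)) *
      ((∑ i ∈ Finset.Icc 1 dy, (σ i * b i t - a i t * P t) ^ 2) +
       ∑ j ∈ Finset.Icc 1 dx, (σ j * a j t - b j t * P t) ^ 2)) t := by
    intro t ht
    have hPf : P = fun u => ∑ j ∈ Finset.Icc 1 d, σ j * a j u * b j u := funext hP
    have hsum : HasDerivAt (fun u => ∑ j ∈ Finset.Icc 1 d, σ j * a j u * b j u)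
        (∑ j ∈ Finset.Icc 1 d, σ j *
          (s t ^ ((1 : ℝ) - 2 / (N : ℝ)) * (σ j * b j t - a j t * P t) * b j t +
           a j t * (s t ^ ((1 : ℝ) - 2 / (N : ℝ)) * (σ j * a j t - b j t * P t)))) t := by
      apply HasDerivAt.fun_sum
      intro j hj
      obtain ⟨hj1, hjd⟩ := Finset.mem_Icc.mp hj
      have hmul := ((ha' j hj1 (hjd.trans hdy) t ht).mul
        (hb' j hj1 (hjd.trans hdx) t ht)).const_mul (σ j)
      have hfun : (fun u => σ j * a j u * b j u) = fun u => σ j * (a j u * b j u) := by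
        funext u; ring
      rw [hfun]
      exact hmul
    have hsum' : HasDerivAt P (∑ j ∈ Finset.Icc 1 d, σ j *
        (s t ^ ((1 : ℝ) - 2 / (N : ℝ)) * (σ j * b j t - a j t * P t) * b j t +
         a j t * (s t ^ ((1 : ℝ) - 2 / (N : ℝ)) * (σ j * a j t - b j t * P t)))) t := by
      exact hsum.congr_of_eventuallyEq (Filter.Eventually.of_forall hP)
    have hkey := key_sum_identity d dy dx hdy hdx σ hσzero (fun i => a i t) (fun j => b j t)
      (s t ^ ((1 : ℝ) - 2 / (N : ℝ))) (P t) (ha_norm t ht) (hb_norm t ht) (hP t)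
    have hkey' := hkey
    rw [hkey']
    exact hsum'
  -- monotonicity
  have hcont : ContinuousOn P (Set.Ici 0) := fun t ht =>
    ((hderiv t ht).continuousAt).continuousWithinAt
  have hmono : MonotoneOn P (Set.Ici 0) := by
    apply monotoneOn_of_deriv_nonneg (convex_Ici 0) hcont
    · intro x hx
      rw [interior_Ici] at hx
      exact ((hderiv x (le_of_lt hx)).differentiableAt).differentiableWithinAt
    · intro x hx
      rw [interior_Ici] at hx
      rw [(hderiv x (le_of_lt hx)).deriv]
      exact hnn x (le_of_lt hx)
  -- bound
  have hbound : ∀ t, 0 ≤ t → P t ≤ σ 1 := by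
    intro t ht
    have hσ1 : 0 < σ 1 := hσpos 1 le_rfl hd
    have hle : ∀ j ∈ Finset.Icc 1 d, σ j * a j t * b j t ≤
        σ 1 * ((a j t ^ 2 + b j t ^ 2) / 2) := by
      intro j hj
      obtain ⟨hj1, hjd⟩ := Finset.mem_Icc.mp hj
      have hσj : 0 < σ j := hσpos j hj1 hjd
      have hσj1 : σ j ≤ σ 1 := by
        rcases eq_or_lt_of_le hj1 with h | h
        · rw [← h]
        · exact le_of_lt (hσmono 1 j le_rfl h hjd)
      have hab : a j t * b j t ≤ (a j t ^ 2 + b j t ^ 2) / 2 := by nlinarith [sq_nonneg (a j t - b j t)]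
      calc σ j * a j t * b j t = σ j * (a j t * b j t) := by ring
        _ ≤ σ j * ((a j t ^ 2 + b j t ^ 2) / 2) := by
            exact mul_le_mul_of_nonneg_left hab (le_of_lt hσj)
        _ ≤ σ 1 * ((a j t ^ 2 + b j t ^ 2) / 2) := by
            apply mul_le_mul_of_nonneg_right hσj1
            nlinarith [sq_nonneg (a j t), sq_nonneg (b j t)]
    have hsa : ∑ j ∈ Finset.Icc 1 d, a j t ^ 2 ≤ 1 := by
      rw [← ha_norm t ht]
      exact Finset.sum_le_sum_of_subset_of_nonneg (Finset.Icc_subset_Icc_right hdy)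
        (fun i _ _ => sq_nonneg _)
    have hsb : ∑ j ∈ Finset.Icc 1 d, b j t ^ 2 ≤ 1 := by
      rw [← hb_norm t ht]
      exact Finset.sum_le_sum_of_subset_of_nonneg (Finset.Icc_subset_Icc_right hdx)
        (fun i _ _ => sq_nonneg _)
    calc P t = ∑ j ∈ Finset.Icc 1 d, σ j * a j t * b j t := hP t
      _ ≤ ∑ j ∈ Finset.Icc 1 d, σ 1 * ((a j t ^ 2 + b j t ^ 2) / 2) :=
          Finset.sum_le_sum hle
      _ = σ 1 * ((∑ j ∈ Finset.Icc 1 d, a j t ^ 2 + ∑ j ∈ Finset.Icc 1 d, b j t ^ 2) / 2) := by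
          rw [← Finset.mul_sum, ← Finset.sum_add_distrib]
          congr 1
          rw [← Finset.sum_div]
      _ ≤ σ 1 * ((1 + 1) / 2) := by
          apply mul_le_mul_of_nonneg_left _ (le_of_lt hσ1)
          linarith
      _ = σ 1 := by ring
  refine ⟨fun t ht => ⟨hderiv t ht, hnn t ht⟩, hmono, hbound, ?_⟩
  -- limit
  set Q : ℝ → ℝ := fun t => P (max t 0) with hQ
  have hQmono : Monotone Q := fun x y hxy =>
    hmono (le_max_right x 0) (le_max_right y 0) (max_le_max hxy le_rfl)
  have hbdd : BddAbove (Set.range Q) := by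
    refine ⟨σ 1, ?_⟩
    rintro _ ⟨t, rfl⟩
    exact hbound _ (le_max_right t 0)
  refine ⟨⨆ t, Q t, (tendsto_atTop_ciSup hQmono hbdd).congr' ?_⟩
  filter_upwards [eventually_ge_atTop (0 : ℝ)] with t ht
  simp [hQ, max_eq_left ht]
end

section
/- Suppose the reduced gradient-flow system holds with s(0) > 0. Then for every t ≥ 0 one has (a_1·b_1)'(t) ≥ s_1·s(t)^{1−2/N}·(|a_1(t)| − |b_1(t)|)² ≥ 0; consequently t ↦ a_1(t)·b_1(t) is nondecreasing on [0,∞), is bounded above by 1, and converges to a finite limit as t → ∞. -/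
open Filter Topology

theorem stmt2
    (N d dy dx : ℕ) (hN : 2 ≤ N) (hd : 1 ≤ d) (hdy : d ≤ dy) (hdx : d ≤ dx)
    (σ : ℕ → ℝ)
    (hσpos : ∀ i, 1 ≤ i → i ≤ d → 0 < σ i)
    (hσmono : ∀ i j, 1 ≤ i → i < j → j ≤ d → σ j < σ i)
    (hσzero : ∀ i, d < i → σ i = 0)
    (s : ℝ → ℝ) (a b : ℕ → ℝ → ℝ) (P : ℝ → ℝ)
    (hs_nonneg : ∀ t, 0 ≤ t → 0 ≤ s t)
    (ha_norm : ∀ t, 0 ≤ t → ∑ i ∈ Finset.Icc 1 dy, (a i t) ^ 2 = 1)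
    (hb_norm : ∀ t, 0 ≤ t → ∑ j ∈ Finset.Icc 1 dx, (b j t) ^ 2 = 1)
    (hP : ∀ t, P t = ∑ j ∈ Finset.Icc 1 d, σ j * a j t * b j t)
    (hs' : ∀ t, 0 ≤ t →
      HasDerivAt s ((N : ℝ) * s t ^ ((2 : ℝ) - 2 / (N : ℝ)) * (P t - s t)) t)
    (ha' : ∀ i, 1 ≤ i → i ≤ dy → ∀ t, 0 ≤ t →
      HasDerivAt (a i) (s t ^ ((1 : ℝ) - 2 / (N : ℝ)) * (σ i * b i t - a i t * P t)) t)
    (hb' : ∀ j, 1 ≤ j → j ≤ dx → ∀ t, 0 ≤ t →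
      HasDerivAt (b j) (s t ^ ((1 : ℝ) - 2 / (N : ℝ)) * (σ j * a j t - b j t * P t)) t)
    (hs0 : 0 < s 0) :
    (∀ t, 0 ≤ t → ∃ D : ℝ, HasDerivAt (fun τ => a 1 τ * b 1 τ) D t ∧
      σ 1 * s t ^ ((1 : ℝ) - 2 / (N : ℝ)) * (|a 1 t| - |b 1 t|) ^ 2 ≤ D ∧
      0 ≤ σ 1 * s t ^ ((1 : ℝ) - 2 / (N : ℝ)) * (|a 1 t| - |b 1 t|) ^ 2) ∧
    MonotoneOn (fun t => a 1 t * b 1 t) (Set.Ici 0) ∧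
    (∀ t, 0 ≤ t → a 1 t * b 1 t ≤ 1) ∧
    (∃ L : ℝ, Tendsto (fun t => a 1 t * b 1 t) atTop (nhds L)) := by
  have hσ1 : 0 < σ 1 := hσpos 1 le_rfl hd
  have h1dy : 1 ≤ dy := le_trans hd hdy
  have h1dx : 1 ≤ dx := le_trans hd hdx
  -- bound on P
  have hPb : ∀ t, 0 ≤ t → |P t| ≤ σ 1 := by
    intro t ht
    rw [hP t]
    calc |∑ j ∈ Finset.Icc 1 d, σ j * a j t * b j t|
        ≤ ∑ j ∈ Finset.Icc 1 d, |σ j * a j t * b j t| := Finset.abs_sum_le_sum_abs _ _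
      _ ≤ ∑ j ∈ Finset.Icc 1 d, σ 1 * ((a j t) ^ 2 + (b j t) ^ 2) / 2 := by
          apply Finset.sum_le_sum
          intro j hj
          rw [Finset.mem_Icc] at hj
          have hσj : 0 < σ j := hσpos j hj.1 hj.2
          have hσj1 : σ j ≤ σ 1 := by
            rcases eq_or_lt_of_le hj.1 with h | h
            · rw [← h]
            · exact le_of_lt (hσmono 1 j le_rfl h hj.2)
          have h2 : |σ j * a j t * b j t| = σ j * (|a j t| * |b j t|) := by
            rw [abs_mul, abs_mul, abs_of_pos hσj]; ring
          rw [h2]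
          have hab : |a j t| * |b j t| ≤ ((a j t) ^ 2 + (b j t) ^ 2) / 2 := by
            nlinarith [sq_nonneg (|a j t| - |b j t|), sq_abs (a j t), sq_abs (b j t)]
          nlinarith [abs_nonneg (a j t), abs_nonneg (b j t), mul_nonneg (abs_nonneg (a j t)) (abs_nonneg (b j t)), sq_nonneg (a j t), sq_nonneg (b j t)]
      _ = σ 1 * ((∑ j ∈ Finset.Icc 1 d, (a j t) ^ 2) + ∑ j ∈ Finset.Icc 1 d, (b j t) ^ 2) / 2 := by
          rw [← Finset.sum_add_distrib, Finset.mul_sum, Finset.sum_div]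
      _ ≤ σ 1 * (1 + 1) / 2 := by
          have hA : ∑ j ∈ Finset.Icc 1 d, (a j t) ^ 2 ≤ 1 := by
            rw [← ha_norm t ht]
            apply Finset.sum_le_sum_of_subset_of_nonneg
            · exact Finset.Icc_subset_Icc_right hdy
            · intro i _ _; positivity
          have hB : ∑ j ∈ Finset.Icc 1 d, (b j t) ^ 2 ≤ 1 := by
            rw [← hb_norm t ht]
            apply Finset.sum_le_sum_of_subset_of_nonneg
            · exact Finset.Icc_subset_Icc_right hdx
            · intro i _ _; positivity
          nlinarith
      _ = σ 1 := by ring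
  -- single coordinate bounds
  have habd : ∀ t, 0 ≤ t → (a 1 t) ^ 2 ≤ 1 ∧ (b 1 t) ^ 2 ≤ 1 := by
    intro t ht
    constructor
    · rw [← ha_norm t ht]
      exact Finset.single_le_sum (f := fun i => (a i t) ^ 2) (fun i _ => sq_nonneg _)
        (Finset.mem_Icc.2 ⟨le_rfl, h1dy⟩)
    · rw [← hb_norm t ht]
      exact Finset.single_le_sum (f := fun i => (b i t) ^ 2) (fun i _ => sq_nonneg _)
        (Finset.mem_Icc.2 ⟨le_rfl, h1dx⟩)
  -- main derivative claim
  have key : ∀ t, 0 ≤ t → ∃ D : ℝ, HasDerivAt (fun τ => a 1 τ * b 1 τ) D t ∧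
      σ 1 * s t ^ ((1 : ℝ) - 2 / (N : ℝ)) * (|a 1 t| - |b 1 t|) ^ 2 ≤ D ∧
      0 ≤ σ 1 * s t ^ ((1 : ℝ) - 2 / (N : ℝ)) * (|a 1 t| - |b 1 t|) ^ 2 := by
    intro t ht
    have hda := ha' 1 le_rfl h1dy t ht
    have hdb := hb' 1 le_rfl h1dx t ht
    set κ := s t ^ ((1 : ℝ) - 2 / (N : ℝ)) with hκ
    have hκ0 : 0 ≤ κ := Real.rpow_nonneg (hs_nonneg t ht) _
    refine ⟨_, hda.mul hdb, ?_, ?_⟩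
    · have hPle : a 1 t * b 1 t * P t ≤ σ 1 * (|a 1 t| * |b 1 t|) := by
        calc a 1 t * b 1 t * P t ≤ |a 1 t * b 1 t * P t| := le_abs_self _
          _ = |a 1 t| * |b 1 t| * |P t| := by rw [abs_mul, abs_mul]
          _ ≤ |a 1 t| * |b 1 t| * σ 1 := by
              apply mul_le_mul_of_nonneg_left (hPb t ht)
              exact mul_nonneg (abs_nonneg _) (abs_nonneg _)
          _ = σ 1 * (|a 1 t| * |b 1 t|) := by ring
      have e : (|a 1 t| - |b 1 t|) ^ 2
          = (a 1 t) ^ 2 + (b 1 t) ^ 2 - 2 * (|a 1 t| * |b 1 t|) := by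
        rw [sub_sq, sq_abs, sq_abs]; ring
      rw [e]
      nlinarith [mul_nonneg hκ0 (sub_nonneg.2 hPle)]
    · exact mul_nonneg (mul_nonneg hσ1.le hκ0) (sq_nonneg _)
  have mono : MonotoneOn (fun t => a 1 t * b 1 t) (Set.Ici 0) := by
    apply monotoneOn_of_deriv_nonneg (convex_Ici 0)
    · intro t ht
      obtain ⟨D, hD, _, _⟩ := key t ht
      exact hD.continuousAt.continuousWithinAt
    · intro t ht
      rw [interior_Ici] at ht
      obtain ⟨D, hD, _, _⟩ := key t (le_of_lt ht)
      exact hD.differentiableAt.differentiableWithinAt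
    · intro t ht
      rw [interior_Ici] at ht
      obtain ⟨D, hD, hle, h0⟩ := key t (le_of_lt ht)
      rw [hD.deriv]
      exact le_trans h0 hle
  refine ⟨key, mono, ?_, ?_⟩
  · -- bounded by 1
    intro t ht
    obtain ⟨hA, hB⟩ := habd t ht
    nlinarith [sq_nonneg (a 1 t - b 1 t)]
  · -- convergence
    set g : ℝ → ℝ := fun t => a 1 (max t 0) * b 1 (max t 0) with hg
    have hgmono : Monotone g := by
      intro t u htu
      exact mono (Set.mem_Ici.2 (le_max_right t 0)) (Set.mem_Ici.2 (le_max_right u 0))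
        (max_le_max htu le_rfl)
    have hgbdd : BddAbove (Set.range g) := by
      refine ⟨1, ?_⟩
      rintro x ⟨t, rfl⟩
      obtain ⟨hA, hB⟩ := habd (max t 0) (le_max_right t 0)
      have h : a 1 (max t 0) * b 1 (max t 0) ≤ 1 := by nlinarith [sq_nonneg (a 1 (max t 0) - b 1 (max t 0))]
      exact h
    have hgt : Tendsto g atTop (nhds (⨆ t, g t)) := tendsto_atTop_ciSup hgmono hgbdd
    refine ⟨⨆ t, g t, ?_⟩
    apply hgt.congr'
    filter_upwards [eventually_ge_atTop (0 : ℝ)] with t ht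
    simp [hg, max_eq_left ht]
end

section
/- Suppose the reduced gradient-flow system holds with s(0) > 0, and let i be an index with 1 ≤ i ≤ min(dy, dx). Then the sign of a_i(t) + b_i(t) is constant in t: if a_i(0) + b_i(0) = 0 then a_i(t) + b_i(t) = 0 for all t ≥ 0; if a_i(0) + b_i(0) > 0 then a_i(t) + b_i(t) > 0 for all t ≥ 0; and if a_i(0) + b_i(0) < 0 then a_i(t) + b_i(t) < 0 for all t ≥ 0. -/
open Filter Topology

theorem stmt3
    (N d dy dx : ℕ) (hN : 2 ≤ N) (hd : 1 ≤ d) (hdy : d ≤ dy) (hdx : d ≤ dx)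
    (σ : ℕ → ℝ)
    (hσpos : ∀ i, 1 ≤ i → i ≤ d → 0 < σ i)
    (hσmono : ∀ i j, 1 ≤ i → i < j → j ≤ d → σ j < σ i)
    (hσzero : ∀ i, d < i → σ i = 0)
    (s : ℝ → ℝ) (a b : ℕ → ℝ → ℝ) (P : ℝ → ℝ)
    (hs_nonneg : ∀ t, 0 ≤ t → 0 ≤ s t)
    (ha_norm : ∀ t, 0 ≤ t → ∑ i ∈ Finset.Icc 1 dy, (a i t) ^ 2 = 1)
    (hb_norm : ∀ t, 0 ≤ t → ∑ j ∈ Finset.Icc 1 dx, (b j t) ^ 2 = 1)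
    (hP : ∀ t, P t = ∑ j ∈ Finset.Icc 1 d, σ j * a j t * b j t)
    (hs' : ∀ t, 0 ≤ t →
      HasDerivAt s ((N : ℝ) * s t ^ ((2 : ℝ) - 2 / (N : ℝ)) * (P t - s t)) t)
    (ha' : ∀ i, 1 ≤ i → i ≤ dy → ∀ t, 0 ≤ t →
      HasDerivAt (a i) (s t ^ ((1 : ℝ) - 2 / (N : ℝ)) * (σ i * b i t - a i t * P t)) t)
    (hb' : ∀ j, 1 ≤ j → j ≤ dx → ∀ t, 0 ≤ t →
      HasDerivAt (b j) (s t ^ ((1 : ℝ) - 2 / (N : ℝ)) * (σ j * a j t - b j t * P t)) t)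
    (hs0 : 0 < s 0) (i : ℕ) (hi1 : 1 ≤ i) (hi : i ≤ min dy dx) :
    (a i 0 + b i 0 = 0 → ∀ t, 0 ≤ t → a i t + b i t = 0) ∧
    (0 < a i 0 + b i 0 → ∀ t, 0 ≤ t → 0 < a i t + b i t) ∧
    (a i 0 + b i 0 < 0 → ∀ t, 0 ≤ t → a i t + b i t < 0) := by
  have hidy : i ≤ dy := le_trans hi (min_le_left _ _)
  have hidx : i ≤ dx := le_trans hi (min_le_right _ _)
  set p : ℝ := (1 : ℝ) - 2 / (N : ℝ) with hpdef
  have hp0 : 0 ≤ p := by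
    have hN2 : (2 : ℝ) ≤ (N : ℝ) := by exact_mod_cast hN
    have : 2 / (N : ℝ) ≤ 1 := by
      rw [div_le_one (by linarith)]; linarith
    simp only [hpdef]; linarith
  set c : ℝ → ℝ := fun t => a i t + b i t with hcdef
  set g : ℝ → ℝ := fun t => s t ^ p * (σ i - P t) with hgdef
  -- derivative of c
  have hc' : ∀ t, 0 ≤ t → HasDerivAt c (g t * c t) t := by
    intro t ht
    have h := (ha' i hi1 hidy t ht).add (hb' i hi1 hidx t ht)
    refine h.congr_deriv ?_
    simp only [hgdef, hcdef]; ring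
  have hc_cont : ∀ t, 0 ≤ t → ContinuousAt c t := fun t ht => (hc' t ht).continuousAt
  -- continuity of g at each t ≥ 0
  have hg_cont : ∀ t, 0 ≤ t → ContinuousAt g t := by
    intro t ht
    have hs_c : ContinuousAt s t := (hs' t ht).continuousAt
    have hrp : ContinuousAt (fun x => s x ^ p) t :=
      (Real.continuousAt_rpow_const (s t) p (Or.inr hp0)).comp hs_c
    have hPsum : ContinuousAt (fun u => ∑ j ∈ Finset.Icc 1 d, σ j * a j u * b j u) t := by
      apply tendsto_finset_sum
      intro j hj
      rw [Finset.mem_Icc] at hj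
      exact (continuousAt_const.mul (ha' j hj.1 (le_trans hj.2 hdy) t ht).continuousAt).mul
        (hb' j hj.1 (le_trans hj.2 hdx) t ht).continuousAt
    have hPc : ContinuousAt P t := by
      have hPe : P = fun u => ∑ j ∈ Finset.Icc 1 d, σ j * a j u * b j u := funext hP
      rw [hPe]; exact hPsum
    exact hrp.mul (continuousAt_const.sub hPc)
  -- forward uniqueness from zero
  have key : ∀ t0 t1 : ℝ, 0 ≤ t0 → t0 ≤ t1 →
      (c t0 = 0 → c t1 = 0) ∧ (c t1 = 0 → c t0 = 0) := by
    intro t0 t1 h0 h01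
    have hsub : ∀ x ∈ Set.Icc t0 t1, (0:ℝ) ≤ x := fun x hx => le_trans h0 hx.1
    obtain ⟨K, hK⟩ := (isCompact_Icc).exists_bound_of_continuousOn
      (fun x hx => (hg_cont x (hsub x hx)).continuousWithinAt)
    constructor
    · intro hc0
      have hbound : ∀ x ∈ Set.Ico t0 t1, ‖g x * c x‖ ≤ K * ‖c x‖ + 0 := by
        intro x hx
        rw [norm_mul, add_zero]
        exact mul_le_mul_of_nonneg_right (hK x ⟨hx.1, le_of_lt hx.2⟩) (norm_nonneg _)
      have h := norm_le_gronwallBound_of_norm_deriv_right_le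
        (f := c) (f' := fun x => g x * c x) (δ := 0) (K := K) (ε := 0)
        (fun x hx => (hc_cont x (hsub x hx)).continuousWithinAt)
        (fun x hx => (hc' x (le_trans h0 hx.1)).hasDerivWithinAt)
        (by rw [hc0]; simp) hbound t1 ⟨h01, le_refl _⟩
      rw [gronwallBound_ε0, zero_mul] at h
      simpa using le_antisymm h (norm_nonneg _)
    · intro hc1
      set f : ℝ → ℝ := fun x => c (t0 + t1 - x) with hfdef
      have hf' : ∀ x ∈ Set.Icc t0 t1, HasDerivAt f (-(g (t0 + t1 - x) * c (t0 + t1 - x))) x := by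
        intro x hx
        have hu : t0 + t1 - x ∈ Set.Icc t0 t1 := by
          constructor <;> [linarith [hx.2]; linarith [hx.1]]
        have hinner : HasDerivAt (fun x : ℝ => t0 + t1 - x) (-1) x := by
          simpa using (hasDerivAt_id' x).const_sub (t0 + t1)
        have := (hc' (t0 + t1 - x) (hsub _ hu)).comp x hinner
        simpa [hfdef, mul_comm, Function.comp_def] using this
      have hbound : ∀ x ∈ Set.Ico t0 t1,
          ‖-(g (t0 + t1 - x) * c (t0 + t1 - x))‖ ≤ K * ‖f x‖ + 0 := by
        intro x hx
        have hu : t0 + t1 - x ∈ Set.Icc t0 t1 := by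
          constructor <;> [linarith [hx.2.le]; linarith [hx.1]]
        rw [norm_neg, norm_mul, add_zero]
        exact mul_le_mul_of_nonneg_right (hK _ hu) (norm_nonneg _)
      have h := norm_le_gronwallBound_of_norm_deriv_right_le
        (f := f) (f' := fun x => -(g (t0 + t1 - x) * c (t0 + t1 - x))) (δ := 0) (K := K) (ε := 0)
        (fun x hx => ((hf' x hx).continuousAt).continuousWithinAt)
        (fun x hx => (hf' x ⟨hx.1, hx.2.le⟩).hasDerivWithinAt)
        (by simp [hfdef]; simpa using hc1) hbound t1 ⟨h01, le_refl _⟩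
      rw [gronwallBound_ε0, zero_mul] at h
      have hft1 : f t1 = c t0 := by simp [hfdef]
      have : ‖f t1‖ = 0 := le_antisymm h (norm_nonneg _)
      rw [hft1] at this; simpa using this
  refine ⟨fun h0 t ht => (key 0 t le_rfl ht).1 h0, ?_, ?_⟩
  · intro h0 t ht
    by_contra h
    push_neg at h
    have hcont : ContinuousOn c (Set.Icc 0 t) :=
      fun x hx => (hc_cont x hx.1).continuousWithinAt
    have : (0:ℝ) ∈ Set.Icc (c t) (c 0) := ⟨h, le_of_lt h0⟩
    obtain ⟨τ, hτ, hcτ⟩ := intermediate_value_Icc' ht hcont this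
    have := (key 0 τ le_rfl hτ.1).2 hcτ
    exact absurd this (ne_of_gt h0)
  · intro h0 t ht
    by_contra h
    push_neg at h
    have hcont : ContinuousOn c (Set.Icc 0 t) :=
      fun x hx => (hc_cont x hx.1).continuousWithinAt
    have : (0:ℝ) ∈ Set.Icc (c 0) (c t) := ⟨le_of_lt h0, h⟩
    obtain ⟨τ, hτ, hcτ⟩ := intermediate_value_Icc ht hcont this
    have := (key 0 τ le_rfl hτ.1).2 hcτ
    exact absurd this (ne_of_lt h0)
end

section
/- Suppose the reduced gradient-flow system holds, and let b > 0 be a real number with s(0) > b and P(0) > b. Then s(t) > b and P(t) > b for every t ≥ 0 (the set {s > b, P > b} is forward invariant under the flow; in particular the induced weight never degenerates in rank and its singular value stays above b). -/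
open Filter Topology

theorem stmt5
    (N d dy dx : ℕ) (hN : 2 ≤ N) (hd : 1 ≤ d) (hdy : d ≤ dy) (hdx : d ≤ dx)
    (σ : ℕ → ℝ)
    (hσpos : ∀ i, 1 ≤ i → i ≤ d → 0 < σ i)
    (hσmono : ∀ i j, 1 ≤ i → i < j → j ≤ d → σ j < σ i)
    (hσzero : ∀ i, d < i → σ i = 0)
    (s : ℝ → ℝ) (a b : ℕ → ℝ → ℝ) (P : ℝ → ℝ)
    (hs_nonneg : ∀ t, 0 ≤ t → 0 ≤ s t)
    (ha_norm : ∀ t, 0 ≤ t → ∑ i ∈ Finset.Icc 1 dy, (a i t) ^ 2 = 1)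
    (hb_norm : ∀ t, 0 ≤ t → ∑ j ∈ Finset.Icc 1 dx, (b j t) ^ 2 = 1)
    (hP : ∀ t, P t = ∑ j ∈ Finset.Icc 1 d, σ j * a j t * b j t)
    (hs' : ∀ t, 0 ≤ t →
      HasDerivAt s ((N : ℝ) * s t ^ ((2 : ℝ) - 2 / (N : ℝ)) * (P t - s t)) t)
    (ha' : ∀ i, 1 ≤ i → i ≤ dy → ∀ t, 0 ≤ t →
      HasDerivAt (a i) (s t ^ ((1 : ℝ) - 2 / (N : ℝ)) * (σ i * b i t - a i t * P t)) t)
    (hb' : ∀ j, 1 ≤ j → j ≤ dx → ∀ t, 0 ≤ t →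
      HasDerivAt (b j) (s t ^ ((1 : ℝ) - 2 / (N : ℝ)) * (σ j * a j t - b j t * P t)) t)
    (c : ℝ) (hc : 0 < c) (hs0 : c < s 0) (hP0 : c < P 0) :
    ∀ t, 0 ≤ t → c < s t ∧ c < P t := by
  set e : ℝ := (1 : ℝ) - 2 / (N : ℝ) with he
  -- derivative of P at each t ≥ 0
  have hderivP : ∀ t, 0 ≤ t →
      HasDerivAt P (s t ^ e *
        ((∑ j ∈ Finset.Icc 1 d, (σ j ^ 2 * a j t ^ 2 + σ j ^ 2 * b j t ^ 2))
          - 2 * P t * P t)) t := by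
    intro t ht
    have hterm : ∀ j ∈ Finset.Icc 1 d,
        HasDerivAt (fun t => σ j * a j t * b j t)
          (s t ^ e * (σ j ^ 2 * a j t ^ 2 + σ j ^ 2 * b j t ^ 2
            - 2 * (σ j * a j t * b j t) * P t)) t := by
      intro j hj
      rw [Finset.mem_Icc] at hj
      have HA := ha' j hj.1 (hj.2.trans hdy) t ht
      have HB := hb' j hj.1 (hj.2.trans hdx) t ht
      have := (HA.const_mul (σ j)).fun_mul HB
      refine this.congr_deriv ?_
      ring
    have hsum := HasDerivAt.fun_sum hterm
    have hval : (∑ j ∈ Finset.Icc 1 d, s t ^ e * (σ j ^ 2 * a j t ^ 2 + σ j ^ 2 * b j t ^ 2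
            - 2 * (σ j * a j t * b j t) * P t))
        = s t ^ e * ((∑ j ∈ Finset.Icc 1 d, (σ j ^ 2 * a j t ^ 2 + σ j ^ 2 * b j t ^ 2))
          - 2 * P t * P t) := by
      calc (∑ j ∈ Finset.Icc 1 d, s t ^ e * (σ j ^ 2 * a j t ^ 2 + σ j ^ 2 * b j t ^ 2
            - 2 * (σ j * a j t * b j t) * P t))
          = ∑ j ∈ Finset.Icc 1 d, (s t ^ e * (σ j ^ 2 * a j t ^ 2 + σ j ^ 2 * b j t ^ 2)
            - (s t ^ e * 2 * P t) * (σ j * a j t * b j t)) :=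
            Finset.sum_congr rfl fun j _ => by ring
        _ = s t ^ e * (∑ j ∈ Finset.Icc 1 d, (σ j ^ 2 * a j t ^ 2 + σ j ^ 2 * b j t ^ 2))
            - (s t ^ e * 2 * P t) * (∑ j ∈ Finset.Icc 1 d, σ j * a j t * b j t) := by
            rw [Finset.sum_sub_distrib, Finset.mul_sum, Finset.mul_sum]
        _ = _ := by rw [← hP t]; ring
    rw [← hval]
    have hPfun : P = fun t => ∑ j ∈ Finset.Icc 1 d, σ j * a j t * b j t := funext hP
    exact hPfun ▸ hsum
  -- the derivative of P is nonnegative on [0,∞)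
  have hderivP_nonneg : ∀ t, 0 ≤ t → 0 ≤ s t ^ e *
        ((∑ j ∈ Finset.Icc 1 d, (σ j ^ 2 * a j t ^ 2 + σ j ^ 2 * b j t ^ 2))
          - 2 * P t * P t) := by
    intro t ht
    have hs_pow : (0:ℝ) ≤ s t ^ e := Real.rpow_nonneg (hs_nonneg t ht) e
    have hbsum : (∑ j ∈ Finset.Icc 1 d, (b j t) ^ 2) ≤ 1 := by
      rw [← hb_norm t ht]
      exact Finset.sum_le_sum_of_subset_of_nonneg
        (Finset.Icc_subset_Icc_right hdx) (fun i _ _ => sq_nonneg _)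
    have hasum : (∑ j ∈ Finset.Icc 1 d, (a j t) ^ 2) ≤ 1 := by
      rw [← ha_norm t ht]
      exact Finset.sum_le_sum_of_subset_of_nonneg
        (Finset.Icc_subset_Icc_right hdy) (fun i _ _ => sq_nonneg _)
    have hA : (0:ℝ) ≤ ∑ j ∈ Finset.Icc 1 d, σ j ^ 2 * a j t ^ 2 :=
      Finset.sum_nonneg fun j _ => mul_nonneg (sq_nonneg _) (sq_nonneg _)
    have hB : (0:ℝ) ≤ ∑ j ∈ Finset.Icc 1 d, σ j ^ 2 * b j t ^ 2 :=
      Finset.sum_nonneg fun j _ => mul_nonneg (sq_nonneg _) (sq_nonneg _)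
    have hcs1 : P t ^ 2 ≤ ∑ j ∈ Finset.Icc 1 d, σ j ^ 2 * a j t ^ 2 := by
      have := Finset.sum_mul_sq_le_sq_mul_sq (Finset.Icc 1 d)
        (fun j => σ j * a j t) (fun j => b j t)
      calc P t ^ 2 = (∑ j ∈ Finset.Icc 1 d, (σ j * a j t) * b j t) ^ 2 := by
              rw [hP t]
        _ ≤ (∑ j ∈ Finset.Icc 1 d, (σ j * a j t) ^ 2) * (∑ j ∈ Finset.Icc 1 d, (b j t) ^ 2) :=
              this
        _ ≤ (∑ j ∈ Finset.Icc 1 d, (σ j * a j t) ^ 2) * 1 := by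
              apply mul_le_mul_of_nonneg_left hbsum
              exact Finset.sum_nonneg fun j _ => sq_nonneg _
        _ = ∑ j ∈ Finset.Icc 1 d, σ j ^ 2 * a j t ^ 2 := by
              rw [mul_one]; exact Finset.sum_congr rfl fun j _ => by ring
    have hcs2 : P t ^ 2 ≤ ∑ j ∈ Finset.Icc 1 d, σ j ^ 2 * b j t ^ 2 := by
      have := Finset.sum_mul_sq_le_sq_mul_sq (Finset.Icc 1 d)
        (fun j => σ j * b j t) (fun j => a j t)
      calc P t ^ 2 = (∑ j ∈ Finset.Icc 1 d, (σ j * b j t) * a j t) ^ 2 := by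
              rw [hP t]; congr 1; exact Finset.sum_congr rfl fun j _ => by ring
        _ ≤ (∑ j ∈ Finset.Icc 1 d, (σ j * b j t) ^ 2) * (∑ j ∈ Finset.Icc 1 d, (a j t) ^ 2) :=
              this
        _ ≤ (∑ j ∈ Finset.Icc 1 d, (σ j * b j t) ^ 2) * 1 := by
              apply mul_le_mul_of_nonneg_left hasum
              exact Finset.sum_nonneg fun j _ => sq_nonneg _
        _ = ∑ j ∈ Finset.Icc 1 d, σ j ^ 2 * b j t ^ 2 := by
              rw [mul_one]; exact Finset.sum_congr rfl fun j _ => by ring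
    apply mul_nonneg hs_pow
    have : 2 * P t * P t = P t ^ 2 + P t ^ 2 := by ring
    rw [Finset.sum_add_distrib, this]
    have := add_le_add hcs1 hcs2
    linarith
  -- P is monotone on [0,∞)
  have hPcont : ContinuousOn P (Set.Ici 0) := fun t ht =>
    ((hderivP t ht).continuousAt).continuousWithinAt
  have hPmono : MonotoneOn P (Set.Ici (0:ℝ)) := by
    apply monotoneOn_of_deriv_nonneg (convex_Ici 0) hPcont
    · intro t ht
      rw [interior_Ici] at ht
      exact ((hderivP t (le_of_lt ht)).differentiableAt).differentiableWithinAt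
    · intro t ht
      rw [interior_Ici] at ht
      rw [(hderivP t (le_of_lt ht)).deriv]
      exact hderivP_nonneg t (le_of_lt ht)
  have hPge : ∀ t, 0 ≤ t → c < P t := fun t ht =>
    lt_of_lt_of_le hP0 (hPmono (Set.self_mem_Ici) ht ht)
  -- now show c < s t for all t ≥ 0, by a first-crossing argument
  have hscont : ∀ t, 0 ≤ t → ContinuousAt s t := fun t ht => (hs' t ht).continuousAt
  have hsgt : ∀ t, 0 ≤ t → c < s t := by
    by_contra hcon
    push_neg at hcon
    obtain ⟨t₀, ht₀, hst₀⟩ := hcon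
    set S : Set ℝ := {t | 0 ≤ t ∧ s t ≤ c} with hS
    have hSne : S.Nonempty := ⟨t₀, ht₀, hst₀⟩
    have hSbdd : BddBelow S := ⟨0, fun x hx => hx.1⟩
    have hSclosed : IsClosed S := by
      rw [← isOpen_compl_iff, isOpen_iff_mem_nhds]
      intro x hx
      simp only [Set.mem_compl_iff, hS, Set.mem_setOf_eq, not_and, not_le] at hx
      rcases lt_or_ge x 0 with hx0 | hx0
      · exact Filter.mem_of_superset (Iio_mem_nhds hx0) fun y hy => by
          simp only [Set.mem_compl_iff, hS, Set.mem_setOf_eq, not_and, not_le]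
          intro h; exact absurd h (not_le.mpr hy)
      · have hcx : c < s x := hx hx0
        have : ∀ᶠ y in 𝓝 x, c < s y := (hscont x hx0).eventually (eventually_gt_nhds hcx)
        exact this.mono fun y hy => by
          simp only [Set.mem_compl_iff, hS, Set.mem_setOf_eq, not_and, not_le]
          intro _; exact hy
    set T : ℝ := sInf S with hT
    have hTmem : T ∈ S := hSclosed.csInf_mem hSne hSbdd
    have hT0 : 0 ≤ T := hTmem.1
    have hsT : s T ≤ c := hTmem.2
    have hTpos : 0 < T := by
      rcases hT0.lt_or_eq with h | h
      · exact h
      · exact absurd hsT (by rw [← h]; exact not_le.mpr hs0)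
    -- on [0, T), s > c
    have hbefore : ∀ u, 0 ≤ u → u < T → c < s u := by
      intro u hu huT
      by_contra h
      push_neg at h
      exact absurd (csInf_le hSbdd ⟨hu, h⟩) (not_le.mpr huT)
    -- left limit gives s T ≥ c, so s T = c
    have hsTc : s T = c := by
      refine le_antisymm hsT ?_
      have htend : Tendsto s (𝓝[<] T) (𝓝 (s T)) :=
        ((hscont T hT0).continuousWithinAt).tendsto
      have hev : ∀ᶠ u in 𝓝[<] T, c ≤ s u := by
        filter_upwards [Ioo_mem_nhdsLT hTpos] with u hu
        exact le_of_lt (hbefore u (le_of_lt hu.1) hu.2)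
      exact ge_of_tendsto htend hev
    -- derivative at T is positive, but slope from the left is nonpositive
    have hPT : c < P T := hPge T hT0
    have hder := hs' T hT0
    have hderval : (0:ℝ) < (N : ℝ) * s T ^ ((2 : ℝ) - 2 / (N : ℝ)) * (P T - s T) := by
      rw [hsTc]
      have h1 : (0:ℝ) < (N:ℝ) := by
        have : 0 < N := lt_of_lt_of_le two_pos hN
        exact_mod_cast this
      have h2 : (0:ℝ) < c ^ ((2 : ℝ) - 2 / (N : ℝ)) := Real.rpow_pos_of_pos hc _
      exact mul_pos (mul_pos h1 h2) (by linarith)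
    have hslope := hasDerivAt_iff_tendsto_slope.mp hder
    have hslope' : Tendsto (slope s T) (𝓝[<] T) (𝓝 ((N : ℝ) * s T ^ ((2 : ℝ) - 2 / (N : ℝ)) * (P T - s T))) :=
      hslope.mono_left (nhdsWithin_mono T fun x hx => ne_of_lt hx)
    have hev : ∀ᶠ u in 𝓝[<] T, slope s T u ≤ 0 := by
      filter_upwards [Ioo_mem_nhdsLT (by linarith : (0:ℝ) < T)] with u hu
      rcases hu with ⟨hu1, hu2⟩
      have hu0 : 0 ≤ u := by linarith
      have hsu : c < s u := hbefore u hu0 hu2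
      have : s u - s T > 0 := by rw [hsTc]; linarith
      rw [slope_def_field]
      exact le_of_lt (div_neg_of_pos_of_neg this (by linarith))
    have := le_of_tendsto hslope' hev
    linarith
  intro t ht
  exact ⟨hsgt t ht, hPge t ht⟩
end

section
/- Let 0 ≤ k < d, and let (a^{(n)}) in ℝ^{dy} and (b^{(n)}) in ℝ^{dx} be sequences with ∑_{i=1}^{dy} (a_i^{(n)})² = ∑_{j=1}^{dx} (b_j^{(n)})² = 1 for all n, such that a_i^{(n)} + b_i^{(n)} = 0 for all 1 ≤ i ≤ k and all n, and such that ∑_{j=1}^{d} s_j·a_j^{(n)}·b_j^{(n)} → s_{k+1} as n → ∞. Then a_i^{(n)} → 0 for every index 1 ≤ i ≤ dy with i ≠ k+1, b_j^{(n)} → 0 for every index 1 ≤ j ≤ dx with j ≠ k+1, and a_{k+1}^{(n)}·b_{k+1}^{(n)} → 1 as n → ∞. -/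
open Filter Topology

private lemma sq_tendsto_zero' {u : ℕ → ℝ}
    (h : Tendsto (fun n => u n ^ 2) atTop (nhds 0)) :
    Tendsto u atTop (nhds 0) := by
  rw [tendsto_zero_iff_abs_tendsto_zero]
  have h2 : Tendsto (fun n => Real.sqrt (u n ^ 2)) atTop (nhds 0) := by
    simpa [Function.comp_def] using (Real.continuous_sqrt.tendsto 0).comp h
  exact h2.congr fun n => Real.sqrt_sq_eq_abs (u n)

theorem stmt6
    (d dy dx : ℕ) (hd : 1 ≤ d) (hdy : d ≤ dy) (hdx : d ≤ dx)
    (σ : ℕ → ℝ)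
    (hσpos : ∀ i, 1 ≤ i → i ≤ d → 0 < σ i)
    (hσmono : ∀ i j, 1 ≤ i → i < j → j ≤ d → σ j < σ i)
    (hσzero : ∀ i, d < i → σ i = 0)
    (k : ℕ) (hk : k < d)
    (a b : ℕ → ℕ → ℝ)
    (ha_norm : ∀ n, ∑ i ∈ Finset.Icc 1 dy, (a n i) ^ 2 = 1)
    (hb_norm : ∀ n, ∑ j ∈ Finset.Icc 1 dx, (b n j) ^ 2 = 1)
    (hzero : ∀ n, ∀ i, 1 ≤ i → i ≤ k → a n i + b n i = 0)
    (hconv : Tendsto (fun n => ∑ j ∈ Finset.Icc 1 d, σ j * a n j * b n j)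
      atTop (nhds (σ (k + 1)))) :
    (∀ i, 1 ≤ i → i ≤ dy → i ≠ k + 1 → Tendsto (fun n => a n i) atTop (nhds 0)) ∧
    (∀ j, 1 ≤ j → j ≤ dx → j ≠ k + 1 → Tendsto (fun n => b n j) atTop (nhds 0)) ∧
    Tendsto (fun n => a n (k + 1) * b n (k + 1)) atTop (nhds 1) := by
  have hk1d : k + 1 ∈ Finset.Icc 1 d := Finset.mem_Icc.2 ⟨Nat.le_add_left 1 k, hk⟩
  have hk1dy : k + 1 ∈ Finset.Icc 1 dy :=
    Finset.mem_Icc.2 ⟨Nat.le_add_left 1 k, le_trans hk hdy⟩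
  have hk1dx : k + 1 ∈ Finset.Icc 1 dx :=
    Finset.mem_Icc.2 ⟨Nat.le_add_left 1 k, le_trans hk hdx⟩
  have hσk1 : 0 < σ (k + 1) := hσpos _ (Nat.le_add_left 1 k) hk
  set σ' : ℝ := if k + 2 ≤ d then σ (k + 2) else 0 with hσ'def
  have hσ'0 : 0 ≤ σ' := by
    rw [hσ'def]; split_ifs with h
    · exact (hσpos _ (by omega) h).le
    · exact le_refl 0
  have hσ'lt : σ' < σ (k + 1) := by
    rw [hσ'def]; split_ifs with h
    · exact hσmono (k + 1) (k + 2) (by omega) (by omega) h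
    · exact hσk1
  have hc : 0 < σ (k + 1) - σ' := sub_pos.2 hσ'lt
  set A : ℕ → ℝ := fun n => ∑ i ∈ (Finset.Icc 1 dy).erase (k + 1), a n i ^ 2 with hAdef
  set B : ℕ → ℝ := fun n => ∑ j ∈ (Finset.Icc 1 dx).erase (k + 1), b n j ^ 2 with hBdef
  have hA0 : ∀ n, 0 ≤ A n := fun n => Finset.sum_nonneg fun i _ => sq_nonneg _
  have hB0 : ∀ n, 0 ≤ B n := fun n => Finset.sum_nonneg fun i _ => sq_nonneg _
  have hak : ∀ n, a n (k + 1) ^ 2 + A n = 1 := by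
    intro n
    rw [hAdef]
    rw [Finset.add_sum_erase _ (fun i => a n i ^ 2) hk1dy]
    exact ha_norm n
  have hbk : ∀ n, b n (k + 1) ^ 2 + B n = 1 := by
    intro n
    rw [hBdef]
    rw [Finset.add_sum_erase _ (fun j => b n j ^ 2) hk1dx]
    exact hb_norm n
  -- Key inequality
  have key : ∀ n, (∑ j ∈ Finset.Icc 1 d, σ j * a n j * b n j)
      + (σ (k + 1) - σ') / 2 * (A n + B n) ≤ σ (k + 1) := by
    intro n
    have hsplit := Finset.add_sum_erase (Finset.Icc 1 d)
      (fun j => σ j * a n j * b n j) hk1d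
    have hterm : ∀ j ∈ (Finset.Icc 1 d).erase (k + 1),
        σ j * a n j * b n j ≤ σ' * ((a n j) ^ 2 + (b n j) ^ 2) / 2 := by
      intro j hj
      obtain ⟨hjne, hjmem⟩ := Finset.mem_erase.1 hj
      obtain ⟨hj1, hjd⟩ := Finset.mem_Icc.1 hjmem
      have hσj : 0 < σ j := hσpos j hj1 hjd
      rcases lt_or_ge j (k + 1) with hlt | hge
      · have hb := hzero n j hj1 (by omega)
        have hbj : b n j = -a n j := by linarith
        rw [hbj]
        nlinarith [sq_nonneg (a n j)]
      · have hjk2 : k + 2 ≤ j := by omega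
        have hle : σ j ≤ σ' := by
          rw [hσ'def, if_pos (le_trans hjk2 hjd)]
          rcases eq_or_lt_of_le hjk2 with h | h
          · rw [← h]
          · exact (hσmono (k + 2) j (by omega) h hjd).le
        nlinarith [mul_nonneg (sub_nonneg.2 hle)
            (add_nonneg (sq_nonneg (a n j)) (sq_nonneg (b n j))),
          mul_nonneg hσj.le (sq_nonneg (a n j - b n j))]
    have hsum1 : ∑ j ∈ (Finset.Icc 1 d).erase (k + 1), σ j * a n j * b n j
        ≤ ∑ j ∈ (Finset.Icc 1 d).erase (k + 1), σ' * ((a n j) ^ 2 + (b n j) ^ 2) / 2 :=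
      Finset.sum_le_sum hterm
    have hsum2 : ∑ j ∈ (Finset.Icc 1 d).erase (k + 1), σ' * ((a n j) ^ 2 + (b n j) ^ 2) / 2
        = σ' / 2 * ∑ j ∈ (Finset.Icc 1 d).erase (k + 1), (a n j) ^ 2
          + σ' / 2 * ∑ j ∈ (Finset.Icc 1 d).erase (k + 1), (b n j) ^ 2 := by
      rw [Finset.mul_sum, Finset.mul_sum, ← Finset.sum_add_distrib]
      exact Finset.sum_congr rfl fun j _ => by ring
    have hsub_a : ∑ j ∈ (Finset.Icc 1 d).erase (k + 1), (a n j) ^ 2 ≤ A n :=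
      Finset.sum_le_sum_of_subset_of_nonneg
        (Finset.erase_subset_erase _ (Finset.Icc_subset_Icc_right hdy))
        (fun i _ _ => sq_nonneg _)
    have hsub_b : ∑ j ∈ (Finset.Icc 1 d).erase (k + 1), (b n j) ^ 2 ≤ B n :=
      Finset.sum_le_sum_of_subset_of_nonneg
        (Finset.erase_subset_erase _ (Finset.Icc_subset_Icc_right hdx))
        (fun i _ _ => sq_nonneg _)
    have hS' : ∑ j ∈ (Finset.Icc 1 d).erase (k + 1), σ j * a n j * b n j
        ≤ σ' / 2 * (A n + B n) := by
      have h1 : σ' / 2 * ∑ j ∈ (Finset.Icc 1 d).erase (k + 1), (a n j) ^ 2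
          ≤ σ' / 2 * A n := mul_le_mul_of_nonneg_left hsub_a (by positivity)
      have h2 : σ' / 2 * ∑ j ∈ (Finset.Icc 1 d).erase (k + 1), (b n j) ^ 2
          ≤ σ' / 2 * B n := mul_le_mul_of_nonneg_left hsub_b (by positivity)
      calc _ ≤ _ := hsum1
        _ = _ := hsum2
        _ ≤ σ' / 2 * A n + σ' / 2 * B n := add_le_add h1 h2
        _ = σ' / 2 * (A n + B n) := by ring
    have hT : σ (k + 1) * a n (k + 1) * b n (k + 1)
        ≤ σ (k + 1) * ((1 - A n) + (1 - B n)) / 2 := by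
      have h1 := hak n
      have h2 := hbk n
      nlinarith [sq_nonneg (a n (k + 1) - b n (k + 1)), hσk1]
    rw [← hsplit]
    nlinarith [hS', hT]
  have key2 : ∀ n, A n + B n ≤
      (σ (k + 1) - ∑ j ∈ Finset.Icc 1 d, σ j * a n j * b n j) * 2 / (σ (k + 1) - σ') :=
    fun n => (le_div_iff₀ hc).2 (by nlinarith [key n])
  have hlim : Tendsto (fun n =>
      (σ (k + 1) - ∑ j ∈ Finset.Icc 1 d, σ j * a n j * b n j) * 2 / (σ (k + 1) - σ'))
      atTop (nhds 0) := by
    have h := ((hconv.const_sub (σ (k + 1))).mul_const (2 : ℝ)).div_const (σ (k + 1) - σ')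
    simpa using h
  have hS : Tendsto (fun n => A n + B n) atTop (nhds 0) :=
    tendsto_of_tendsto_of_tendsto_of_le_of_le tendsto_const_nhds hlim
      (fun n => add_nonneg (hA0 n) (hB0 n)) key2
  have ha_lim : ∀ i, 1 ≤ i → i ≤ dy → i ≠ k + 1 →
      Tendsto (fun n => a n i) atTop (nhds 0) := by
    intro i h1 h2 h3
    apply sq_tendsto_zero'
    apply tendsto_of_tendsto_of_tendsto_of_le_of_le tendsto_const_nhds hS
    · intro n; positivity
    · intro n
      have hmem : i ∈ (Finset.Icc 1 dy).erase (k + 1) :=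
        Finset.mem_erase.2 ⟨h3, Finset.mem_Icc.2 ⟨h1, h2⟩⟩
      have h4 : a n i ^ 2 ≤ ∑ x ∈ (Finset.Icc 1 dy).erase (k + 1), a n x ^ 2 :=
        Finset.single_le_sum (f := fun j => a n j ^ 2) (fun j _ => sq_nonneg _) hmem
      have h5 := hB0 n
      simp only [hAdef]
      linarith
  have hb_lim : ∀ j, 1 ≤ j → j ≤ dx → j ≠ k + 1 →
      Tendsto (fun n => b n j) atTop (nhds 0) := by
    intro i h1 h2 h3
    apply sq_tendsto_zero'
    apply tendsto_of_tendsto_of_tendsto_of_le_of_le tendsto_const_nhds hS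
    · intro n; positivity
    · intro n
      have hmem : i ∈ (Finset.Icc 1 dx).erase (k + 1) :=
        Finset.mem_erase.2 ⟨h3, Finset.mem_Icc.2 ⟨h1, h2⟩⟩
      have h4 : b n i ^ 2 ≤ ∑ x ∈ (Finset.Icc 1 dx).erase (k + 1), b n x ^ 2 :=
        Finset.single_le_sum (f := fun j => b n j ^ 2) (fun j _ => sq_nonneg _) hmem
      have h5 := hA0 n
      simp only [hBdef]
      linarith
  refine ⟨ha_lim, hb_lim, ?_⟩
  have hg : Tendsto (fun n => ∑ j ∈ (Finset.Icc 1 d).erase (k + 1), σ j * a n j * b n j)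
      atTop (nhds 0) := by
    have h0 : (0 : ℝ) = ∑ _j ∈ (Finset.Icc 1 d).erase (k + 1), (0 : ℝ) := by simp
    rw [h0]
    apply tendsto_finset_sum
    intro j hj
    obtain ⟨hjne, hjm⟩ := Finset.mem_erase.1 hj
    obtain ⟨hj1, hjd⟩ := Finset.mem_Icc.1 hjm
    have ha' := ha_lim j hj1 (le_trans hjd hdy) hjne
    have hb' := hb_lim j hj1 (le_trans hjd hdx) hjne
    have h := (ha'.const_mul (σ j)).mul hb'
    simpa [mul_assoc] using h
  have hmain : Tendsto (fun n => σ (k + 1) * a n (k + 1) * b n (k + 1))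
      atTop (nhds (σ (k + 1))) := by
    have heq : ∀ n, σ (k + 1) * a n (k + 1) * b n (k + 1)
        = (∑ j ∈ Finset.Icc 1 d, σ j * a n j * b n j)
          - ∑ j ∈ (Finset.Icc 1 d).erase (k + 1), σ j * a n j * b n j := by
      intro n
      have h := Finset.add_sum_erase (Finset.Icc 1 d) (fun j => σ j * a n j * b n j) hk1d
      beta_reduce at h
      linarith
    have h := hconv.sub hg
    simp only [sub_zero] at h
    exact h.congr (fun n => (heq n).symm)
  have h := hmain.const_mul (σ (k + 1))⁻¹
  rw [inv_mul_cancel₀ hσk1.ne'] at h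
  exact h.congr fun n => by field_simp
end

section
/- Suppose the reduced gradient-flow system holds with s(0) > 0, and assume in addition that lim_{t→∞} s(t) exists (this convergence is imported from prior work on gradient flows of linear networks). Then there exists a sequence t_n → ∞ such that for every 1 ≤ i ≤ dy, P(t_n)·a_i(t_n) − s_i·b_i(t_n) → 0, and for every 1 ≤ i ≤ dx, P(t_n)·b_i(t_n) − s_i·a_i(t_n) → 0 (with s_i := 0 for i > d). Moreover, for any such sequence, if there exists i₀ with 1 ≤ i₀ ≤ d such that a_{i₀}(t_n) + b_{i₀}(t_n) converges to a nonzero limit, then P(t_n) → s_{i₀}. -/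
open Filter Topology

lemma key_identity (d dy dx : ℕ) (hdy : d ≤ dy) (hdx : d ≤ dx)
    (σ A B : ℕ → ℝ) (Q : ℝ)
    (hσz : ∀ i, d < i → σ i = 0)
    (hA : ∑ i ∈ Finset.Icc 1 dy, (A i) ^ 2 = 1)
    (hB : ∑ j ∈ Finset.Icc 1 dx, (B j) ^ 2 = 1)
    (hQ : Q = ∑ j ∈ Finset.Icc 1 d, σ j * A j * B j) :
    ∑ j ∈ Finset.Icc 1 d, σ j * (B j * (σ j * B j - A j * Q) + A j * (σ j * A j - B j * Q))
      = (∑ i ∈ Finset.Icc 1 dy, (σ i * B i - A i * Q) ^ 2)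
        + ∑ j ∈ Finset.Icc 1 dx, (σ j * A j - B j * Q) ^ 2 := by
  have hsub1 : Finset.Icc 1 d ⊆ Finset.Icc 1 dy := Finset.Icc_subset_Icc_right hdy
  have hsub2 : Finset.Icc 1 d ⊆ Finset.Icc 1 dx := Finset.Icc_subset_Icc_right hdx
  have hz1 : ∀ x ∈ Finset.Icc 1 dy, x ∉ Finset.Icc 1 d → σ x = 0 := by
    intro x hx hx'
    simp only [Finset.mem_Icc] at hx hx'
    exact hσz x (by omega)
  have hz2 : ∀ x ∈ Finset.Icc 1 dx, x ∉ Finset.Icc 1 d → σ x = 0 := by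
    intro x hx hx'
    simp only [Finset.mem_Icc] at hx hx'
    exact hσz x (by omega)
  have e1 : ∑ i ∈ Finset.Icc 1 dy, (σ i * B i) ^ 2 = ∑ i ∈ Finset.Icc 1 d, (σ i * B i) ^ 2 :=
    (Finset.sum_subset hsub1 (fun x hx hx' => by rw [hz1 x hx hx']; ring)).symm
  have e2 : ∑ i ∈ Finset.Icc 1 dy, σ i * A i * B i = Q := by
    rw [hQ]
    exact (Finset.sum_subset hsub1 (fun x hx hx' => by rw [hz1 x hx hx']; ring)).symm
  have e3 : ∑ j ∈ Finset.Icc 1 dx, (σ j * A j) ^ 2 = ∑ j ∈ Finset.Icc 1 d, (σ j * A j) ^ 2 :=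
    (Finset.sum_subset hsub2 (fun x hx hx' => by rw [hz2 x hx hx']; ring)).symm
  have e4 : ∑ j ∈ Finset.Icc 1 dx, σ j * A j * B j = Q := by
    rw [hQ]
    exact (Finset.sum_subset hsub2 (fun x hx hx' => by rw [hz2 x hx hx']; ring)).symm
  have r1 : ∑ i ∈ Finset.Icc 1 dy, (σ i * B i - A i * Q) ^ 2
      = ∑ i ∈ Finset.Icc 1 d, (σ i * B i) ^ 2 - Q ^ 2 := by
    have expand : ∀ i, (σ i * B i - A i * Q) ^ 2
        = (σ i * B i) ^ 2 - (2 * Q) * (σ i * A i * B i) + (Q ^ 2) * (A i) ^ 2 := by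
      intro i; ring
    simp_rw [expand]
    rw [Finset.sum_add_distrib, Finset.sum_sub_distrib, ← Finset.mul_sum, ← Finset.mul_sum,
      e1, e2, hA]
    ring
  have r2 : ∑ j ∈ Finset.Icc 1 dx, (σ j * A j - B j * Q) ^ 2
      = ∑ j ∈ Finset.Icc 1 d, (σ j * A j) ^ 2 - Q ^ 2 := by
    have expand : ∀ j, (σ j * A j - B j * Q) ^ 2
        = (σ j * A j) ^ 2 - (2 * Q) * (σ j * A j * B j) + (Q ^ 2) * (B j) ^ 2 := by
      intro j; ring
    simp_rw [expand]
    rw [Finset.sum_add_distrib, Finset.sum_sub_distrib, ← Finset.mul_sum, ← Finset.mul_sum,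
      e3, e4, hB]
    ring
  have l1 : ∑ j ∈ Finset.Icc 1 d, σ j * (B j * (σ j * B j - A j * Q) + A j * (σ j * A j - B j * Q))
      = (∑ j ∈ Finset.Icc 1 d, (σ j * B j) ^ 2) + (∑ j ∈ Finset.Icc 1 d, (σ j * A j) ^ 2)
        - (2 * Q) * Q := by
    have expand : ∀ j, σ j * (B j * (σ j * B j - A j * Q) + A j * (σ j * A j - B j * Q))
        = ((σ j * B j) ^ 2 + (σ j * A j) ^ 2) - (2 * Q) * (σ j * A j * B j) := by
      intro j; ring
    simp_rw [expand]
    rw [Finset.sum_sub_distrib, Finset.sum_add_distrib, ← Finset.mul_sum, ← hQ]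
  rw [r1, r2, l1]; ring

lemma mono_aux {f f' : ℝ → ℝ} (hf : ∀ t ∈ Set.Ici (0:ℝ), HasDerivAt f (f' t) t)
    (h0 : ∀ t ∈ Set.Ici (0:ℝ), 0 ≤ f' t) : MonotoneOn f (Set.Ici 0) := by
  apply monotoneOn_of_deriv_nonneg (convex_Ici 0)
    (fun t ht => (hf t ht).continuousAt.continuousWithinAt)
  · intro t ht
    rw [interior_Ici] at ht
    exact ((hf t (Set.mem_Ici.2 (le_of_lt (Set.mem_Ioi.1 ht)))).differentiableAt).differentiableWithinAt
  · intro t ht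
    rw [interior_Ici] at ht
    rw [(hf t (Set.mem_Ici.2 (le_of_lt (Set.mem_Ioi.1 ht)))).deriv]
    exact h0 t (Set.mem_Ici.2 (le_of_lt (Set.mem_Ioi.1 ht)))

set_option maxHeartbeats 1000000 in
theorem stmt7
    (N d dy dx : ℕ) (hN : 2 ≤ N) (hd : 1 ≤ d) (hdy : d ≤ dy) (hdx : d ≤ dx)
    (σ : ℕ → ℝ)
    (hσpos : ∀ i, 1 ≤ i → i ≤ d → 0 < σ i)
    (hσmono : ∀ i j, 1 ≤ i → i < j → j ≤ d → σ j < σ i)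
    (hσzero : ∀ i, d < i → σ i = 0)
    (s : ℝ → ℝ) (a b : ℕ → ℝ → ℝ) (P : ℝ → ℝ)
    (hs_nonneg : ∀ t, 0 ≤ t → 0 ≤ s t)
    (ha_norm : ∀ t, 0 ≤ t → ∑ i ∈ Finset.Icc 1 dy, (a i t) ^ 2 = 1)
    (hb_norm : ∀ t, 0 ≤ t → ∑ j ∈ Finset.Icc 1 dx, (b j t) ^ 2 = 1)
    (hP : ∀ t, P t = ∑ j ∈ Finset.Icc 1 d, σ j * a j t * b j t)
    (hs' : ∀ t, 0 ≤ t →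
      HasDerivAt s ((N : ℝ) * s t ^ ((2 : ℝ) - 2 / (N : ℝ)) * (P t - s t)) t)
    (ha' : ∀ i, 1 ≤ i → i ≤ dy → ∀ t, 0 ≤ t →
      HasDerivAt (a i) (s t ^ ((1 : ℝ) - 2 / (N : ℝ)) * (σ i * b i t - a i t * P t)) t)
    (hb' : ∀ j, 1 ≤ j → j ≤ dx → ∀ t, 0 ≤ t →
      HasDerivAt (b j) (s t ^ ((1 : ℝ) - 2 / (N : ℝ)) * (σ j * a j t - b j t * P t)) t)
    (hs0 : 0 < s 0) (hsconv : ∃ L : ℝ, Tendsto s atTop (nhds L)) :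
    (∃ T : ℕ → ℝ, (∀ n, 0 ≤ T n) ∧ Tendsto T atTop atTop ∧
      (∀ i, 1 ≤ i → i ≤ dy →
        Tendsto (fun n => P (T n) * a i (T n) - σ i * b i (T n)) atTop (nhds 0)) ∧
      (∀ i, 1 ≤ i → i ≤ dx →
        Tendsto (fun n => P (T n) * b i (T n) - σ i * a i (T n)) atTop (nhds 0))) ∧
    (∀ T : ℕ → ℝ, (∀ n, 0 ≤ T n) → Tendsto T atTop atTop →
      (∀ i, 1 ≤ i → i ≤ dy →
        Tendsto (fun n => P (T n) * a i (T n) - σ i * b i (T n)) atTop (nhds 0)) →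
      (∀ i, 1 ≤ i → i ≤ dx →
        Tendsto (fun n => P (T n) * b i (T n) - σ i * a i (T n)) atTop (nhds 0)) →
      ∀ i₀, 1 ≤ i₀ → i₀ ≤ d → ∀ L : ℝ, L ≠ 0 →
        Tendsto (fun n => a i₀ (T n) + b i₀ (T n)) atTop (nhds L) →
        Tendsto (fun n => P (T n)) atTop (nhds (σ i₀))) := by
  have hN0 : (0:ℝ) < (N:ℝ) := by
    have h : 0 < N := by omega
    exact_mod_cast h
  have hN2 : (2:ℝ) ≤ (N:ℝ) := by exact_mod_cast hN
  set θ : ℝ := 1 - 2 / (N:ℝ) with hθdef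
  have hθ : 0 ≤ θ := by
    have h : 2 / (N:ℝ) ≤ 1 := by
      rw [div_le_one hN0]; linarith
    rw [hθdef]; linarith
  -- bounds on a, b, P
  have habs_a : ∀ i, 1 ≤ i → i ≤ dy → ∀ t, 0 ≤ t → |a i t| ≤ 1 := by
    intro i hi1 hi2 t ht
    have h1 : (a i t) ^ 2 ≤ 1 := by
      rw [← ha_norm t ht]
      exact Finset.single_le_sum (fun j _ => sq_nonneg (a j t)) (Finset.mem_Icc.2 ⟨hi1, hi2⟩)
    exact abs_le_one_iff_mul_self_le_one.2 (by nlinarith)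
  have habs_b : ∀ j, 1 ≤ j → j ≤ dx → ∀ t, 0 ≤ t → |b j t| ≤ 1 := by
    intro j hj1 hj2 t ht
    have h1 : (b j t) ^ 2 ≤ 1 := by
      rw [← hb_norm t ht]
      exact Finset.single_le_sum (fun k _ => sq_nonneg (b k t)) (Finset.mem_Icc.2 ⟨hj1, hj2⟩)
    exact abs_le_one_iff_mul_self_le_one.2 (by nlinarith)
  have hSsig : (0:ℝ) ≤ ∑ j ∈ Finset.Icc 1 d, σ j :=
    Finset.sum_nonneg fun j hj =>
      (hσpos j (Finset.mem_Icc.1 hj).1 (Finset.mem_Icc.1 hj).2).le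
  set Ssig : ℝ := ∑ j ∈ Finset.Icc 1 d, σ j with hSdef
  have hPabs : ∀ t, 0 ≤ t → |P t| ≤ Ssig := by
    intro t ht
    rw [hP t, hSdef]
    refine (Finset.abs_sum_le_sum_abs _ _).trans (Finset.sum_le_sum ?_)
    intro j hj
    obtain ⟨hj1, hj2⟩ := Finset.mem_Icc.1 hj
    have hσj := (hσpos j hj1 hj2).le
    have h1 := habs_a j hj1 (hj2.trans hdy) t ht
    have h2 := habs_b j hj1 (hj2.trans hdx) t ht
    rw [abs_mul, abs_mul, abs_of_nonneg hσj]
    have hb0 := abs_nonneg (b j t)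
    have hab : |a j t| * |b j t| ≤ 1 := mul_le_one₀ h1 hb0 h2
    calc σ j * |a j t| * |b j t| = σ j * (|a j t| * |b j t|) := by ring
      _ ≤ σ j * 1 := mul_le_mul_of_nonneg_left hab hσj
      _ = σ j := mul_one _
  -- bound on s
  obtain ⟨M, hM0, hMs⟩ : ∃ M : ℝ, 0 ≤ M ∧ ∀ t, 0 ≤ t → s t ≤ M := by
    obtain ⟨L, hL⟩ := hsconv
    have h1 : ∀ᶠ t in atTop, s t ≤ L + 1 :=
      hL.eventually (eventually_le_nhds (lt_add_one L))
    obtain ⟨T₁, hT₁⟩ := eventually_atTop.1 h1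
    have hsc : ContinuousOn s (Set.Icc 0 (max T₁ 0)) := fun t ht =>
      (hs' t ht.1).continuousAt.continuousWithinAt
    obtain ⟨C₀, hC₀⟩ := (isCompact_Icc).exists_bound_of_continuousOn hsc
    refine ⟨max (max C₀ (L+1)) 0, le_max_right _ _, ?_⟩
    intro t ht
    rcases le_or_gt t (max T₁ 0) with h | h
    · have h5 := hC₀ t ⟨ht, h⟩
      rw [Real.norm_eq_abs] at h5
      have h6 := (abs_le.1 h5).2
      exact h6.trans ((le_max_left C₀ (L+1)).trans (le_max_left _ _))
    · have h7 := hT₁ t ((le_max_left T₁ 0).trans h.le)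
      exact h7.trans ((le_max_right C₀ (L+1)).trans (le_max_left _ _))
  -- positivity of s
  have hspos : ∀ t, 0 ≤ t → 0 < s t := by
    set M1 : ℝ := (max 1 M) ^ θ with hM1def
    have hM1pos : 0 < M1 := Real.rpow_pos_of_pos (lt_of_lt_of_le one_pos (le_max_left 1 M)) θ
    set K : ℝ := (N:ℝ) * M1 * (Ssig + M) with hKdef
    have hK0 : 0 ≤ K := by
      apply mul_nonneg (mul_nonneg hN0.le hM1pos.le); linarith
    set g : ℝ → ℝ := fun t => Real.exp (K * t) * s t with hgdef
    set g' : ℝ → ℝ := fun t => Real.exp (K * t) * K * s t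
        + Real.exp (K * t) * ((N:ℝ) * s t ^ ((2:ℝ) - 2 / (N:ℝ)) * (P t - s t)) with hg'def
    have hg' : ∀ t ∈ Set.Ici (0:ℝ), HasDerivAt g (g' t) t := by
      intro t ht
      have h1 : HasDerivAt (fun u : ℝ => Real.exp (K * u)) (Real.exp (K * t) * K) t := by
        have h2 : HasDerivAt (fun u : ℝ => K * u) K t := by
          simpa using (hasDerivAt_id t).const_mul K
        simpa using h2.exp
      simp only [hgdef, hg'def]
      exact h1.mul (hs' t ht)
    have hgnn : ∀ t ∈ Set.Ici (0:ℝ), 0 ≤ g' t := by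
      intro t ht
      have ht' : (0:ℝ) ≤ t := ht
      have hexp : 0 < Real.exp (K * t) := Real.exp_pos _
      have hcore : 0 ≤ K * s t + (N:ℝ) * s t ^ ((2:ℝ) - 2 / (N:ℝ)) * (P t - s t) := by
        rcases eq_or_lt_of_le (hs_nonneg t ht') with h0 | h0
        · rw [← h0, Real.zero_rpow (by
            intro hc
            have hdiv : 2 / (N:ℝ) ≤ 1 := by rw [div_le_one hN0]; linarith
            linarith)]
          simp
        · have hadd : ((2:ℝ) - 2 / (N:ℝ)) = 1 + θ := by rw [hθdef]; ring
          rw [hadd, Real.rpow_add h0, Real.rpow_one]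
          have hsθle : s t ^ θ ≤ M1 := by
            rw [hM1def]
            exact Real.rpow_le_rpow (hs_nonneg t ht') ((hMs t ht').trans (le_max_right 1 M)) hθ
          have hsθ0 : 0 ≤ s t ^ θ := Real.rpow_nonneg (hs_nonneg t ht') θ
          have hPs : -(Ssig + M) ≤ P t - s t := by
            have hq1 := (abs_le.1 (hPabs t ht')).1
            have hq2 := hMs t ht'
            linarith
          have h1 : -((N:ℝ) * (s t * s t ^ θ) * (Ssig + M))
              ≤ (N:ℝ) * (s t * s t ^ θ) * (P t - s t) := by
            have hnn : 0 ≤ (N:ℝ) * (s t * s t ^ θ) :=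
              mul_nonneg hN0.le (mul_nonneg h0.le hsθ0)
            nlinarith
          have h2 : (N:ℝ) * (s t * s t ^ θ) * (Ssig + M) ≤ (N:ℝ) * (s t * M1) * (Ssig + M) := by
            have h3 : (0:ℝ) ≤ Ssig + M := by linarith
            have h4 : (N:ℝ) * (s t * s t ^ θ) ≤ (N:ℝ) * (s t * M1) := by
              apply mul_le_mul_of_nonneg_left _ hN0.le
              exact mul_le_mul_of_nonneg_left hsθle h0.le
            exact mul_le_mul_of_nonneg_right h4 h3
          have h5 : K * s t = (N:ℝ) * (s t * M1) * (Ssig + M) := by rw [hKdef]; ring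
          nlinarith
      have heq : g' t = Real.exp (K * t)
          * (K * s t + (N:ℝ) * s t ^ ((2:ℝ) - 2 / (N:ℝ)) * (P t - s t)) := by
        rw [hg'def]; ring
      rw [heq]
      exact mul_nonneg hexp.le hcore
    have hgmono := mono_aux hg' hgnn
    intro t ht
    have hg0 : g 0 = s 0 := by rw [hgdef]; simp
    have hmt := hgmono (Set.mem_Ici.2 le_rfl) (Set.mem_Ici.2 ht) ht
    rw [hg0] at hmt
    have hexp : 0 < Real.exp (K * t) := Real.exp_pos _
    by_contra hc
    push_neg at hc
    have hgt : g t ≤ 0 := by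
      rw [hgdef]
      exact mul_nonpos_of_nonneg_of_nonpos hexp.le hc
    linarith
  -- G and derivative of P
  set G : ℝ → ℝ := fun t => (∑ i ∈ Finset.Icc 1 dy, (σ i * b i t - a i t * P t) ^ 2)
      + ∑ j ∈ Finset.Icc 1 dx, (σ j * a j t - b j t * P t) ^ 2 with hGdef
  have hGval : ∀ t, G t = (∑ i ∈ Finset.Icc 1 dy, (σ i * b i t - a i t * P t) ^ 2)
      + ∑ j ∈ Finset.Icc 1 dx, (σ j * a j t - b j t * P t) ^ 2 := fun t => by rw [hGdef]
  have hGnonneg : ∀ t, 0 ≤ G t := by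
    intro t
    rw [hGval t]
    apply add_nonneg <;> exact Finset.sum_nonneg fun i _ => sq_nonneg _
  have hPfun : P = fun u => ∑ j ∈ Finset.Icc 1 d, σ j * a j u * b j u := funext hP
  have hPder : ∀ t, 0 ≤ t → HasDerivAt P (s t ^ θ * G t) t := by
    intro t ht
    have hsum : HasDerivAt (fun u => ∑ j ∈ Finset.Icc 1 d, σ j * a j u * b j u)
        (∑ j ∈ Finset.Icc 1 d, σ j *
          ((s t ^ θ * (σ j * b j t - a j t * P t)) * b j t
            + a j t * (s t ^ θ * (σ j * a j t - b j t * P t)))) t := by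
      apply HasDerivAt.fun_sum
      intro j hj
      obtain ⟨hj1, hj2⟩ := Finset.mem_Icc.1 hj
      have hja := ha' j hj1 (hj2.trans hdy) t ht
      have hjb := hb' j hj1 (hj2.trans hdx) t ht
      have hmul := (hja.mul hjb).const_mul (σ j)
      simpa [mul_assoc] using hmul
    have hkey : (∑ j ∈ Finset.Icc 1 d, σ j *
          ((s t ^ θ * (σ j * b j t - a j t * P t)) * b j t
            + a j t * (s t ^ θ * (σ j * a j t - b j t * P t))))
        = s t ^ θ * G t := by
      have h1 : ∀ j ∈ Finset.Icc 1 d, σ j *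
          ((s t ^ θ * (σ j * b j t - a j t * P t)) * b j t
            + a j t * (s t ^ θ * (σ j * a j t - b j t * P t)))
          = s t ^ θ * (σ j * (b j t * (σ j * b j t - a j t * P t)
            + a j t * (σ j * a j t - b j t * P t))) := by
        intro j _; ring
      rw [Finset.sum_congr rfl h1, ← Finset.mul_sum, hGval t]
      congr 1
      exact key_identity d dy dx hdy hdx σ (fun i => a i t) (fun j => b j t) (P t)
        hσzero (ha_norm t ht) (hb_norm t ht) (hP t)
    rw [hkey] at hsum
    rw [hPfun]
    exact hsum
  -- continuity
  have hPcont : ContinuousOn P (Set.Ici 0) := fun t ht =>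
    (hPder t ht).continuousAt.continuousWithinAt
  have hscont : ContinuousOn s (Set.Ici 0) := fun t ht =>
    (hs' t ht).continuousAt.continuousWithinAt
  have hacont : ∀ i, 1 ≤ i → i ≤ dy → ContinuousOn (a i) (Set.Ici 0) := fun i h1 h2 t ht =>
    (ha' i h1 h2 t ht).continuousAt.continuousWithinAt
  have hbcont : ∀ j, 1 ≤ j → j ≤ dx → ContinuousOn (b j) (Set.Ici 0) := fun j h1 h2 t ht =>
    (hb' j h1 h2 t ht).continuousAt.continuousWithinAt
  have hGcont : ContinuousOn G (Set.Ici 0) := by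
    rw [hGdef]
    apply ContinuousOn.add
    · apply continuousOn_finset_sum
      intro i hi
      obtain ⟨hi1, hi2⟩ := Finset.mem_Icc.1 hi
      by_cases hid : i ≤ d
      · exact ((continuousOn_const.mul (hbcont i hi1 (hid.trans hdx))).sub
          ((hacont i hi1 hi2).mul hPcont)).pow 2
      · have heq : (fun t => (σ i * b i t - a i t * P t) ^ 2)
            = fun t => (0 - a i t * P t) ^ 2 := by
          funext t; rw [hσzero i (by omega), zero_mul]
        rw [heq]
        exact (continuousOn_const.sub ((hacont i hi1 hi2).mul hPcont)).pow 2
    · apply continuousOn_finset_sum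
      intro j hj
      obtain ⟨hj1, hj2⟩ := Finset.mem_Icc.1 hj
      by_cases hjd : j ≤ d
      · exact ((continuousOn_const.mul (hacont j hj1 (hjd.trans hdy))).sub
          ((hbcont j hj1 hj2).mul hPcont)).pow 2
      · have heq : (fun t => (σ j * a j t - b j t * P t) ^ 2)
            = fun t => (0 - b j t * P t) ^ 2 := by
          funext t; rw [hσzero j (by omega), zero_mul]
        rw [heq]
        exact (continuousOn_const.sub ((hbcont j hj1 hj2).mul hPcont)).pow 2
  have hsθcont : ContinuousOn (fun t => s t ^ θ) (Set.Ici 0) :=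
    hscont.rpow_const (fun t _ => Or.inr hθ)
  have hJcont : ContinuousOn (fun t => s t ^ θ * G t) (Set.Ici 0) := hsθcont.mul hGcont
  have huIcc : ∀ u v : ℝ, 0 ≤ u → 0 ≤ v → Set.uIcc u v ⊆ Set.Ici 0 := by
    intro u v hu hv x hx
    rcases Set.mem_uIcc.1 hx with h | h
    · exact le_trans hu h.1
    · exact le_trans hv h.1
  have hJint : ∀ u v : ℝ, 0 ≤ u → 0 ≤ v →
      IntervalIntegrable (fun t => s t ^ θ * G t) MeasureTheory.volume u v :=
    fun u v hu hv => (hJcont.mono (huIcc u v hu hv)).intervalIntegrable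
  have hFTC : ∀ T : ℝ, 0 ≤ T → ∫ t in (0:ℝ)..T, s t ^ θ * G t = P T - P 0 := by
    intro T hT
    apply intervalIntegral.integral_eq_sub_of_hasDerivAt
    · intro x hx
      exact hPder x (huIcc 0 T le_rfl hT hx)
    · exact hJint 0 T le_rfl hT
  have hIbound : ∀ T : ℝ, 0 ≤ T → ∫ t in (0:ℝ)..T, s t ^ θ * G t ≤ 2 * Ssig := by
    intro T hT
    rw [hFTC T hT]
    have h1 := (abs_le.1 (hPabs T hT)).2
    have h2 := (abs_le.1 (hPabs 0 le_rfl)).1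
    linarith
  -- lower bound on s^θ
  obtain ⟨C, D, hC, hD, hCD⟩ :
      ∃ C D : ℝ, 0 < C ∧ 1 ≤ D ∧ ∀ t, 0 ≤ t → 1 / (C + D * t) ≤ s t ^ θ := by
    rcases eq_or_lt_of_le hN with h2 | h2
    · refine ⟨1, 1, one_pos, le_rfl, ?_⟩
      intro t ht
      have hθ0 : θ = 0 := by rw [hθdef, ← h2]; norm_num
      rw [hθ0, Real.rpow_zero, div_le_one (by linarith)]
      linarith
    · have hN2' : (0:ℝ) < (N:ℝ) - 2 := by
        have h3 : (2:ℝ) < (N:ℝ) := by exact_mod_cast h2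
        linarith
      set F : ℝ → ℝ := fun t => s t ^ (-θ) with hFdef
      have hFder : ∀ t, 0 ≤ t → HasDerivAt F (((N:ℝ) - 2) * (s t - P t)) t := by
        intro t ht
        have hpos := hspos t ht
        have h := (hs' t ht).rpow_const (p := -θ) (Or.inl (ne_of_gt hpos))
        have hx : s t ^ ((2:ℝ) - 2/(N:ℝ)) * s t ^ (-θ - 1) = 1 := by
          rw [← Real.rpow_add hpos]
          have he : (2:ℝ) - 2/(N:ℝ) + (-θ - 1) = 0 := by rw [hθdef]; ring
          rw [he, Real.rpow_zero]
        have hNθ : (N:ℝ) * (-θ) = 2 - (N:ℝ) := by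
          rw [hθdef]
          field_simp
          ring
        have heq : (N:ℝ) * s t ^ ((2:ℝ) - 2/(N:ℝ)) * (P t - s t) * (-θ) * s t ^ (-θ - 1)
            = ((N:ℝ) - 2) * (s t - P t) := by
          have hr : (N:ℝ) * s t ^ ((2:ℝ) - 2/(N:ℝ)) * (P t - s t) * (-θ) * s t ^ (-θ - 1)
              = ((N:ℝ) * (-θ)) * (s t ^ ((2:ℝ) - 2/(N:ℝ)) * s t ^ (-θ - 1)) * (P t - s t) := by
            ring
          rw [hr, hx, hNθ]; ring
        rw [hFdef]
        convert h using 1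
        exact heq.symm
      set D0 : ℝ := ((N:ℝ) - 2) * (M + Ssig) with hD0def
      have hD0 : 0 ≤ D0 := by
        rw [hD0def]; exact mul_nonneg (by linarith) (by linarith)
      have hFub : ∀ t, 0 ≤ t → F t ≤ F 0 + D0 * t := by
        intro t ht
        set h : ℝ → ℝ := fun u => F 0 + D0 * u - F u with hhdef
        set h' : ℝ → ℝ := fun u => D0 - ((N:ℝ) - 2) * (s u - P u) with hh'def
        have hh' : ∀ u ∈ Set.Ici (0:ℝ), HasDerivAt h (h' u) u := by
          intro u hu
          have h1 : HasDerivAt (fun u : ℝ => F 0 + D0 * u) D0 u := by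
            simpa using ((hasDerivAt_id u).const_mul D0).const_add (F 0)
          simp only [hhdef, hh'def]
          exact h1.sub (hFder u hu)
        have hnn : ∀ u ∈ Set.Ici (0:ℝ), 0 ≤ h' u := by
          intro u hu
          have hu' : (0:ℝ) ≤ u := hu
          have h1 : s u - P u ≤ M + Ssig := by
            have hq1 := (abs_le.1 (hPabs u hu')).1
            have hq2 := hMs u hu'
            linarith
          have h3 := mul_le_mul_of_nonneg_left h1 (le_of_lt hN2')
          rw [hh'def, hD0def]
          simp only []
          linarith
        have h0t := (mono_aux hh' hnn) (Set.mem_Ici.2 le_rfl) (Set.mem_Ici.2 ht) ht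
        have hh0 : h 0 = 0 := by rw [hhdef]; simp
        rw [hh0] at h0t
        have : h t = F 0 + D0 * t - F t := by rw [hhdef]
        linarith [this ▸ h0t]
      refine ⟨F 0, max D0 1, Real.rpow_pos_of_pos hs0 _, le_max_right _ _, ?_⟩
      intro t ht
      have hFt : 0 < F t := Real.rpow_pos_of_pos (hspos t ht) _
      have hle : F t ≤ F 0 + max D0 1 * t := by
        have h1 := hFub t ht
        have h2 : D0 * t ≤ max D0 1 * t := mul_le_mul_of_nonneg_right (le_max_left D0 1) ht
        linarith
      have hsθ : s t ^ θ = (F t)⁻¹ := by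
        have h1 : F t = (s t ^ θ)⁻¹ := by
          rw [hFdef]
          exact Real.rpow_neg (hs_nonneg t ht) θ
        rw [h1, inv_inv]
      rw [hsθ, one_div]
      exact inv_anti₀ hFt hle
  -- main escape lemma
  have hmain : ∀ ε : ℝ, 0 < ε → ∀ T₀ : ℝ, 0 ≤ T₀ → ∃ t, T₀ ≤ t ∧ G t < ε := by
    intro ε hε T₀ hT₀
    by_contra hcon
    push_neg at hcon
    have hDpos : (0:ℝ) < D := by linarith
    set X : ℝ := Real.log (C + D * T₀) + D * (2 * Ssig + 1) / ε with hXdef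
    set T : ℝ := max T₀ (Real.exp X / D) with hTdef
    have hTT₀ : T₀ ≤ T := le_max_left _ _
    have hT0 : 0 ≤ T := hT₀.trans hTT₀
    have hlin : ∀ x : ℝ, 0 ≤ x → 0 < C + D * x := fun x hx =>
      add_pos_of_pos_of_nonneg hC (mul_nonneg hDpos.le hx)
    have hint1 : IntervalIntegrable (fun t => ε / D * (D / (C + D * t)))
        MeasureTheory.volume T₀ T := by
      apply ContinuousOn.intervalIntegrable
      apply ContinuousOn.mul continuousOn_const
      apply ContinuousOn.div continuousOn_const
      · exact (continuous_const.add (continuous_const.mul continuous_id)).continuousOn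
      · intro x hx
        have hx0 : 0 ≤ x := hT₀.trans (by rw [Set.uIcc_of_le hTT₀] at hx; exact hx.1)
        exact ne_of_gt (hlin x hx0)
    have hlogFTC : ∫ t in T₀..T, ε / D * (D / (C + D * t))
        = ε / D * Real.log (C + D * T) - ε / D * Real.log (C + D * T₀) := by
      have hder : ∀ x ∈ Set.uIcc T₀ T, HasDerivAt (fun u : ℝ => ε / D * Real.log (C + D * u))
          (ε / D * (D / (C + D * x))) x := by
        intro x hx
        have hx0 : 0 ≤ x := hT₀.trans (by rw [Set.uIcc_of_le hTT₀] at hx; exact hx.1)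
        have h1 : HasDerivAt (fun u : ℝ => C + D * u) D x := by
          simpa using ((hasDerivAt_id x).const_mul D).const_add C
        have h2 := (h1.log (ne_of_gt (hlin x hx0))).const_mul (ε / D)
        simpa using h2
      exact intervalIntegral.integral_eq_sub_of_hasDerivAt hder hint1
    have hmono : ∫ t in T₀..T, ε / D * (D / (C + D * t)) ≤ ∫ t in T₀..T, s t ^ θ * G t := by
      apply intervalIntegral.integral_mono_on hTT₀ hint1 (hJint T₀ T hT₀ hT0)
      intro x hx
      have hx0 : 0 ≤ x := hT₀.trans hx.1
      have h1 : ε / D * (D / (C + D * x)) = 1 / (C + D * x) * ε := by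
        field_simp
      rw [h1]
      exact mul_le_mul (hCD x hx0) (hcon x hx.1) hε.le (Real.rpow_nonneg (hs_nonneg x hx0) θ)
    have hsplit : ∫ t in (0:ℝ)..T, s t ^ θ * G t
        = (∫ t in (0:ℝ)..T₀, s t ^ θ * G t) + ∫ t in T₀..T, s t ^ θ * G t :=
      (intervalIntegral.integral_add_adjacent_intervals (hJint 0 T₀ le_rfl hT₀)
        (hJint T₀ T hT₀ hT0)).symm
    have h0T₀ : 0 ≤ ∫ t in (0:ℝ)..T₀, s t ^ θ * G t :=
      intervalIntegral.integral_nonneg hT₀ (fun u hu =>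
        mul_nonneg (Real.rpow_nonneg (hs_nonneg u hu.1) θ) (hGnonneg u))
    have hub : ε / D * Real.log (C + D * T) - ε / D * Real.log (C + D * T₀) ≤ 2 * Ssig := by
      have hb1 := hIbound T hT0
      rw [hsplit] at hb1
      rw [← hlogFTC]
      linarith
    have hXle : X ≤ Real.log (C + D * T) := by
      rw [Real.le_log_iff_exp_le (hlin T hT0)]
      have h1 : Real.exp X / D ≤ T := le_max_right _ _
      rw [div_le_iff₀ hDpos] at h1
      have h2 : T * D = D * T := mul_comm T D
      linarith
    have hfinal : ε / D * X - ε / D * Real.log (C + D * T₀) = 2 * Ssig + 1 := by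
      rw [hXdef]
      field_simp
      ring
    have h2 : ε / D * X ≤ ε / D * Real.log (C + D * T) :=
      mul_le_mul_of_nonneg_left hXle (by positivity)
    linarith
  constructor
  · -- construct the sequence
    have hseq : ∀ n : ℕ, ∃ t, (n:ℝ) ≤ t ∧ G t < 1 / ((n:ℝ) + 1) :=
      fun n => hmain (1 / ((n:ℝ) + 1)) (by positivity) (n:ℝ) (Nat.cast_nonneg n)
    have hTnn : ∀ n : ℕ, (0:ℝ) ≤ (hseq n).choose :=
      fun n => (Nat.cast_nonneg n).trans (hseq n).choose_spec.1
    have hGlim : Tendsto (fun n => G ((hseq n).choose)) atTop (nhds 0) :=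
      squeeze_zero (fun n => hGnonneg _) (fun n => ((hseq n).choose_spec.2).le)
        tendsto_one_div_add_atTop_nhds_zero_nat
    refine ⟨fun n => (hseq n).choose, hTnn,
      tendsto_atTop_mono (fun n => (hseq n).choose_spec.1) tendsto_natCast_atTop_atTop,
      ?_, ?_⟩
    · intro i hi1 hi2
      have hsq : ∀ n : ℕ, (P ((hseq n).choose) * a i ((hseq n).choose)
          - σ i * b i ((hseq n).choose)) ^ 2 ≤ G ((hseq n).choose) := by
        intro n
        set u : ℝ := (hseq n).choose
        have h1 : (σ i * b i u - a i u * P u) ^ 2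
            ≤ ∑ k ∈ Finset.Icc 1 dy, (σ k * b k u - a k u * P u) ^ 2 :=
          Finset.single_le_sum (f := fun k => (σ k * b k u - a k u * P u) ^ 2)
            (fun k _ => sq_nonneg _) (Finset.mem_Icc.2 ⟨hi1, hi2⟩)
        calc (P u * a i u - σ i * b i u) ^ 2
            = (σ i * b i u - a i u * P u) ^ 2 := by ring
          _ ≤ ∑ k ∈ Finset.Icc 1 dy, (σ k * b k u - a k u * P u) ^ 2 := h1
          _ ≤ G u := by
              rw [hGval u]
              exact le_add_of_nonneg_right (Finset.sum_nonneg fun k _ => sq_nonneg _)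
      have hx2 := squeeze_zero (fun n => sq_nonneg _) hsq hGlim
      have hsqrt := hx2.sqrt
      rw [Real.sqrt_zero] at hsqrt
      simp only [Real.sqrt_sq_eq_abs] at hsqrt
      exact (tendsto_zero_iff_abs_tendsto_zero _).2 hsqrt
    · intro i hi1 hi2
      have hsq : ∀ n : ℕ, (P ((hseq n).choose) * b i ((hseq n).choose)
          - σ i * a i ((hseq n).choose)) ^ 2 ≤ G ((hseq n).choose) := by
        intro n
        set u : ℝ := (hseq n).choose
        have h1 : (σ i * a i u - b i u * P u) ^ 2
            ≤ ∑ k ∈ Finset.Icc 1 dx, (σ k * a k u - b k u * P u) ^ 2 :=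
          Finset.single_le_sum (f := fun k => (σ k * a k u - b k u * P u) ^ 2)
            (fun k _ => sq_nonneg _) (Finset.mem_Icc.2 ⟨hi1, hi2⟩)
        calc (P u * b i u - σ i * a i u) ^ 2
            = (σ i * a i u - b i u * P u) ^ 2 := by ring
          _ ≤ ∑ k ∈ Finset.Icc 1 dx, (σ k * a k u - b k u * P u) ^ 2 := h1
          _ ≤ G u := by
              rw [hGval u]
              exact le_add_of_nonneg_left (Finset.sum_nonneg fun k _ => sq_nonneg _)
      have hx2 := squeeze_zero (fun n => sq_nonneg _) hsq hGlim
      have hsqrt := hx2.sqrt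
      rw [Real.sqrt_zero] at hsqrt
      simp only [Real.sqrt_sq_eq_abs] at hsqrt
      exact (tendsto_zero_iff_abs_tendsto_zero _).2 hsqrt
  · -- part 2
    intro T hTnn hTtop h1 h2 i₀ hi₀1 hi₀d L hL hconv
    have hA := h1 i₀ hi₀1 (hi₀d.trans hdy)
    have hB := h2 i₀ hi₀1 (hi₀d.trans hdx)
    have key : Tendsto (fun n => (P (T n) - σ i₀) * (a i₀ (T n) + b i₀ (T n)))
        atTop (nhds 0) := by
      have hsum := hA.add hB
      rw [add_zero] at hsum
      exact hsum.congr (fun n => by ring)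
    have hinv : Tendsto (fun n => (a i₀ (T n) + b i₀ (T n))⁻¹) atTop (nhds L⁻¹) :=
      hconv.inv₀ hL
    have hmul := key.mul hinv
    rw [zero_mul] at hmul
    have hev : ∀ᶠ n in atTop, ((P (T n) - σ i₀) * (a i₀ (T n) + b i₀ (T n)))
        * (a i₀ (T n) + b i₀ (T n))⁻¹ = P (T n) - σ i₀ := by
      filter_upwards [hconv.eventually_ne hL] with n hn
      field_simp
    have hPσ : Tendsto (fun n => P (T n) - σ i₀) atTop (nhds 0) := by
      exact Tendsto.congr' hev hmul
    have hfin := hPσ.add_const (σ i₀)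
    rw [zero_add] at hfin
    simpa using hfin
end

section
/- Suppose the reduced gradient-flow system holds with s(0) > 0 and a_1(0)·b_1(0) > 0, and assume in addition that s(t) and each a_i(t), b_j(t) converge as t → ∞ (this convergence is imported from prior work on gradient flows of linear networks). Then s(t) → s_1, a_1(t)·b_1(t) → 1, a_i(t) → 0 for every i ≠ 1, and b_j(t) → 0 for every j ≠ 1; that is, the induced weight converges to the global minimizer s_1·u_1·v_1ᵀ of the quadratic loss. -/
set_option maxHeartbeats 1000000
open Filter Topology Set

lemma monoAux {D : Set ℝ} (hD : Convex ℝ D) {f f' : ℝ → ℝ}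
    (hf : ∀ t ∈ D, HasDerivAt f (f' t) t) (h0 : ∀ t ∈ interior D, 0 ≤ f' t) :
    MonotoneOn f D := by
  apply monotoneOn_of_deriv_nonneg hD
  · exact fun t ht => (hf t ht).continuousAt.continuousWithinAt
  · exact fun t ht => ((hf t (interior_subset ht)).differentiableAt).differentiableWithinAt
  · intro t ht
    rw [(hf t (interior_subset ht)).deriv]
    exact h0 t ht

lemma derivPosAux {f g w : ℝ → ℝ} {K M T D : ℝ} (hK : 0 < K) (hM : 0 < M) (hT : 0 ≤ T)
    (hd : ∀ t, T ≤ t → HasDerivAt f (g t * w t) t)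
    (hw : ∀ t, T ≤ t → 1 / (K + M * t) ≤ w t)
    (hg : Tendsto g atTop (nhds D))
    (hf : ∃ Lf, Tendsto f atTop (nhds Lf)) (hD : 0 < D) : False := by
  obtain ⟨Lf, hLf⟩ := hf
  obtain ⟨T₀, hT₀⟩ := (hg.eventually (eventually_gt_nhds (by linarith : D / 2 < D))).exists_forall_of_atTop
  obtain ⟨T₂, hT₂⟩ := (hLf.eventually (eventually_le_nhds (by linarith : Lf < Lf + 1))).exists_forall_of_atTop
  set T₁ := max T T₀ with hT₁def
  have hT₁T : T ≤ T₁ := le_max_left _ _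
  have hT₁0 : 0 ≤ T₁ := le_trans hT hT₁T
  have hpos : ∀ t : ℝ, T₁ ≤ t → 0 < K + M * t := by
    intro t ht
    have : 0 ≤ t := le_trans hT₁0 ht
    nlinarith
  set F : ℝ → ℝ := fun t => f t - D / (2 * M) * Real.log (K + M * t) with hFdef
  have hF' : ∀ t ∈ Ici T₁, HasDerivAt F (g t * w t - D / (2 * M) * ((K + M * t)⁻¹ * M)) t := by
    intro t ht
    have h1 : HasDerivAt (fun t : ℝ => K + M * t) M t := by
      simpa using ((hasDerivAt_id t).const_mul M).const_add K
    have h2 := (Real.hasDerivAt_log (ne_of_gt (hpos t ht))).comp t h1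
    exact (hd t (le_trans hT₁T ht)).sub (h2.const_mul (D / (2 * M)))
  have hF'nn : ∀ t ∈ interior (Ici T₁), 0 ≤ g t * w t - D / (2 * M) * ((K + M * t)⁻¹ * M) := by
    intro t ht
    have ht' : T₁ ≤ t := le_of_lt (by simpa using ht)
    have hz : 0 < (K + M * t) := hpos t ht'
    have hzi : 0 < (K + M * t)⁻¹ := inv_pos.2 hz
    have hw' : 1 / (K + M * t) ≤ w t := hw t (le_trans hT₁T ht')
    have hgt : D / 2 < g t := hT₀ t (le_trans (le_max_right _ _) ht')
    have hwpos : 0 < w t := lt_of_lt_of_le (by positivity) hw'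
    have key : D / 2 * (K + M * t)⁻¹ ≤ g t * w t := by
      have h3 : D / 2 * (K + M * t)⁻¹ ≤ D / 2 * w t := by
        rw [one_div] at hw'
        nlinarith
      have h4 : D / 2 * w t ≤ g t * w t := by nlinarith
      linarith
    have heq : D / (2 * M) * ((K + M * t)⁻¹ * M) = D / 2 * (K + M * t)⁻¹ := by
      field_simp
    linarith [heq ▸ key]
  have hmono : MonotoneOn F (Ici T₁) := monoAux (convex_Ici T₁) hF' hF'nn
  -- choose large t
  set R : ℝ := 2 * M / D * (Lf + 2 - F T₁) with hRdef
  set tt : ℝ := max (max T₁ T₂) ((Real.exp R - K) / M) with httdef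
  have htt1 : T₁ ≤ tt := le_trans (le_max_left _ _) (le_max_left _ _)
  have htt2 : T₂ ≤ tt := le_trans (le_max_right _ _) (le_max_left _ _)
  have htt3 : (Real.exp R - K) / M ≤ tt := le_max_right _ _
  have hlog : R ≤ Real.log (K + M * tt) := by
    have h5 : Real.exp R ≤ K + M * tt := by
      have := (div_le_iff₀ hM).mp htt3
      nlinarith
    calc R = Real.log (Real.exp R) := (Real.log_exp R).symm
      _ ≤ Real.log (K + M * tt) := Real.log_le_log (Real.exp_pos R) h5
  have hFmono := hmono (self_mem_Ici) (mem_Ici.2 htt1) htt1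
  have hftt : f tt ≤ Lf + 1 := hT₂ tt htt2
  have hDM : 0 ≤ D / (2 * M) := by positivity
  have h6 : D / (2 * M) * R ≤ D / (2 * M) * Real.log (K + M * tt) :=
    mul_le_mul_of_nonneg_left hlog hDM
  have h7 : D / (2 * M) * R = Lf + 2 - F T₁ := by
    rw [hRdef]; field_simp
  have h8 : F T₁ ≤ F tt := hFmono
  simp only [hFdef] at h8
  linarith

lemma derivLimZero {f g w : ℝ → ℝ} {K M T D : ℝ} (hK : 0 < K) (hM : 0 < M) (hT : 0 ≤ T)
    (hd : ∀ t, T ≤ t → HasDerivAt f (g t * w t) t)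
    (hw : ∀ t, T ≤ t → 1 / (K + M * t) ≤ w t)
    (hg : Tendsto g atTop (nhds D))
    (hf : ∃ Lf, Tendsto f atTop (nhds Lf)) : D = 0 := by
  rcases lt_trichotomy D 0 with h | h | h
  · exfalso
    apply derivPosAux (f := fun t => -f t) (g := fun t => -g t) hK hM hT
      (fun t ht => by have h := (hd t ht).neg; rw [← neg_mul] at h; exact h)
      hw hg.neg ⟨-hf.choose, hf.choose_spec.neg⟩ (by linarith)
  · exact h
  · exact absurd (derivPosAux hK hM hT hd hw hg hf h) (fun h => h)

theorem stmt8
    (N d dy dx : ℕ) (hN : 2 ≤ N) (hd : 1 ≤ d) (hdy : d ≤ dy) (hdx : d ≤ dx)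
    (σ : ℕ → ℝ)
    (hσpos : ∀ i, 1 ≤ i → i ≤ d → 0 < σ i)
    (hσmono : ∀ i j, 1 ≤ i → i < j → j ≤ d → σ j < σ i)
    (hσzero : ∀ i, d < i → σ i = 0)
    (s : ℝ → ℝ) (a b : ℕ → ℝ → ℝ) (P : ℝ → ℝ)
    (hs_nonneg : ∀ t, 0 ≤ t → 0 ≤ s t)
    (ha_norm : ∀ t, 0 ≤ t → ∑ i ∈ Finset.Icc 1 dy, (a i t) ^ 2 = 1)
    (hb_norm : ∀ t, 0 ≤ t → ∑ j ∈ Finset.Icc 1 dx, (b j t) ^ 2 = 1)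
    (hP : ∀ t, P t = ∑ j ∈ Finset.Icc 1 d, σ j * a j t * b j t)
    (hs' : ∀ t, 0 ≤ t →
      HasDerivAt s ((N : ℝ) * s t ^ ((2 : ℝ) - 2 / (N : ℝ)) * (P t - s t)) t)
    (ha' : ∀ i, 1 ≤ i → i ≤ dy → ∀ t, 0 ≤ t →
      HasDerivAt (a i) (s t ^ ((1 : ℝ) - 2 / (N : ℝ)) * (σ i * b i t - a i t * P t)) t)
    (hb' : ∀ j, 1 ≤ j → j ≤ dx → ∀ t, 0 ≤ t →
      HasDerivAt (b j) (s t ^ ((1 : ℝ) - 2 / (N : ℝ)) * (σ j * a j t - b j t * P t)) t)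
    (hs0 : 0 < s 0) (hab : 0 < a 1 0 * b 1 0)
    (hsconv : ∃ L : ℝ, Tendsto s atTop (nhds L))
    (haconv : ∀ i, 1 ≤ i → i ≤ dy → ∃ L : ℝ, Tendsto (a i) atTop (nhds L))
    (hbconv : ∀ j, 1 ≤ j → j ≤ dx → ∃ L : ℝ, Tendsto (b j) atTop (nhds L)) :
    Tendsto s atTop (nhds (σ 1)) ∧
    Tendsto (fun t => a 1 t * b 1 t) atTop (nhds 1) ∧
    (∀ i, 1 ≤ i → i ≤ dy → i ≠ 1 → Tendsto (a i) atTop (nhds 0)) ∧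
    (∀ j, 1 ≤ j → j ≤ dx → j ≠ 1 → Tendsto (b j) atTop (nhds 0)) := by
  have hN2 : (2:ℝ) ≤ (N:ℝ) := by exact_mod_cast hN
  have hNpos : (0:ℝ) < N := by linarith
  set e1 : ℝ := 1 - 2 / (N:ℝ) with he1def
  have he1 : 0 ≤ e1 := by
    have : 2 / (N:ℝ) ≤ 1 := by rw [div_le_one hNpos]; linarith
    simp [he1def]; linarith
  have he1lt : e1 < 1 := by
    have : 0 < 2 / (N:ℝ) := by positivity
    simp [he1def]; linarith
  have hσ1pos : 0 < σ 1 := hσpos 1 le_rfl hd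
  -- |a i t| ≤ 1
  have habs_a : ∀ i, 1 ≤ i → i ≤ dy → ∀ t, 0 ≤ t → a i t ^ 2 ≤ 1 := by
    intro i h1 h2 t ht
    rw [← ha_norm t ht]
    exact Finset.single_le_sum (fun j _ => sq_nonneg (a j t)) (Finset.mem_Icc.2 ⟨h1, h2⟩)
  have habs_b : ∀ j, 1 ≤ j → j ≤ dx → ∀ t, 0 ≤ t → b j t ^ 2 ≤ 1 := by
    intro i h1 h2 t ht
    rw [← hb_norm t ht]
    exact Finset.single_le_sum (fun j _ => sq_nonneg (b j t)) (Finset.mem_Icc.2 ⟨h1, h2⟩)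
  -- ∑_{j ≤ d} |a_j||b_j| ≤ 1
  have hsum_ab : ∀ t, 0 ≤ t → ∑ j ∈ Finset.Icc 1 d, |a j t| * |b j t| ≤ 1 := by
    intro t ht
    have hcs := Finset.sum_mul_sq_le_sq_mul_sq (Finset.Icc 1 d) (fun j => |a j t|) (fun j => |b j t|)
    have ha1 : ∑ j ∈ Finset.Icc 1 d, |a j t| ^ 2 ≤ 1 := by
      calc ∑ j ∈ Finset.Icc 1 d, |a j t| ^ 2 = ∑ j ∈ Finset.Icc 1 d, a j t ^ 2 := by
            simp [sq_abs]
        _ ≤ ∑ j ∈ Finset.Icc 1 dy, a j t ^ 2 :=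
            Finset.sum_le_sum_of_subset_of_nonneg (Finset.Icc_subset_Icc le_rfl hdy)
              (fun j _ _ => sq_nonneg _)
        _ = 1 := ha_norm t ht
    have hb1 : ∑ j ∈ Finset.Icc 1 d, |b j t| ^ 2 ≤ 1 := by
      calc ∑ j ∈ Finset.Icc 1 d, |b j t| ^ 2 = ∑ j ∈ Finset.Icc 1 d, b j t ^ 2 := by
            simp [sq_abs]
        _ ≤ ∑ j ∈ Finset.Icc 1 dx, b j t ^ 2 :=
            Finset.sum_le_sum_of_subset_of_nonneg (Finset.Icc_subset_Icc le_rfl hdx)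
              (fun j _ _ => sq_nonneg _)
        _ = 1 := hb_norm t ht
    have hnn : 0 ≤ ∑ j ∈ Finset.Icc 1 d, |a j t| * |b j t| :=
      Finset.sum_nonneg fun j _ => mul_nonneg (abs_nonneg _) (abs_nonneg _)
    have ha0 : 0 ≤ ∑ j ∈ Finset.Icc 1 d, |a j t| ^ 2 :=
      Finset.sum_nonneg fun j _ => sq_nonneg _
    nlinarith
  -- |P| ≤ σ 1
  have hPabs : ∀ t, 0 ≤ t → |P t| ≤ σ 1 := by
    intro t ht
    rw [hP t]
    calc |∑ j ∈ Finset.Icc 1 d, σ j * a j t * b j t|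
        ≤ ∑ j ∈ Finset.Icc 1 d, |σ j * a j t * b j t| := Finset.abs_sum_le_sum_abs _ _
      _ ≤ ∑ j ∈ Finset.Icc 1 d, σ 1 * (|a j t| * |b j t|) := by
          apply Finset.sum_le_sum
          intro j hj
          obtain ⟨hj1, hjd⟩ := Finset.mem_Icc.1 hj
          have hσj : 0 < σ j := hσpos j hj1 hjd
          have hσj1 : σ j ≤ σ 1 := by
            rcases eq_or_lt_of_le hj1 with h | h
            · rw [← h]
            · exact le_of_lt (hσmono 1 j le_rfl h hjd)
          rw [abs_mul, abs_mul, abs_of_pos hσj, mul_assoc]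
          apply mul_le_mul_of_nonneg_right hσj1
          exact mul_nonneg (abs_nonneg _) (abs_nonneg _)
      _ = σ 1 * ∑ j ∈ Finset.Icc 1 d, |a j t| * |b j t| := by rw [Finset.mul_sum]
      _ ≤ σ 1 * 1 := mul_le_mul_of_nonneg_left (hsum_ab t ht) (le_of_lt hσ1pos)
      _ = σ 1 := mul_one _
  -- s bounded above
  obtain ⟨L, hL⟩ := hsconv
  have hsbdd : ∃ S : ℝ, 1 ≤ S ∧ ∀ t, 0 ≤ t → s t ≤ S := by
    obtain ⟨T₀, hT₀⟩ := (hL.eventually (eventually_le_nhds (lt_add_one L))).exists_forall_of_atTop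
    have hcont : ContinuousOn s (Icc 0 T₀) := by
      intro t ht
      exact (hs' t ht.1).continuousAt.continuousWithinAt
    obtain ⟨S₀, hS₀⟩ := (isCompact_Icc.bddAbove_image hcont)
    refine ⟨max 1 (max (L+1) S₀), le_max_left _ _, fun t ht => ?_⟩
    rcases le_total t T₀ with h | h
    · exact le_trans (hS₀ (Set.mem_image_of_mem s ⟨ht, h⟩)) (le_trans (le_max_right _ _) (le_max_right _ _))
    · exact le_trans (hT₀ t h) (le_trans (le_max_left _ _) (le_max_right _ _))
  obtain ⟨S, hS1, hSb⟩ := hsbdd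
  -- rpow split
  have hpow : ∀ t, 0 ≤ t → s t ^ ((2:ℝ) - 2 / (N:ℝ)) = s t * s t ^ e1 := by
    intro t ht
    have hexp : (2:ℝ) - 2/(N:ℝ) = 1 + e1 := by rw [he1def]; ring
    rcases eq_or_lt_of_le (hs_nonneg t ht) with h | h
    · rw [← h, Real.zero_rpow (by rw [hexp]; intro hc; linarith), zero_mul]
    · rw [hexp, Real.rpow_add h, Real.rpow_one]
  -- positivity of s
  set C : ℝ := (N:ℝ) * S ^ e1 * (σ 1 + S) with hCdef
  have hspos : ∀ t, 0 ≤ t → 0 < s t := by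
    have hf' : ∀ t ∈ Ici (0:ℝ), HasDerivAt (fun t => s t * Real.exp (C * t))
        ((N:ℝ) * s t ^ ((2:ℝ) - 2/(N:ℝ)) * (P t - s t) * Real.exp (C * t)
          + s t * (Real.exp (C * t) * C)) t := by
      intro t ht
      have he : HasDerivAt (fun t : ℝ => Real.exp (C * t)) (Real.exp (C * t) * C) t := by
        simpa using (((hasDerivAt_id t).const_mul C)).exp
      exact (hs' t ht).mul he
    have hnn : ∀ t ∈ interior (Ici (0:ℝ)),
        0 ≤ (N:ℝ) * s t ^ ((2:ℝ) - 2/(N:ℝ)) * (P t - s t) * Real.exp (C * t)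
          + s t * (Real.exp (C * t) * C) := by
      intro t ht
      have ht' : (0:ℝ) ≤ t := le_of_lt (by simpa using ht)
      have hx : 0 ≤ s t := hs_nonneg t ht'
      have hw0 : 0 ≤ s t ^ e1 := Real.rpow_nonneg hx e1
      have hwW : s t ^ e1 ≤ S ^ e1 := Real.rpow_le_rpow hx (hSb t ht') he1
      have hPb := hPabs t ht'
      have hPlow : -(σ 1 + S) ≤ P t - s t := by
        have h1 := abs_le.1 hPb
        have h2 := hSb t ht'
        linarith [h1.1, h1.2]
      have hkey : 0 ≤ s t ^ e1 * (P t - s t) + S ^ e1 * (σ 1 + S) := by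
        nlinarith [mul_le_mul_of_nonneg_right hwW (by linarith [abs_le.1 hPb, hSb t ht'] : (0:ℝ) ≤ σ 1 + S),
          mul_le_mul_of_nonneg_left hPlow hw0]
      have h5 : 0 ≤ s t * Real.exp (C * t) * ((N:ℝ) * (s t ^ e1 * (P t - s t) + S ^ e1 * (σ 1 + S))) :=
        mul_nonneg (mul_nonneg hx (le_of_lt (Real.exp_pos _)))
          (mul_nonneg (le_of_lt hNpos) hkey)
      have heq : s t * Real.exp (C * t) * ((N:ℝ) * (s t ^ e1 * (P t - s t) + S ^ e1 * (σ 1 + S)))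
          = (N:ℝ) * s t ^ ((2:ℝ) - 2/(N:ℝ)) * (P t - s t) * Real.exp (C * t)
            + s t * (Real.exp (C * t) * C) := by
        rw [hpow t ht', hCdef]; ring
      linarith [heq ▸ h5]
    have hmono := monoAux (convex_Ici 0) hf' hnn
    intro t ht
    have h6 : s 0 * Real.exp (C * 0) ≤ s t * Real.exp (C * t) :=
      hmono (self_mem_Ici) (mem_Ici.2 ht) ht
    simp only [mul_zero, Real.exp_zero, mul_one] at h6
    nlinarith [Real.exp_pos (C * t), hs0]
  -- weight lower bound
  have hweight : ∃ K M T₁ : ℝ, 0 < K ∧ 0 < M ∧ 0 ≤ T₁ ∧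
      ∀ t, T₁ ≤ t → 1 / (K + M * t) ≤ s t ^ e1 := by
    have hL0 : 0 ≤ L := ge_of_tendsto hL (eventually_atTop.2 ⟨0, fun t ht => hs_nonneg t ht⟩)
    rcases eq_or_lt_of_le hL0 with hLz | hLpos
    · -- L = 0
      rcases eq_or_lt_of_le hN with hN2' | hN3
      · -- N = 2
        have he10 : e1 = 0 := by
          rw [he1def, ← hN2']
          norm_num
        refine ⟨1, 1, 0, one_pos, one_pos, le_rfl, fun t ht => ?_⟩
        rw [he10, Real.rpow_zero]
        rw [div_le_one (by linarith)]
        linarith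
      · -- N ≥ 3
        have hN3' : (3:ℝ) ≤ (N:ℝ) := by exact_mod_cast hN3
        have he1pos : 0 < e1 := by
          rw [he1def]
          have : 2 / (N:ℝ) < 1 := by
            rw [div_lt_one hNpos]; linarith
          linarith
        obtain ⟨T₀, hT₀⟩ := (hL.eventually (eventually_le_nhds (by linarith : L < 1))).exists_forall_of_atTop
        set T₁ := max T₀ 0 with hT₁def
        have hT₁0 : (0:ℝ) ≤ T₁ := le_max_right _ _
        set r : ℝ → ℝ := fun t => s t ^ (-e1) with hrdef
        have hNe1 : (N:ℝ) * e1 = (N:ℝ) - 2 := by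
          rw [he1def]; field_simp
        have hr' : ∀ t, 0 ≤ t → HasDerivAt r (((N:ℝ) - 2) * (s t - P t)) t := by
          intro t ht
          have hst := hspos t ht
          have h0 := (hs' t ht).rpow_const (p := -e1) (Or.inl (ne_of_gt hst))
          have h1 : s t ^ ((2:ℝ) - 2/(N:ℝ)) * s t ^ (-e1 - 1) = 1 := by
            rw [← Real.rpow_add hst]
            rw [show (2:ℝ) - 2/(N:ℝ) + (-e1 - 1) = 0 by rw [he1def]; ring, Real.rpow_zero]
          have h2 : (N:ℝ) * s t ^ ((2:ℝ) - 2/(N:ℝ)) * (P t - s t) * (-e1) * s t ^ (-e1 - 1)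
              = ((N:ℝ) - 2) * (s t - P t) := by
            linear_combination (-(N:ℝ) * e1 * (P t - s t)) * h1 + (-(P t - s t)) * hNe1
          rw [← h2]
          exact h0
        set M : ℝ := ((N:ℝ) - 2) * (1 + σ 1) with hMdef
        have hM : 0 < M := by
          apply mul_pos <;> nlinarith
        have hmono2 : MonotoneOn (fun t => M * t - r t) (Ici T₁) := by
          refine monoAux (convex_Ici T₁)
            (f' := fun t => M - ((N:ℝ) - 2) * (s t - P t)) ?_ ?_
          · intro t ht
            have ht0 : (0:ℝ) ≤ t := le_trans hT₁0 ht
            have h9 : HasDerivAt (fun t : ℝ => M * t) M t := by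
              simpa using (hasDerivAt_id t).const_mul M
            exact h9.sub (hr' t ht0)
          · intro t ht
            have ht' : T₁ ≤ t := le_of_lt (by simpa using ht)
            have ht0 : (0:ℝ) ≤ t := le_trans hT₁0 ht'
            have hs1 : s t ≤ 1 := hT₀ t (le_trans (le_max_left _ _) ht')
            have hPb := abs_le.1 (hPabs t ht0)
            have hsp : s t - P t ≤ 1 + σ 1 := by linarith [hPb.1]
            have hN2' : (0:ℝ) ≤ (N:ℝ) - 2 := by linarith
            have := mul_le_mul_of_nonneg_left hsp hN2'
            rw [hMdef]
            linarith
        set K : ℝ := r T₁ with hKdef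
        have hK : 0 < K := Real.rpow_pos_of_pos (hspos T₁ hT₁0) _
        refine ⟨K, M, T₁, hK, hM, hT₁0, fun t ht => ?_⟩
        have ht0 : (0:ℝ) ≤ t := le_trans hT₁0 ht
        have hrle : r t ≤ K + M * t := by
          have := hmono2 (self_mem_Ici) (mem_Ici.2 ht) ht
          simp only at this
          nlinarith [mul_nonneg (le_of_lt hM) hT₁0]
        have hrpos : 0 < r t := Real.rpow_pos_of_pos (hspos t ht0) _
        have hinv : 1 / r t = s t ^ e1 := by
          rw [hrdef]
          simp only
          rw [Real.rpow_neg (hs_nonneg t ht0), one_div, inv_inv]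
        rw [← hinv]
        exact one_div_le_one_div_of_le hrpos hrle
    · -- L > 0
      obtain ⟨T₀, hT₀⟩ := (hL.eventually (eventually_ge_nhds (by linarith : L/2 < L))).exists_forall_of_atTop
      set c : ℝ := (L/2) ^ e1 with hcdef
      have hc : 0 < c := Real.rpow_pos_of_pos (by linarith) _
      refine ⟨1/c, 1, max T₀ 0, by positivity, one_pos, le_max_right _ _, fun t ht => ?_⟩
      have ht0 : (0:ℝ) ≤ t := le_trans (le_max_right _ _) ht
      have hst : L/2 ≤ s t := hT₀ t (le_trans (le_max_left _ _) ht)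
      have h7 : c ≤ s t ^ e1 := Real.rpow_le_rpow (by linarith) hst he1
      have h8 : 1 / (1/c + 1 * t) ≤ 1 / (1/c) :=
        one_div_le_one_div_of_le (by positivity) (by linarith)
      rw [one_div_one_div] at h8
      linarith
  obtain ⟨K, M, T₁, hK, hM, hT₁0, hwlow⟩ := hweight
  have hdy1 : 1 ≤ dy := le_trans hd hdy
  have hdx1 : 1 ≤ dx := le_trans hd hdx
  -- limit functions
  set A : ℕ → ℝ := fun i => limUnder atTop (a i) with hAdef
  set B : ℕ → ℝ := fun j => limUnder atTop (b j) with hBdef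
  have hA : ∀ i, 1 ≤ i → i ≤ dy → Tendsto (a i) atTop (nhds (A i)) := by
    intro i h1 h2
    obtain ⟨La, hLa⟩ := haconv i h1 h2
    have : A i = La := by rw [hAdef]; exact hLa.limUnder_eq
    rwa [this]
  have hB : ∀ j, 1 ≤ j → j ≤ dx → Tendsto (b j) atTop (nhds (B j)) := by
    intro j h1 h2
    obtain ⟨Lb, hLb⟩ := hbconv j h1 h2
    have : B j = Lb := by rw [hBdef]; exact hLb.limUnder_eq
    rwa [this]
  set Q : ℝ := ∑ j ∈ Finset.Icc 1 d, σ j * A j * B j with hQdef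
  have hQ : Tendsto P atTop (nhds Q) := by
    have hPfun : P = fun t => ∑ j ∈ Finset.Icc 1 d, σ j * a j t * b j t := funext hP
    rw [hPfun, hQdef]
    apply tendsto_finset_sum
    intro j hj
    obtain ⟨h1, h2⟩ := Finset.mem_Icc.1 hj
    exact (tendsto_const_nhds.mul (hA j h1 (le_trans h2 hdy))).mul (hB j h1 (le_trans h2 hdx))
  -- fixed point equation extractor
  have hlim0 : ∀ (f g : ℝ → ℝ) (Dl : ℝ), (∀ t, 0 ≤ t → HasDerivAt f (s t ^ e1 * g t) t) →
      Tendsto g atTop (nhds Dl) → (∃ Lf, Tendsto f atTop (nhds Lf)) → Dl = 0 := by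
    intro f g Dl hdf hg hf
    refine derivLimZero (w := fun t => s t ^ e1) hK hM hT₁0 (fun t ht => ?_) hwlow hg hf
    have h0 := hdf t (le_trans hT₁0 ht)
    have heq : s t ^ e1 * g t = g t * s t ^ e1 := mul_comm _ _
    exact heq ▸ h0
  -- fixed point for s
  have heqs : (N:ℝ) * L * (Q - L) = 0 := by
    apply hlim0 s (fun t => (N:ℝ) * s t * (P t - s t))
    · intro t ht
      have h0 := hs' t ht
      have heq : (N:ℝ) * s t ^ ((2:ℝ) - 2/(N:ℝ)) * (P t - s t)
          = s t ^ e1 * ((N:ℝ) * s t * (P t - s t)) := by rw [hpow t ht]; ring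
      exact heq ▸ h0
    · exact (tendsto_const_nhds.mul hL).mul (hQ.sub hL)
    · exact ⟨L, hL⟩
  -- fixed point for a i, b j (i ≤ d)
  have heqA : ∀ i, 1 ≤ i → i ≤ d → σ i * B i - A i * Q = 0 := by
    intro i h1 h2
    apply hlim0 (a i) (fun t => σ i * b i t - a i t * P t)
    · exact fun t ht => ha' i h1 (le_trans h2 hdy) t ht
    · exact (tendsto_const_nhds.mul (hB i h1 (le_trans h2 hdx))).sub
        ((hA i h1 (le_trans h2 hdy)).mul hQ)
    · exact haconv i h1 (le_trans h2 hdy)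
  have heqB : ∀ j, 1 ≤ j → j ≤ d → σ j * A j - B j * Q = 0 := by
    intro j h1 h2
    apply hlim0 (b j) (fun t => σ j * a j t - b j t * P t)
    · exact fun t ht => hb' j h1 (le_trans h2 hdx) t ht
    · exact (tendsto_const_nhds.mul (hA j h1 (le_trans h2 hdy))).sub
        ((hB j h1 (le_trans h2 hdx)).mul hQ)
    · exact hbconv j h1 (le_trans h2 hdx)
  -- fixed point for a i, i > d
  have heqA0 : ∀ i, 1 ≤ i → i ≤ dy → d < i → A i * Q = 0 := by
    intro i h1 h2 hdi
    have h16 : -(A i * Q) = 0 := by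
      apply hlim0 (a i) (fun t => -(a i t * P t))
      · intro t ht
        have h0 := ha' i h1 h2 t ht
        have heq : s t ^ ((1:ℝ) - 2/(N:ℝ)) * (σ i * b i t - a i t * P t)
            = s t ^ e1 * (-(a i t * P t)) := by rw [hσzero i hdi]; ring
        exact heq ▸ h0
      · exact ((hA i h1 h2).mul hQ).neg
      · exact haconv i h1 h2
    linarith
  have heqB0 : ∀ j, 1 ≤ j → j ≤ dx → d < j → B j * Q = 0 := by
    intro j h1 h2 hdj
    have h16 : -(B j * Q) = 0 := by
      apply hlim0 (b j) (fun t => -(b j t * P t))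
      · intro t ht
        have h0 := hb' j h1 h2 t ht
        have heq : s t ^ ((1:ℝ) - 2/(N:ℝ)) * (σ j * a j t - b j t * P t)
            = s t ^ e1 * (-(b j t * P t)) := by rw [hσzero j hdj]; ring
        exact heq ▸ h0
      · exact ((hB j h1 h2).mul hQ).neg
      · exact hbconv j h1 h2
    linarith
  -- derivative of a1 * b1
  have hgd : ∀ t, 0 ≤ t → HasDerivAt (fun t => a 1 t * b 1 t)
      (s t ^ e1 * (σ 1 * (a 1 t ^ 2 + b 1 t ^ 2) - 2 * (a 1 t * b 1 t) * P t)) t := by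
    intro t ht
    have h0 := (ha' 1 le_rfl hdy1 t ht).mul (hb' 1 le_rfl hdx1 t ht)
    have heq : s t ^ ((1:ℝ) - 2/(N:ℝ)) * (σ 1 * b 1 t - a 1 t * P t) * b 1 t
        + a 1 t * (s t ^ ((1:ℝ) - 2/(N:ℝ)) * (σ 1 * a 1 t - b 1 t * P t))
        = s t ^ e1 * (σ 1 * (a 1 t ^ 2 + b 1 t ^ 2) - 2 * (a 1 t * b 1 t) * P t) := by
      ring
    exact heq ▸ h0
  -- invariance: a1 b1 stays above its initial value
  have hglow : ∀ t, 0 ≤ t → a 1 0 * b 1 0 ≤ a 1 t * b 1 t := by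
    by_contra hcon
    push_neg at hcon
    obtain ⟨t₁, ht₁0, ht₁⟩ := hcon
    set m : ℝ := max (a 1 t₁ * b 1 t₁) (a 1 0 * b 1 0 / 2) with hmdef
    have hm1 : m < a 1 0 * b 1 0 := max_lt ht₁ (by linarith)
    have hm0 : 0 < m := lt_of_lt_of_le (by linarith) (le_max_right _ _)
    have ht₁pos : 0 < t₁ := by
      rcases eq_or_lt_of_le ht₁0 with h | h
      · exfalso; rw [← h] at ht₁; exact lt_irrefl _ ht₁
      · exact h
    set Sset : Set ℝ := Icc 0 t₁ ∩ (fun t => a 1 t * b 1 t) ⁻¹' (Iic m) with hSsetdef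
    have hgcont : ContinuousOn (fun t => a 1 t * b 1 t) (Icc 0 t₁) :=
      fun t ht => (hgd t ht.1).continuousAt.continuousWithinAt
    have hclosed : IsClosed Sset :=
      hgcont.preimage_isClosed_of_isClosed isClosed_Icc isClosed_Iic
    have hne : Sset.Nonempty := ⟨t₁, ⟨ht₁0, le_rfl⟩, by
      simp only [mem_preimage, mem_Iic]; exact le_max_left _ _⟩
    have hbdd : BddBelow Sset := ⟨0, fun x hx => hx.1.1⟩
    set t₀ : ℝ := sInf Sset with ht₀def
    have ht₀mem : t₀ ∈ Sset := hclosed.csInf_mem hne hbdd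
    have ht₀Icc : t₀ ∈ Icc 0 t₁ := ht₀mem.1
    have ht₀m : a 1 t₀ * b 1 t₀ ≤ m := ht₀mem.2
    have hlt : ∀ u, 0 ≤ u → u < t₀ → m < a 1 u * b 1 u := by
      intro u hu0 hu
      by_contra hc
      push_neg at hc
      have : u ∈ Sset := ⟨⟨hu0, le_trans (le_of_lt hu) ht₀Icc.2⟩, hc⟩
      exact absurd (csInf_le hbdd this) (not_le.2 hu)
    have hmono3 : MonotoneOn (fun t => a 1 t * b 1 t) (Icc 0 t₀) := by
      refine monoAux (convex_Icc 0 t₀)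
        (f' := fun t => s t ^ e1 * (σ 1 * (a 1 t ^ 2 + b 1 t ^ 2) - 2 * (a 1 t * b 1 t) * P t))
        (fun t ht => hgd t ht.1) ?_
      intro t ht
      rw [interior_Icc] at ht
      have ht0 : 0 ≤ t := le_of_lt ht.1
      have hc : 0 < a 1 t * b 1 t := lt_trans hm0 (hlt t ht0 ht.2)
      have hPle : P t ≤ σ 1 := (abs_le.1 (hPabs t ht0)).2
      have hw0 : 0 ≤ s t ^ e1 := Real.rpow_nonneg (hs_nonneg t ht0) e1
      have hX : 0 ≤ σ 1 * (a 1 t ^ 2 + b 1 t ^ 2) - 2 * (a 1 t * b 1 t) * P t := by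
        nlinarith [mul_nonneg (le_of_lt hσ1pos) (sq_nonneg (a 1 t - b 1 t)),
          mul_nonneg (le_of_lt hc) (sub_nonneg.2 hPle)]
      exact mul_nonneg hw0 hX
    have h10 : a 1 0 * b 1 0 ≤ a 1 t₀ * b 1 t₀ :=
      hmono3 ⟨le_rfl, ht₀Icc.1⟩ ⟨ht₀Icc.1, le_rfl⟩ ht₀Icc.1
    linarith
  -- limit of a1 b1 is positive
  have hABlim : Tendsto (fun t => a 1 t * b 1 t) atTop (nhds (A 1 * B 1)) :=
    (hA 1 le_rfl hdy1).mul (hB 1 le_rfl hdx1)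
  have hγ : a 1 0 * b 1 0 ≤ A 1 * B 1 :=
    ge_of_tendsto hABlim (eventually_atTop.2 ⟨0, fun t ht => hglow t ht⟩)
  have hγpos : 0 < A 1 * B 1 := lt_of_lt_of_le hab hγ
  -- algebra to determine Q
  have e1eq := heqA 1 le_rfl hd
  have e2eq := heqB 1 le_rfl hd
  have hA1ne : A 1 ≠ 0 := by
    intro h
    rw [h, zero_mul] at hγpos
    exact lt_irrefl _ hγpos
  have hA1sqpos : 0 < (A 1) ^ 2 := by positivity
  have hA1sq : σ 1 * (A 1) ^ 2 = (A 1 * B 1) * Q := by linear_combination A 1 * e2eq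
  have hQpos : 0 < Q := by
    have h17 : 0 < (A 1 * B 1) * Q := by
      rw [← hA1sq]; positivity
    nlinarith
  have hQσ : Q = σ 1 := by
    have h11 : σ 1 ^ 2 * (A 1 * B 1) = (A 1 * B 1) * Q ^ 2 := by
      linear_combination σ 1 * A 1 * e1eq + Q * A 1 * e2eq
    have h12 : (Q - σ 1) * (Q + σ 1) = 0 := by
      have hγne : A 1 * B 1 ≠ 0 := ne_of_gt hγpos
      have h18 : σ 1 ^ 2 * (A 1 * B 1) = Q ^ 2 * (A 1 * B 1) := by linear_combination h11
      have h18' : σ 1 ^ 2 = Q ^ 2 := mul_right_cancel₀ hγne h18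
      linear_combination h18'.symm
    rcases mul_eq_zero.1 h12 with h | h
    · linarith
    · linarith
  -- determine L
  have hLσ : L = σ 1 := by
    rcases mul_eq_zero.1 heqs with h | h
    · rcases mul_eq_zero.1 h with h' | h'
      · exact absurd h' (ne_of_gt hNpos)
      · -- L = 0, contradiction
        exfalso
        obtain ⟨T₂, hT₂⟩ := (hQ.eventually (eventually_ge_nhds
          (by linarith : Q/2 < Q))).exists_forall_of_atTop
        obtain ⟨T₃, hT₃⟩ := (hL.eventually (eventually_le_nhds
          (show L < Q/4 by rw [h']; linarith))).exists_forall_of_atTop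
        set T₄ : ℝ := max (max T₂ T₃) 0 with hT₄def
        have hT₄0 : (0:ℝ) ≤ T₄ := le_max_right _ _
        have hmono4 : MonotoneOn s (Ici T₄) := by
          refine monoAux (convex_Ici T₄)
            (f' := fun t => (N:ℝ) * s t ^ ((2:ℝ) - 2/(N:ℝ)) * (P t - s t))
            (fun t ht => hs' t (le_trans hT₄0 ht)) ?_
          intro t ht
          have ht' : T₄ ≤ t := le_of_lt (by simpa using ht)
          have ht0 : 0 ≤ t := le_trans hT₄0 ht'
          have hPg : Q/2 ≤ P t := hT₂ t (le_trans (le_trans (le_max_left _ _) (le_max_left _ _)) ht')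
          have hsl : s t ≤ Q/4 := hT₃ t (le_trans (le_trans (le_max_right _ _) (le_max_left _ _)) ht')
          have hrp : 0 ≤ s t ^ ((2:ℝ) - 2/(N:ℝ)) := Real.rpow_nonneg (hs_nonneg t ht0) _
          have : 0 ≤ P t - s t := by linarith
          positivity
        have hslow : ∀ t, T₄ ≤ t → s T₄ ≤ s t := fun t ht => hmono4 self_mem_Ici ht ht
        have hLge : s T₄ ≤ L := ge_of_tendsto hL (eventually_atTop.2 ⟨T₄, hslow⟩)
        have := hspos T₄ hT₄0
        rw [h'] at hLge
        linarith
    · linarith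
  have conc1 : Tendsto s atTop (nhds (σ 1)) := by rwa [hLσ] at hL
  -- A i = 0 for i ≠ 1
  have hAzero : ∀ i, 1 ≤ i → i ≤ dy → i ≠ 1 → A i = 0 := by
    intro i h1 h2 hne
    rcases le_or_gt i d with hid | hid
    · have e3 := heqA i h1 hid
      have e4 := heqB i h1 hid
      rw [hQσ] at e3 e4
      have hi2 : 1 < i := lt_of_le_of_ne h1 (Ne.symm hne)
      have hσi := hσpos i h1 hid
      have hσlt := hσmono 1 i le_rfl hi2 hid
      have h13 : (σ i ^ 2 - σ 1 ^ 2) * A i = 0 := by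
        linear_combination σ i * e4 + σ 1 * e3
      rcases mul_eq_zero.1 h13 with h | h
      · exfalso; nlinarith
      · exact h
    · have h19 := heqA0 i h1 h2 hid
      rw [hQσ] at h19
      rcases mul_eq_zero.1 h19 with h | h
      · exact h
      · exact absurd h (ne_of_gt hσ1pos)
  have hBzero : ∀ j, 1 ≤ j → j ≤ dx → j ≠ 1 → B j = 0 := by
    intro j h1 h2 hne
    rcases le_or_gt j d with hid | hid
    · have e3 := heqA j h1 hid
      have e4 := heqB j h1 hid
      rw [hQσ] at e3 e4
      have hi2 : 1 < j := lt_of_le_of_ne h1 (Ne.symm hne)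
      have hσi := hσpos j h1 hid
      have hσlt := hσmono 1 j le_rfl hi2 hid
      have h13 : (σ j ^ 2 - σ 1 ^ 2) * B j = 0 := by
        linear_combination σ j * e3 + σ 1 * e4
      rcases mul_eq_zero.1 h13 with h | h
      · exfalso; nlinarith
      · exact h
    · have h19 := heqB0 j h1 h2 hid
      rw [hQσ] at h19
      rcases mul_eq_zero.1 h19 with h | h
      · exact h
      · exact absurd h (ne_of_gt hσ1pos)
  have conc3 : ∀ i, 1 ≤ i → i ≤ dy → i ≠ 1 → Tendsto (a i) atTop (nhds 0) := by
    intro i h1 h2 hne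
    have := hA i h1 h2
    rwa [hAzero i h1 h2 hne] at this
  have conc4 : ∀ j, 1 ≤ j → j ≤ dx → j ≠ 1 → Tendsto (b j) atTop (nhds 0) := by
    intro j h1 h2 hne
    have := hB j h1 h2
    rwa [hBzero j h1 h2 hne] at this
  -- A 1 ^ 2 = 1 and B 1 ^ 2 = 1
  have hsumA : ∑ i ∈ Finset.Icc 1 dy, (A i) ^ 2 = 1 := by
    have h14 : Tendsto (fun t => ∑ i ∈ Finset.Icc 1 dy, (a i t) ^ 2) atTop
        (nhds (∑ i ∈ Finset.Icc 1 dy, (A i) ^ 2)) := by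
      apply tendsto_finset_sum
      intro i hi
      obtain ⟨h1, h2⟩ := Finset.mem_Icc.1 hi
      exact (hA i h1 h2).pow 2
    have h15 : Tendsto (fun t => ∑ i ∈ Finset.Icc 1 dy, (a i t) ^ 2) atTop (nhds 1) := by
      apply Tendsto.congr' _ (tendsto_const_nhds (α := ℝ) (f := atTop))
      filter_upwards [eventually_ge_atTop (0:ℝ)] with t ht
      exact (ha_norm t ht).symm
    exact tendsto_nhds_unique h14 h15
  have hsumB : ∑ j ∈ Finset.Icc 1 dx, (B j) ^ 2 = 1 := by
    have h14 : Tendsto (fun t => ∑ j ∈ Finset.Icc 1 dx, (b j t) ^ 2) atTop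
        (nhds (∑ j ∈ Finset.Icc 1 dx, (B j) ^ 2)) := by
      apply tendsto_finset_sum
      intro j hj
      obtain ⟨h1, h2⟩ := Finset.mem_Icc.1 hj
      exact (hB j h1 h2).pow 2
    have h15 : Tendsto (fun t => ∑ j ∈ Finset.Icc 1 dx, (b j t) ^ 2) atTop (nhds 1) := by
      apply Tendsto.congr' _ (tendsto_const_nhds (α := ℝ) (f := atTop))
      filter_upwards [eventually_ge_atTop (0:ℝ)] with t ht
      exact (hb_norm t ht).symm
    exact tendsto_nhds_unique h14 h15
  have hA1sq1 : (A 1) ^ 2 = 1 := by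
    rw [← hsumA]
    symm
    apply Finset.sum_eq_single_of_mem 1 (Finset.mem_Icc.2 ⟨le_rfl, hdy1⟩)
    intro j hj hjne
    obtain ⟨h1, h2⟩ := Finset.mem_Icc.1 hj
    rw [hAzero j h1 h2 hjne]
    ring
  have hB1sq1 : (B 1) ^ 2 = 1 := by
    rw [← hsumB]
    symm
    apply Finset.sum_eq_single_of_mem 1 (Finset.mem_Icc.2 ⟨le_rfl, hdx1⟩)
    intro j hj hjne
    obtain ⟨h1, h2⟩ := Finset.mem_Icc.1 hj
    rw [hBzero j h1 h2 hjne]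
    ring
  have hγ1 : A 1 * B 1 = 1 := by
    have h20 : (A 1 * B 1) ^ 2 = 1 := by
      rw [mul_pow, hA1sq1, hB1sq1, mul_one]
    have h21 : (A 1 * B 1 - 1) * (A 1 * B 1 + 1) = 0 := by linear_combination h20
    rcases mul_eq_zero.1 h21 with h | h
    · linarith
    · linarith
  have conc2 : Tendsto (fun t => a 1 t * b 1 t) atTop (nhds 1) := by rwa [hγ1] at hABlim
  exact ⟨conc1, conc2, conc3, conc4⟩
end

section
/- Suppose the reduced gradient-flow system holds with s(0) > 0, let 0 ≤ k ≤ d − 1 be such that a_i(0) + b_i(0) = 0 for all 1 ≤ i ≤ k (no condition if k = 0) and a_{k+1}(0) + b_{k+1}(0) ≠ 0, and assume in addition that s(t) and each a_i(t), b_j(t) converge as t → ∞ (this convergence is imported from prior work on gradient flows of linear networks). Then s(t) → s_{k+1}, a_{k+1}(t)·b_{k+1}(t) → 1, a_i(t) → 0 for every i ≠ k+1, and b_j(t) → 0 for every j ≠ k+1; that is, the induced weight converges to s_{k+1}·u_{k+1}·v_{k+1}ᵀ. -/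
open Filter Topology

private lemma monoOn_Icc_of_hasDerivAt {f f' : ℝ → ℝ} {A B : ℝ}
    (hf : ∀ t ∈ Set.Icc A B, HasDerivAt f (f' t) t)
    (h0 : ∀ t ∈ Set.Ioo A B, 0 ≤ f' t) :
    MonotoneOn f (Set.Icc A B) := by
  apply monotoneOn_of_deriv_nonneg (convex_Icc A B)
  · exact fun t ht => (hf t ht).continuousAt.continuousWithinAt
  · rw [interior_Icc]
    exact fun t ht => (hf t (Set.Ioo_subset_Icc_self ht)).differentiableAt.differentiableWithinAt
  · rw [interior_Icc]
    intro t ht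
    rw [(hf t (Set.Ioo_subset_Icc_self ht)).deriv]
    exact h0 t ht

private lemma antiOn_Icc_of_hasDerivAt {f f' : ℝ → ℝ} {A B : ℝ}
    (hf : ∀ t ∈ Set.Icc A B, HasDerivAt f (f' t) t)
    (h0 : ∀ t ∈ Set.Ioo A B, f' t ≤ 0) :
    AntitoneOn f (Set.Icc A B) := by
  apply antitoneOn_of_deriv_nonpos (convex_Icc A B)
  · exact fun t ht => (hf t ht).continuousAt.continuousWithinAt
  · rw [interior_Icc]
    exact fun t ht => (hf t (Set.Ioo_subset_Icc_self ht)).differentiableAt.differentiableWithinAt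
  · rw [interior_Icc]
    intro t ht
    rw [(hf t (Set.Ioo_subset_Icc_self ht)).deriv]
    exact h0 t ht

private lemma monoOn_Ici_of_hasDerivAt {f f' : ℝ → ℝ} {A : ℝ}
    (hf : ∀ t, A ≤ t → HasDerivAt f (f' t) t)
    (h0 : ∀ t, A ≤ t → 0 ≤ f' t) :
    MonotoneOn f (Set.Ici A) := by
  apply monotoneOn_of_deriv_nonneg (convex_Ici A)
  · exact fun t ht => (hf t ht).continuousAt.continuousWithinAt
  · rw [interior_Ici]
    exact fun t ht => (hf t (le_of_lt ht)).differentiableAt.differentiableWithinAt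
  · rw [interior_Ici]
    intro t ht
    rw [(hf t ht.le).deriv]
    exact h0 t ht.le

private lemma ode_zero_iff {c f : ℝ → ℝ}
    (hc : ∀ t, 0 ≤ t → HasDerivAt c (f t * c t) t)
    (hK : ∀ T, 0 < T → ∃ K, ∀ t ∈ Set.Icc (0:ℝ) T, |f t| ≤ K) :
    ∀ t, 0 ≤ t → (c t = 0 ↔ c 0 = 0) := by
  intro T hT
  rcases eq_or_lt_of_le hT with h | hTpos
  · rw [← h]
  obtain ⟨K, hKb⟩ := hK T hTpos
  have hK0 : 0 ≤ K := le_trans (abs_nonneg _) (hKb 0 ⟨le_refl _, hT⟩)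
  -- derivative of c*c
  have hsq : ∀ t ∈ Set.Icc (0:ℝ) T, HasDerivAt (fun u => c u * c u)
      (2 * f t * (c t * c t)) t := by
    intro t ht
    have : HasDerivAt (fun u => c u * c u) _ t := (hc t ht.1).mul (hc t ht.1)
    convert this using 1; ring
  have hexp : ∀ (M : ℝ) (t : ℝ), HasDerivAt (fun u => Real.exp (M * u))
      (M * Real.exp (M * t)) t := by
    intro M t
    have := ((hasDerivAt_id t).const_mul M).exp
    simp only [id_eq] at this
    convert this using 1; ring
  -- monotone: c² e^{2Kt}
  have hmono : MonotoneOn (fun u => c u * c u * Real.exp (2 * K * u)) (Set.Icc 0 T) := by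
    apply monoOn_Icc_of_hasDerivAt
      (f' := fun t => 2 * f t * (c t * c t) * Real.exp (2*K*t)
        + c t * c t * (2 * K * Real.exp (2*K*t)))
    · intro t ht
      exact ((hsq t ht).mul (hexp (2*K) t))
    · intro t ht
      have hb := abs_le.mp (hKb t (Set.Ioo_subset_Icc_self ht))
      have he := Real.exp_pos (2*K*t)
      nlinarith [mul_nonneg (mul_self_nonneg (c t)) he.le, mul_self_nonneg (c t)]
  -- antitone: c² e^{-2Kt}
  have hanti : AntitoneOn (fun u => c u * c u * Real.exp (-(2 * K) * u)) (Set.Icc 0 T) := by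
    apply antiOn_Icc_of_hasDerivAt
      (f' := fun t => 2 * f t * (c t * c t) * Real.exp (-(2*K)*t)
        + c t * c t * (-(2 * K) * Real.exp (-(2*K)*t)))
    · intro t ht
      exact ((hsq t ht).mul (hexp (-(2*K)) t))
    · intro t ht
      have hb := abs_le.mp (hKb t (Set.Ioo_subset_Icc_self ht))
      have he := Real.exp_pos (-(2*K)*t)
      nlinarith [mul_nonneg (mul_self_nonneg (c t)) he.le, mul_self_nonneg (c t)]
  constructor
  · intro hcT
    by_contra hc0
    have h1 : c 0 * c 0 * Real.exp (2*K*0) ≤ c T * c T * Real.exp (2*K*T) :=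
      hmono (Set.left_mem_Icc.mpr hT) (Set.right_mem_Icc.mpr hT) hT
    rw [hcT] at h1
    simp only [mul_zero, zero_mul, Real.exp_zero, mul_one] at h1
    have h0 : 0 < c 0 * c 0 := mul_self_pos.mpr hc0
    linarith
  · intro hc0
    have h1 : c T * c T * Real.exp (-(2*K)*T) ≤ c 0 * c 0 * Real.exp (-(2*K)*0) :=
      hanti (Set.left_mem_Icc.mpr hT) (Set.right_mem_Icc.mpr hT) hT
    rw [hc0] at h1
    have he := Real.exp_pos (-(2*K)*T)
    have h2 : c T * c T = 0 := by nlinarith [mul_self_nonneg (c T)]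
    exact mul_self_eq_zero.mp h2

private lemma lim_deriv_zero {f f' : ℝ → ℝ} {A m : ℝ}
    (hf : ∀ t, 0 ≤ t → HasDerivAt f (f' t) t)
    (hA : Tendsto f atTop (𝓝 A)) (hm : Tendsto f' atTop (𝓝 m)) : m = 0 := by
  have key : ∀ t : ℝ, 0 ≤ t → ∃ ξ, ξ ∈ Set.Ioo t (t+1) ∧ f' ξ = f (t+1) - f t := by
    intro t ht
    obtain ⟨ξ, hξ, he⟩ := exists_hasDerivAt_eq_slope f f' (by linarith : t < t + 1)
      (fun x hx => (hf x (le_trans ht hx.1)).continuousAt.continuousWithinAt)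
      (fun x hx => hf x (le_trans ht hx.1.le))
    refine ⟨ξ, hξ, ?_⟩
    have h1 : t + 1 - t = 1 := by ring
    rw [he, h1, div_one]
  classical
  set g : ℝ → ℝ := fun t => if h : 0 ≤ t then (key t h).choose else 0 with hg
  have hgs : ∀ t, 0 ≤ t → g t ∈ Set.Ioo t (t+1) ∧ f' (g t) = f (t+1) - f t := by
    intro t ht
    simp only [hg, dif_pos ht]
    exact (key t ht).choose_spec
  have hgt : Tendsto g atTop atTop := by
    refine tendsto_atTop_mono' atTop ?_ tendsto_id
    filter_upwards [eventually_ge_atTop (0:ℝ)] with t ht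
    exact (hgs t ht).1.1.le
  have T1 : Tendsto (fun t => f' (g t)) atTop (𝓝 m) := hm.comp hgt
  have T2 : Tendsto (fun t => f (t+1) - f t) atTop (𝓝 (A - A)) := by
    exact (hA.comp (tendsto_atTop_add_const_right _ 1 tendsto_id)).sub hA
  have heq : (fun t => f' (g t)) =ᶠ[atTop] (fun t => f (t+1) - f t) := by
    filter_upwards [eventually_ge_atTop (0:ℝ)] with t ht
    exact (hgs t ht).2
  have := tendsto_nhds_unique (T1.congr' heq) T2
  rw [this]; ring

private lemma hasDerivAt_exp_mul (K t : ℝ) :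
    HasDerivAt (fun u => Real.exp (K * u)) (K * Real.exp (K * t)) t := by
  have h := ((hasDerivAt_id t).const_mul K).exp
  simp only [id_eq] at h
  convert h using 1; ring

private lemma hasDerivAt_sq {c : ℝ → ℝ} {v t : ℝ} (h : HasDerivAt c v t) :
    HasDerivAt (fun u => c u * c u) (2 * v * c t) t := by
  have : HasDerivAt (fun u => c u * c u) _ t := h.mul h; convert this using 1; ring

set_option maxHeartbeats 2000000 in
theorem stmt9
    (N d dy dx : ℕ) (hN : 2 ≤ N) (hd : 1 ≤ d) (hdy : d ≤ dy) (hdx : d ≤ dx)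
    (σ : ℕ → ℝ)
    (hσpos : ∀ i, 1 ≤ i → i ≤ d → 0 < σ i)
    (hσmono : ∀ i j, 1 ≤ i → i < j → j ≤ d → σ j < σ i)
    (hσzero : ∀ i, d < i → σ i = 0)
    (s : ℝ → ℝ) (a b : ℕ → ℝ → ℝ) (P : ℝ → ℝ)
    (hs_nonneg : ∀ t, 0 ≤ t → 0 ≤ s t)
    (ha_norm : ∀ t, 0 ≤ t → ∑ i ∈ Finset.Icc 1 dy, (a i t) ^ 2 = 1)
    (hb_norm : ∀ t, 0 ≤ t → ∑ j ∈ Finset.Icc 1 dx, (b j t) ^ 2 = 1)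
    (hP : ∀ t, P t = ∑ j ∈ Finset.Icc 1 d, σ j * a j t * b j t)
    (hs' : ∀ t, 0 ≤ t →
      HasDerivAt s ((N : ℝ) * s t ^ ((2 : ℝ) - 2 / (N : ℝ)) * (P t - s t)) t)
    (ha' : ∀ i, 1 ≤ i → i ≤ dy → ∀ t, 0 ≤ t →
      HasDerivAt (a i) (s t ^ ((1 : ℝ) - 2 / (N : ℝ)) * (σ i * b i t - a i t * P t)) t)
    (hb' : ∀ j, 1 ≤ j → j ≤ dx → ∀ t, 0 ≤ t →
      HasDerivAt (b j) (s t ^ ((1 : ℝ) - 2 / (N : ℝ)) * (σ j * a j t - b j t * P t)) t)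
    (hs0 : 0 < s 0) (k : ℕ) (hk : k + 1 ≤ d)
    (hzero : ∀ i, 1 ≤ i → i ≤ k → a i 0 + b i 0 = 0)
    (hne : a (k + 1) 0 + b (k + 1) 0 ≠ 0)
    (hsconv : ∃ L : ℝ, Tendsto s atTop (nhds L))
    (haconv : ∀ i, 1 ≤ i → i ≤ dy → ∃ L : ℝ, Tendsto (a i) atTop (nhds L))
    (hbconv : ∀ j, 1 ≤ j → j ≤ dx → ∃ L : ℝ, Tendsto (b j) atTop (nhds L)) :
    Tendsto s atTop (nhds (σ (k + 1))) ∧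
    Tendsto (fun t => a (k + 1) t * b (k + 1) t) atTop (nhds 1) ∧
    (∀ i, 1 ≤ i → i ≤ dy → i ≠ k + 1 → Tendsto (a i) atTop (nhds 0)) ∧
    (∀ j, 1 ≤ j → j ≤ dx → j ≠ k + 1 → Tendsto (b j) atTop (nhds 0)) := by
  classical
  have hN2 : (2:ℝ) ≤ (N:ℝ) := by exact_mod_cast hN
  have hNpos : (0:ℝ) < (N:ℝ) := by linarith
  set e : ℝ := 1 - 2/(N:ℝ) with he_def
  have he0 : 0 ≤ e := by
    have h1 : 2/(N:ℝ) ≤ 1 := by rw [div_le_one hNpos]; linarith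
    rw [he_def]; linarith
  have he1 : e ≤ 1 := by
    have h1 : 0 < 2/(N:ℝ) := by positivity
    rw [he_def]; linarith
  have hexp_eq : (2:ℝ) - 2/(N:ℝ) = e + 1 := by rw [he_def]; ring
  have hs2 : ∀ t, 0 ≤ t → HasDerivAt s ((N:ℝ) * s t ^ (e+1) * (P t - s t)) t := by
    intro t ht; have h1 := hs' t ht; rwa [hexp_eq] at h1
  have hsc : ∀ t, 0 ≤ t → ContinuousAt s t := fun t ht => (hs2 t ht).continuousAt
  have hPfun : P = fun t => ∑ j ∈ Finset.Icc 1 d, σ j * a j t * b j t := funext hP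
  have hmemd : ∀ j ∈ Finset.Icc 1 d, 1 ≤ j ∧ j ≤ dy ∧ j ≤ dx := by
    intro j hj
    obtain ⟨h1, h2⟩ := Finset.mem_Icc.mp hj
    exact ⟨h1, le_trans h2 hdy, le_trans h2 hdx⟩
  -- derivative of P
  have hP' : ∀ t, 0 ≤ t → HasDerivAt P
      (s t ^ e * ((∑ j ∈ Finset.Icc 1 d, σ j^2 * (a j t^2 + b j t^2)) - 2 * P t^2)) t := by
    intro t ht
    have hterm : ∀ j ∈ Finset.Icc 1 d, HasDerivAt (fun u => σ j * a j u * b j u)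
        (σ j * ((s t ^ e * (σ j * b j t - a j t * P t)) * b j t
          + a j t * (s t ^ e * (σ j * a j t - b j t * P t)))) t := by
      intro j hj
      obtain ⟨h1, h2, h3⟩ := hmemd j hj
      have h4 := ((ha' j h1 h2 t ht).mul (hb' j h1 h3 t ht)).const_mul (σ j)
      have hfeq : (fun u => σ j * a j u * b j u) = (fun u => σ j * (a j u * b j u)) := by
        funext u; ring
      rw [hfeq]
      exact h4
    have hsum : HasDerivAt (fun y => ∑ j ∈ Finset.Icc 1 d, σ j * a j y * b j y)
        (∑ j ∈ Finset.Icc 1 d, σ j * ((s t ^ e * (σ j * b j t - a j t * P t)) * b j t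
          + a j t * (s t ^ e * (σ j * a j t - b j t * P t)))) t := HasDerivAt.fun_sum hterm
    have heq : (∑ j ∈ Finset.Icc 1 d, σ j * ((s t ^ e * (σ j * b j t - a j t * P t)) * b j t
          + a j t * (s t ^ e * (σ j * a j t - b j t * P t))))
        = s t ^ e * ((∑ j ∈ Finset.Icc 1 d, σ j^2 * (a j t^2 + b j t^2)) - 2 * P t^2) := by
      have h1 : ∀ j ∈ Finset.Icc 1 d, σ j * ((s t ^ e * (σ j * b j t - a j t * P t)) * b j t
          + a j t * (s t ^ e * (σ j * a j t - b j t * P t)))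
          = s t ^ e * (σ j^2 * (a j t^2 + b j t^2)) - (s t ^ e * (2 * P t)) * (σ j * a j t * b j t) := by
        intro j _; ring
      rw [Finset.sum_congr rfl h1, Finset.sum_sub_distrib, ← Finset.mul_sum, ← Finset.mul_sum, ← hP t]
      ring
    rw [heq] at hsum
    rw [← hPfun] at hsum
    exact hsum
  have hPc : ∀ t, 0 ≤ t → ContinuousAt P t := fun t ht => (hP' t ht).continuousAt
  -- Cauchy-Schwarz bound
  have hb_sub : ∀ t, 0 ≤ t → ∑ j ∈ Finset.Icc 1 d, (b j t)^2 ≤ 1 := by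
    intro t ht
    rw [← hb_norm t ht]
    exact Finset.sum_le_sum_of_subset_of_nonneg (Finset.Icc_subset_Icc_right hdx)
      (fun i _ _ => sq_nonneg _)
  have ha_sub : ∀ t, 0 ≤ t → ∑ j ∈ Finset.Icc 1 d, (a j t)^2 ≤ 1 := by
    intro t ht
    rw [← ha_norm t ht]
    exact Finset.sum_le_sum_of_subset_of_nonneg (Finset.Icc_subset_Icc_right hdy)
      (fun i _ _ => sq_nonneg _)
  have hQP : ∀ t, 0 ≤ t → 2 * P t^2 ≤ ∑ j ∈ Finset.Icc 1 d, σ j^2 * (a j t^2 + b j t^2) := by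
    intro t ht
    have h1 : P t ^2 ≤ ∑ j ∈ Finset.Icc 1 d, (σ j * a j t)^2 := by
      have hcs := Finset.sum_mul_sq_le_sq_mul_sq (Finset.Icc 1 d)
        (fun j => σ j * a j t) (fun j => b j t)
      have hPt : P t = ∑ j ∈ Finset.Icc 1 d, (σ j * a j t) * (b j t) := hP t
      rw [hPt]
      calc (∑ j ∈ Finset.Icc 1 d, (σ j * a j t) * (b j t))^2
          ≤ (∑ j ∈ Finset.Icc 1 d, (σ j * a j t)^2) * (∑ j ∈ Finset.Icc 1 d, (b j t)^2) := hcs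
        _ ≤ (∑ j ∈ Finset.Icc 1 d, (σ j * a j t)^2) * 1 :=
            mul_le_mul_of_nonneg_left (hb_sub t ht) (Finset.sum_nonneg fun i _ => sq_nonneg _)
        _ = _ := mul_one _
    have h2 : P t ^2 ≤ ∑ j ∈ Finset.Icc 1 d, (σ j * b j t)^2 := by
      have hcs := Finset.sum_mul_sq_le_sq_mul_sq (Finset.Icc 1 d)
        (fun j => σ j * b j t) (fun j => a j t)
      have hPt : P t = ∑ j ∈ Finset.Icc 1 d, (σ j * b j t) * (a j t) := by
        rw [hP t]; exact Finset.sum_congr rfl fun j _ => by ring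
      rw [hPt]
      calc (∑ j ∈ Finset.Icc 1 d, (σ j * b j t) * (a j t))^2
          ≤ (∑ j ∈ Finset.Icc 1 d, (σ j * b j t)^2) * (∑ j ∈ Finset.Icc 1 d, (a j t)^2) := hcs
        _ ≤ (∑ j ∈ Finset.Icc 1 d, (σ j * b j t)^2) * 1 :=
            mul_le_mul_of_nonneg_left (ha_sub t ht) (Finset.sum_nonneg fun i _ => sq_nonneg _)
        _ = _ := mul_one _
    have h3 : ∑ j ∈ Finset.Icc 1 d, σ j^2 * (a j t^2 + b j t^2)
        = (∑ j ∈ Finset.Icc 1 d, (σ j * a j t)^2) + (∑ j ∈ Finset.Icc 1 d, (σ j * b j t)^2) := by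
      rw [← Finset.sum_add_distrib]
      exact Finset.sum_congr rfl fun j _ => by ring
    rw [h3]; linarith
  have hPmono : MonotoneOn P (Set.Ici 0) := by
    refine monoOn_Ici_of_hasDerivAt hP' ?_
    intro t ht
    exact mul_nonneg (Real.rpow_nonneg (hs_nonneg t ht) e) (by linarith [hQP t ht])
  -- positivity of s
  have hsplit : ∀ t, 0 ≤ t → s t ^ (e+1) = s t ^ e * s t := by
    intro t ht
    rw [Real.rpow_add' (hs_nonneg t ht) (by linarith : e + 1 ≠ 0), Real.rpow_one]
  have hs_pos : ∀ t, 0 ≤ t → 0 < s t := by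
    intro T hT
    rcases eq_or_lt_of_le hT with h|hTpos
    · rwa [← h]
    have hscont : ContinuousOn s (Set.Icc 0 T) := fun t ht => (hsc t ht.1).continuousWithinAt
    have hPcont : ContinuousOn P (Set.Icc 0 T) := fun t ht => (hPc t ht.1).continuousWithinAt
    obtain ⟨Cs, hCs⟩ := isCompact_Icc.exists_bound_of_continuousOn hscont
    obtain ⟨Cp, hCp⟩ := isCompact_Icc.exists_bound_of_continuousOn (hPcont.sub hscont)
    have hmem0 : (0:ℝ) ∈ Set.Icc (0:ℝ) T := Set.left_mem_Icc.mpr hT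
    have hCs0 : (0:ℝ) ≤ Cs := le_trans (norm_nonneg _) (hCs 0 hmem0)
    have hCp0 : (0:ℝ) ≤ Cp := le_trans (norm_nonneg _) (hCp 0 hmem0)
    set K := (N:ℝ) * (Cs + 1) * (Cp + 1) with hKdef
    have hse_le : ∀ t ∈ Set.Icc (0:ℝ) T, s t ^ e ≤ Cs + 1 := by
      intro t ht
      have h1 : s t ≤ Cs + 1 := by
        have h2 := hCs t ht
        rw [Real.norm_eq_abs] at h2
        have h3 := le_abs_self (s t)
        linarith
      calc s t ^ e ≤ (Cs+1)^e := Real.rpow_le_rpow (hs_nonneg t ht.1) h1 he0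
        _ ≤ (Cs+1)^(1:ℝ) := Real.rpow_le_rpow_of_exponent_le (by linarith) he1
        _ = Cs + 1 := Real.rpow_one _
    have hder : ∀ t ∈ Set.Icc (0:ℝ) T, 0 ≤ (N:ℝ) * s t ^ (e+1) * (P t - s t) + K * s t := by
      intro t ht
      have h1 : |P t - s t| ≤ Cp + 1 := by
        have h2 := hCp t ht
        rw [Real.norm_eq_abs, Pi.sub_apply] at h2
        linarith
      obtain ⟨h2a, h2b⟩ := abs_le.mp h1
      have h3 := hsplit t ht.1
      have h4 := hse_le t ht
      have h5 : 0 ≤ s t := hs_nonneg t ht.1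
      have h6 : 0 ≤ s t ^ e := Real.rpow_nonneg h5 e
      rw [h3, hKdef]
      nlinarith [mul_nonneg (mul_nonneg h6 h5) (by linarith : (0:ℝ) ≤ P t - s t + (Cp+1)),
        mul_nonneg (mul_nonneg (by linarith : (0:ℝ) ≤ Cs + 1 - s t ^ e) h5) (by linarith : (0:ℝ) ≤ Cp + 1)]
    have hmono : MonotoneOn (fun u => s u * Real.exp (K * u)) (Set.Icc 0 T) := by
      apply monoOn_Icc_of_hasDerivAt
        (f' := fun t => ((N:ℝ) * s t ^ (e+1) * (P t - s t)) * Real.exp (K*t)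
          + s t * (K * Real.exp (K*t)))
      · intro t ht
        exact (hs2 t ht.1).mul (hasDerivAt_exp_mul K t)
      · intro t ht
        have h1 := hder t (Set.Ioo_subset_Icc_self ht)
        nlinarith [mul_nonneg h1 (Real.exp_pos (K*t)).le]
    have h7 : s 0 * Real.exp (K * 0) ≤ s T * Real.exp (K * T) :=
      hmono (Set.left_mem_Icc.mpr hT) (Set.right_mem_Icc.mpr hT) hT
    rw [mul_zero, Real.exp_zero, mul_one] at h7
    nlinarith [Real.exp_pos (K*T)]
  -- sum functions c_i = a_i + b_i
  have hc' : ∀ i, 1 ≤ i → i ≤ d → ∀ t, 0 ≤ t →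
      HasDerivAt (fun u => a i u + b i u) ((s t ^ e * (σ i - P t)) * (a i t + b i t)) t := by
    intro i h1 h2 t ht
    have h3 : HasDerivAt (fun u => a i u + b i u) _ t := (ha' i h1 (le_trans h2 hdy) t ht).add (hb' i h1 (le_trans h2 hdx) t ht)
    convert h3 using 1
    ring
  have hfK : ∀ (i : ℕ), ∀ T, 0 < T → ∃ K, ∀ t ∈ Set.Icc (0:ℝ) T, |s t ^ e * (σ i - P t)| ≤ K := by
    intro i T hT
    have hcont : ContinuousOn (fun t => s t ^ e * (σ i - P t)) (Set.Icc 0 T) := by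
      intro t ht
      exact (((hsc t ht.1).rpow_const (Or.inr he0)).mul
        (continuousAt_const.sub (hPc t ht.1))).continuousWithinAt
    obtain ⟨C, hC⟩ := isCompact_Icc.exists_bound_of_continuousOn hcont
    exact ⟨C, fun t ht => by rw [← Real.norm_eq_abs]; exact hC t ht⟩
  have hciff : ∀ i, 1 ≤ i → i ≤ d → ∀ t, 0 ≤ t →
      ((a i t + b i t) = 0 ↔ (a i 0 + b i 0) = 0) := by
    intro i h1 h2
    exact ode_zero_iff (c := fun u => a i u + b i u) (f := fun t => s t ^ e * (σ i - P t))
      (hc' i h1 h2) (hfK i)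
  -- limits
  obtain ⟨L, hsL⟩ := hsconv
  set α : ℕ → ℝ := fun i => limUnder atTop (a i) with hαdef
  have hα : ∀ i, 1 ≤ i → i ≤ dy → Tendsto (a i) atTop (𝓝 (α i)) := by
    intro i h1 h2
    obtain ⟨L', hL'⟩ := haconv i h1 h2
    have : α i = L' := hL'.limUnder_eq
    rwa [this]
  set β : ℕ → ℝ := fun j => limUnder atTop (b j) with hβdef
  have hβ : ∀ j, 1 ≤ j → j ≤ dx → Tendsto (b j) atTop (𝓝 (β j)) := by
    intro j h1 h2
    obtain ⟨L', hL'⟩ := hbconv j h1 h2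
    have : β j = L' := hL'.limUnder_eq
    rwa [this]
  set Plim : ℝ := ∑ j ∈ Finset.Icc 1 d, σ j * α j * β j with hPlimdef
  have hPL : Tendsto P atTop (𝓝 Plim) := by
    rw [hPfun, hPlimdef]
    apply tendsto_finset_sum
    intro j hj
    obtain ⟨h1, h2, h3⟩ := hmemd j hj
    exact (tendsto_const_nhds.mul (hα j h1 h2)).mul (hβ j h1 h3)
  have hPub : ∀ t, 0 ≤ t → P t ≤ Plim := by
    intro t ht
    refine ge_of_tendsto hPL ?_
    filter_upwards [eventually_ge_atTop t] with u hu
    exact hPmono (Set.mem_Ici.mpr ht) (Set.mem_Ici.mpr (le_trans ht hu)) hu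
  have hLnonneg : 0 ≤ L := by
    refine ge_of_tendsto hsL ?_
    filter_upwards [eventually_ge_atTop (0:ℝ)] with t ht
    exact hs_nonneg t ht
  have hk1 : 1 ≤ k + 1 := Nat.le_add_left 1 k
  have hσk : 0 < σ (k+1) := hσpos (k+1) hk1 hk
  -- L > 0
  have hLpos : 0 < L := by
    rcases hLnonneg.lt_or_eq with h | h
    · exact h
    exfalso
    have hs0' : Tendsto s atTop (𝓝 0) := by rwa [← h] at hsL
    rcases lt_or_ge 0 Plim with hPlimpos | hPlimle
    · -- Plim > 0
      obtain ⟨T₀, hT₀⟩ := eventually_atTop.mp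
        (((tendsto_order.mp hs0').2 (Plim/2) (by linarith)).and
          ((tendsto_order.mp hPL).1 (Plim/2) (by linarith)))
      set T := max T₀ 0 with hTdef
      have hT0 : (0:ℝ) ≤ T := le_max_right _ _
      have hprop : ∀ t, T ≤ t → s t < Plim/2 ∧ Plim/2 < P t :=
        fun t ht => hT₀ t (le_trans (le_max_left _ _) ht)
      have hmono : MonotoneOn s (Set.Ici T) := by
        refine monoOn_Ici_of_hasDerivAt (fun t ht => hs2 t (le_trans hT0 ht)) ?_
        intro t ht
        obtain ⟨h1, h2⟩ := hprop t ht
        have h3 := Real.rpow_nonneg (hs_nonneg t (le_trans hT0 ht)) (e+1)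
        have h4 : 0 ≤ P t - s t := by linarith
        exact mul_nonneg (mul_nonneg hNpos.le h3) h4
      have hge : s T ≤ L := by
        refine ge_of_tendsto hsL ?_
        filter_upwards [eventually_ge_atTop T] with u hu
        exact hmono (Set.mem_Ici.mpr le_rfl) (Set.mem_Ici.mpr hu) hu
      have h5 := hs_pos T hT0
      rw [← h] at hge
      linarith
    · -- Plim ≤ 0
      have hPle0 : ∀ t, 0 ≤ t → P t ≤ 0 := fun t ht => le_trans (hPub t ht) hPlimle
      set K := |P 0| + 1 with hKdef
      have hKpos : (0:ℝ) < K := by positivity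
      set lam := 2 * σ (k+1) / ((N:ℝ) * K) with hlamdef
      have hlampos : 0 < lam := div_pos (by linarith) (by positivity)
      obtain ⟨T₀, hT₀⟩ := eventually_atTop.mp ((tendsto_order.mp hs0').2 1 one_pos)
      set T := max T₀ 0 with hTdef
      have hT0 : (0:ℝ) ≤ T := le_max_right _ _
      have hsle1 : ∀ t, T ≤ t → s t ≤ 1 :=
        fun t ht => (hT₀ t (le_trans (le_max_left _ _) ht)).le
      set cc : ℝ → ℝ := fun t => a (k+1) t + b (k+1) t with hccdef
      have hccd : ∀ t, 0 ≤ t → HasDerivAt cc ((s t ^ e * (σ (k+1) - P t)) * cc t) t :=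
        hc' (k+1) hk1 hk
      have hccne : ∀ t, 0 ≤ t → cc t ≠ 0 := by
        intro t ht hz
        exact hne ((hciff (k+1) hk1 hk t ht).mp hz)
      have hccb : ∀ t, 0 ≤ t → cc t * cc t ≤ 4 := by
        intro t ht
        have h1 : a (k+1) t ^2 ≤ 1 := by
          rw [← ha_norm t ht]
          exact Finset.single_le_sum (f := fun i => a i t ^ 2) (fun i _ => sq_nonneg _)
            (Finset.mem_Icc.mpr ⟨hk1, le_trans hk hdy⟩)
        have h2 : b (k+1) t ^2 ≤ 1 := by
          rw [← hb_norm t ht]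
          exact Finset.single_le_sum (f := fun j => b j t ^ 2) (fun j _ => sq_nonneg _)
            (Finset.mem_Icc.mpr ⟨hk1, le_trans hk hdx⟩)
        show (a (k+1) t + b (k+1) t) * (a (k+1) t + b (k+1) t) ≤ 4
        nlinarith [sq_nonneg (a (k+1) t - b (k+1) t)]
      set H : ℝ → ℝ := fun t => cc t * cc t * s t ^ lam with hHdef
      have hHmono : MonotoneOn H (Set.Ici T) := by
        apply monoOn_Ici_of_hasDerivAt
          (f' := fun t => 2 * ((s t ^ e * (σ (k+1) - P t)) * cc t) * cc t * s t ^ lam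
            + (cc t * cc t) * (((N:ℝ) * s t ^ (e+1) * (P t - s t)) * lam * s t ^ (lam - 1)))
        · intro t ht
          have ht0 : 0 ≤ t := le_trans hT0 ht
          exact (hasDerivAt_sq (hccd t ht0)).mul
            ((hs2 t ht0).rpow_const (Or.inl (hs_pos t ht0).ne'))
        · intro t ht
          have ht0 : 0 ≤ t := le_trans hT0 ht
          have hsp := hs_pos t ht0
          have hre : s t ^ e * s t ^ lam = s t ^ (e + lam) := (Real.rpow_add hsp e lam).symm
          have hre2 : s t ^ (e+1) * s t ^ (lam-1) = s t ^ (e + lam) := by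
            rw [← Real.rpow_add hsp]; ring_nf
          have hPt := hPle0 t ht0
          have hPgt : -K ≤ P t - s t := by
            have h1 : P 0 ≤ P t := hPmono (Set.mem_Ici.mpr le_rfl) (Set.mem_Ici.mpr ht0) ht0
            have h2 := hsle1 t ht
            have h3 := neg_abs_le (P 0)
            rw [hKdef]
            linarith
          have hspe := Real.rpow_pos_of_pos hsp (e+lam)
          have hcc2 := mul_self_nonneg (cc t)
          have hlameq : lam * ((N:ℝ) * K) = 2 * σ (k+1) := by
            rw [hlamdef]; field_simp
          have e1 : 2 * ((s t ^ e * (σ (k+1) - P t)) * cc t) * cc t * s t ^ lam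
              = (2 * (σ (k+1) - P t)) * (cc t * cc t) * s t ^ (e+lam) := by
            rw [← hre]; ring
          have e2 : (cc t * cc t) * (((N:ℝ) * s t ^ (e+1) * (P t - s t)) * lam * s t ^ (lam - 1))
              = ((N:ℝ) * lam * (P t - s t)) * (cc t * cc t) * s t ^ (e+lam) := by
            rw [← hre2]; ring
          rw [e1, e2]
          have hcoef : 0 ≤ 2 * (σ (k+1) - P t) + (N:ℝ) * lam * (P t - s t) := by
            have h4 : ((N:ℝ) * lam) * (-K) ≤ ((N:ℝ) * lam) * (P t - s t) :=
              mul_le_mul_of_nonneg_left hPgt (by positivity)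
            nlinarith [hlameq]
          nlinarith [mul_nonneg (mul_nonneg hcoef hcc2) hspe.le]
      have hHpos : 0 < H T := by
        have h1 := mul_self_pos.mpr (hccne T hT0)
        have h2 := Real.rpow_pos_of_pos (hs_pos T hT0) lam
        rw [hHdef]
        exact mul_pos h1 h2
      have hH0 : Tendsto H atTop (𝓝 0) := by
        rw [hHdef]
        apply squeeze_zero' (g := fun t => 4 * s t ^ lam)
        · filter_upwards [eventually_ge_atTop (0:ℝ)] with t ht
          exact mul_nonneg (mul_self_nonneg _) (Real.rpow_nonneg (hs_nonneg t ht) lam)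
        · filter_upwards [eventually_ge_atTop (0:ℝ)] with t ht
          exact mul_le_mul_of_nonneg_right (hccb t ht) (Real.rpow_nonneg (hs_nonneg t ht) lam)
        · have h3 : Tendsto (fun t => s t ^ lam) atTop (𝓝 ((0:ℝ) ^ lam)) :=
            hs0'.rpow_const (Or.inr hlampos.le)
          rw [Real.zero_rpow hlampos.ne'] at h3
          simpa using h3.const_mul 4
      obtain ⟨u, hu1, hu2⟩ :=
        ((eventually_ge_atTop T).and ((tendsto_order.mp hH0).2 (H T) hHpos)).exists
      have h6 := hHmono (Set.mem_Ici.mpr le_rfl) (Set.mem_Ici.mpr hu1) hu1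
      linarith
  -- stationarity
  have hrpowL : Tendsto (fun t => s t ^ e) atTop (𝓝 (L ^ e)) :=
    hsL.rpow_const (Or.inl hLpos.ne')
  have hLe : 0 < L ^ e := Real.rpow_pos_of_pos hLpos e
  have hPlimL : Plim = L := by
    have hds : Tendsto (fun t => (N:ℝ) * s t ^ (e+1) * (P t - s t)) atTop
        (𝓝 ((N:ℝ) * L ^ (e+1) * (Plim - L))) :=
      (tendsto_const_nhds.mul (hsL.rpow_const (Or.inl hLpos.ne'))).mul (hPL.sub hsL)
    have h0 := lim_deriv_zero hs2 hsL hds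
    have hpos : 0 < (N:ℝ) * L ^ (e+1) := mul_pos hNpos (Real.rpow_pos_of_pos hLpos _)
    rcases mul_eq_zero.mp h0 with h|h
    · exact absurd h hpos.ne'
    · linarith
  have hstat : ∀ i, 1 ≤ i → i ≤ d → σ i * β i = α i * L ∧ σ i * α i = β i * L := by
    intro i h1 h2
    constructor
    · have hda : Tendsto (fun t => s t ^ e * (σ i * b i t - a i t * P t)) atTop
          (𝓝 (L^e * (σ i * β i - α i * Plim))) :=
        hrpowL.mul ((tendsto_const_nhds.mul (hβ i h1 (le_trans h2 hdx))).sub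
          ((hα i h1 (le_trans h2 hdy)).mul hPL))
      have h0 := lim_deriv_zero (ha' i h1 (le_trans h2 hdy)) (hα i h1 (le_trans h2 hdy)) hda
      rcases mul_eq_zero.mp h0 with h|h
      · exact absurd h hLe.ne'
      · rw [hPlimL] at h; linarith
    · have hdb : Tendsto (fun t => s t ^ e * (σ i * a i t - b i t * P t)) atTop
          (𝓝 (L^e * (σ i * α i - β i * Plim))) :=
        hrpowL.mul ((tendsto_const_nhds.mul (hα i h1 (le_trans h2 hdy))).sub
          ((hβ i h1 (le_trans h2 hdx)).mul hPL))
      have h0 := lim_deriv_zero (hb' i h1 (le_trans h2 hdx)) (hβ i h1 (le_trans h2 hdx)) hdb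
      rcases mul_eq_zero.mp h0 with h|h
      · exact absurd h hLe.ne'
      · rw [hPlimL] at h; linarith
  have hAz : ∀ i, 1 ≤ i → i ≤ dy → d < i → α i = 0 := by
    intro i h1 h2 hdi
    have hσ0 : σ i = 0 := hσzero i hdi
    have hfe : (fun t => s t ^ e * (σ i * b i t - a i t * P t))
        = (fun t => s t ^ e * (0 - a i t * P t)) := by
      funext t; rw [hσ0]; ring
    have hda : Tendsto (fun t => s t ^ e * (σ i * b i t - a i t * P t)) atTop
        (𝓝 (L^e * (0 - α i * Plim))) := by
      rw [hfe]
      exact hrpowL.mul (tendsto_const_nhds.sub ((hα i h1 h2).mul hPL))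
    have h0 := lim_deriv_zero (ha' i h1 h2) (hα i h1 h2) hda
    rcases mul_eq_zero.mp h0 with h|h
    · exact absurd h hLe.ne'
    · rw [hPlimL] at h
      have h2' : α i * L = 0 := by linarith
      rcases mul_eq_zero.mp h2' with h'|h'
      · exact h'
      · exact absurd h' hLpos.ne'
  have hBz : ∀ j, 1 ≤ j → j ≤ dx → d < j → β j = 0 := by
    intro j h1 h2 hdj
    have hσ0 : σ j = 0 := hσzero j hdj
    have hfe : (fun t => s t ^ e * (σ j * a j t - b j t * P t))
        = (fun t => s t ^ e * (0 - b j t * P t)) := by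
      funext t; rw [hσ0]; ring
    have hdb : Tendsto (fun t => s t ^ e * (σ j * a j t - b j t * P t)) atTop
        (𝓝 (L^e * (0 - β j * Plim))) := by
      rw [hfe]
      exact hrpowL.mul (tendsto_const_nhds.sub ((hβ j h1 h2).mul hPL))
    have h0 := lim_deriv_zero (hb' j h1 h2) (hβ j h1 h2) hdb
    rcases mul_eq_zero.mp h0 with h|h
    · exact absurd h hLe.ne'
    · rw [hPlimL] at h
      have h2' : β j * L = 0 := by linarith
      rcases mul_eq_zero.mp h2' with h'|h'
      · exact h'
      · exact absurd h' hLpos.ne'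
  have hαnorm : ∑ i ∈ Finset.Icc 1 dy, α i ^2 = 1 := by
    have h1 : Tendsto (fun t => ∑ i ∈ Finset.Icc 1 dy, a i t ^2) atTop
        (𝓝 (∑ i ∈ Finset.Icc 1 dy, α i ^2)) := by
      apply tendsto_finset_sum
      intro i hi
      obtain ⟨ha1, ha2⟩ := Finset.mem_Icc.mp hi
      exact (hα i ha1 ha2).pow 2
    have h2 : Tendsto (fun t => ∑ i ∈ Finset.Icc 1 dy, a i t ^2) atTop (𝓝 1) := by
      refine Tendsto.congr' ?_ tendsto_const_nhds
      filter_upwards [eventually_ge_atTop (0:ℝ)] with t ht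
      exact (ha_norm t ht).symm
    exact tendsto_nhds_unique h1 h2
  have hkey : ∀ i, 1 ≤ i → i ≤ d → α i * (σ i^2 - L^2) = 0 ∧ β i * (σ i^2 - L^2) = 0 := by
    intro i h1 h2
    obtain ⟨e1, e2⟩ := hstat i h1 h2
    constructor
    · linear_combination σ i * e2 + L * e1
    · linear_combination σ i * e1 + L * e2
  obtain ⟨i₀, hi₀mem, hi₀ne⟩ : ∃ i ∈ Finset.Icc 1 dy, α i ≠ 0 := by
    by_contra hcon
    push_neg at hcon
    rw [Finset.sum_eq_zero (fun i hi => by rw [hcon i hi]; ring)] at hαnorm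
    norm_num at hαnorm
  obtain ⟨hi₀1, hi₀dy⟩ := Finset.mem_Icc.mp hi₀mem
  have hi₀d : i₀ ≤ d := by
    by_contra hcon
    exact hi₀ne (hAz i₀ hi₀1 hi₀dy (lt_of_not_ge hcon))
  have hσi₀L : σ i₀ = L := by
    have h := (hkey i₀ hi₀1 hi₀d).1
    rcases mul_eq_zero.mp h with h|h
    · exact absurd h hi₀ne
    · have hσp := hσpos i₀ hi₀1 hi₀d
      have h2 : (σ i₀ - L) * (σ i₀ + L) = 0 := by linear_combination h
      rcases mul_eq_zero.mp h2 with h3|h3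
      · linarith
      · linarith
  have hβα : ∀ i, 1 ≤ i → i ≤ d → σ i = L → β i = α i := by
    intro i h1 h2 hσ
    have h := (hstat i h1 h2).2
    rw [hσ] at h
    exact mul_left_cancel₀ hLpos.ne' (show L * β i = L * α i by linarith)
  have hclim : ∀ i, 1 ≤ i → i ≤ d → Tendsto (fun t => a i t + b i t) atTop (𝓝 (α i + β i)) :=
    fun i h1 h2 => (hα i h1 (le_trans h2 hdy)).add (hβ i h1 (le_trans h2 hdx))
  have hsum_ne : α i₀ + β i₀ ≠ 0 := by
    rw [hβα i₀ hi₀1 hi₀d hσi₀L]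
    intro hcon
    exact hi₀ne (by linarith)
  have hi₀k : k + 1 ≤ i₀ := by
    by_contra hcon
    push_neg at hcon
    have hik : i₀ ≤ k := by omega
    have hz : Tendsto (fun t => a i₀ t + b i₀ t) atTop (𝓝 0) := by
      refine Tendsto.congr' ?_ tendsto_const_nhds
      filter_upwards [eventually_ge_atTop (0:ℝ)] with t ht
      exact ((hciff i₀ hi₀1 hi₀d t ht).mpr (hzero i₀ hi₀1 hik)).symm
    exact hsum_ne (tendsto_nhds_unique (hclim i₀ hi₀1 hi₀d) hz)
  have hi₀k1 : i₀ ≤ k + 1 := by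
    by_contra hcon
    push_neg at hcon
    have hσlt : σ i₀ < σ (k+1) := hσmono (k+1) i₀ hk1 hcon hi₀d
    rw [hσi₀L] at hσlt
    have hαk1 : α (k+1) = 0 := by
      have h := (hkey (k+1) hk1 hk).1
      rcases mul_eq_zero.mp h with h|h
      · exact h
      · exfalso; nlinarith
    have hβk1 : β (k+1) = 0 := by
      have h := (hstat (k+1) hk1 hk).1
      rw [hαk1, zero_mul] at h
      rcases mul_eq_zero.mp h with h'|h'
      · exact absurd h' hσk.ne'
      · exact h'
    have hc0i₀ : a i₀ 0 + b i₀ 0 ≠ 0 := by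
      intro hcon0
      apply hsum_ne
      refine tendsto_nhds_unique (hclim i₀ hi₀1 hi₀d) ?_
      refine Tendsto.congr' ?_ tendsto_const_nhds
      filter_upwards [eventually_ge_atTop (0:ℝ)] with t ht
      exact ((hciff i₀ hi₀1 hi₀d t ht).mpr hcon0).symm
    have hcnei₀ : ∀ t, 0 ≤ t → a i₀ t + b i₀ t ≠ 0 := by
      intro t ht hcon0
      exact hc0i₀ ((hciff i₀ hi₀1 hi₀d t ht).mp hcon0)
    set r : ℝ → ℝ := fun t => (a (k+1) t + b (k+1) t) / (a i₀ t + b i₀ t) with hrdef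
    have hr' : ∀ t, 0 ≤ t → HasDerivAt r ((s t ^ e * (σ (k+1) - σ i₀)) * r t) t := by
      intro t ht
      have hd2 : HasDerivAt (fun u => (a (k+1) u + b (k+1) u) / (a i₀ u + b i₀ u)) _ t := (hc' (k+1) hk1 hk t ht).div (hc' i₀ hi₀1 hi₀d t ht) (hcnei₀ t ht)
      have hcne : a i₀ t + b i₀ t ≠ 0 := hcnei₀ t ht
      convert hd2 using 1
      rw [hrdef]
      field_simp [hcne]
      ring
    have hrmono : MonotoneOn (fun t => r t * r t) (Set.Ici 0) := by
      apply monoOn_Ici_of_hasDerivAt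
        (f' := fun t => 2 * ((s t ^ e * (σ (k+1) - σ i₀)) * r t) * r t)
        (fun t ht => hasDerivAt_sq (hr' t ht))
      intro t ht
      have h1 : 0 ≤ s t ^ e := Real.rpow_nonneg (hs_nonneg t ht) e
      have h2 : 0 ≤ σ (k+1) - σ i₀ := by rw [hσi₀L]; linarith
      nlinarith [mul_nonneg (mul_nonneg h1 h2) (mul_self_nonneg (r t))]
    have hrlim : Tendsto r atTop (𝓝 ((α (k+1) + β (k+1)) / (α i₀ + β i₀))) :=
      (hclim (k+1) hk1 hk).div (hclim i₀ hi₀1 hi₀d) hsum_ne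
    rw [hαk1, hβk1] at hrlim
    simp only [add_zero, zero_div] at hrlim
    have hrsq : Tendsto (fun t => r t * r t) atTop (𝓝 0) := by
      simpa using hrlim.mul hrlim
    have hr0 : 0 < r 0 * r 0 := mul_self_pos.mpr (div_ne_zero hne hc0i₀)
    obtain ⟨u, hu0, hu2⟩ :=
      ((eventually_ge_atTop (0:ℝ)).and ((tendsto_order.mp hrsq).2 (r 0 * r 0) hr0)).exists
    have h6 := hrmono (Set.mem_Ici.mpr le_rfl) (Set.mem_Ici.mpr hu0) hu0
    simp only at h6
    linarith
  have hi₀eq : i₀ = k + 1 := le_antisymm hi₀k1 hi₀k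
  subst hi₀eq
  have hσneqL : ∀ i, 1 ≤ i → i ≤ d → i ≠ k+1 → σ i ^2 - L^2 ≠ 0 := by
    intro i h1 h2 hneq hcon
    have hσp := hσpos i h1 h2
    rcases lt_or_gt_of_ne hneq with hlt|hgt
    · have h3 : σ (k+1) < σ i := hσmono i (k+1) h1 hlt hk
      rw [hσi₀L] at h3
      nlinarith
    · have h3 : σ i < σ (k+1) := hσmono (k+1) i hk1 hgt h2
      rw [hσi₀L] at h3
      nlinarith
  have hαzero : ∀ i, 1 ≤ i → i ≤ dy → i ≠ k+1 → α i = 0 := by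
    intro i h1 h2 hneq
    rcases le_or_gt i d with hle|hgt
    · have h := (hkey i h1 hle).1
      rcases mul_eq_zero.mp h with h|h
      · exact h
      · exact absurd h (hσneqL i h1 hle hneq)
    · exact hAz i h1 h2 hgt
  have hβzero : ∀ j, 1 ≤ j → j ≤ dx → j ≠ k+1 → β j = 0 := by
    intro j h1 h2 hneq
    rcases le_or_gt j d with hle|hgt
    · have h := (hkey j h1 hle).2
      rcases mul_eq_zero.mp h with h|h
      · exact h
      · exact absurd h (hσneqL j h1 hle hneq)
    · exact hBz j h1 h2 hgt
  have hα1 : α (k+1) ^2 = 1 := by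
    have hsum1 : ∑ i ∈ Finset.Icc 1 dy, α i ^2 = α (k+1)^2 := by
      apply Finset.sum_eq_single_of_mem (k+1) (Finset.mem_Icc.mpr ⟨hk1, le_trans hk hdy⟩)
      intro i hi hne'
      obtain ⟨g1, g2⟩ := Finset.mem_Icc.mp hi
      rw [hαzero i g1 g2 hne']
      ring
    rw [← hαnorm, hsum1]
  have hβeqα : β (k+1) = α (k+1) := hβα (k+1) hk1 hk hσi₀L
  refine ⟨?_, ?_, ?_, ?_⟩
  · rw [hσi₀L]; exact hsL
  · have h := (hα (k+1) hk1 (le_trans hk hdy)).mul (hβ (k+1) hk1 (le_trans hk hdx))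
    have h2 : α (k+1) * β (k+1) = 1 := by
      rw [hβeqα, ← pow_two]
      exact hα1
    rwa [h2] at h
  · intro i h1 h2 hneq
    have h := hα i h1 h2
    rwa [hαzero i h1 h2 hneq] at h
  · intro j h1 h2 hneq
    have h := hβ j h1 h2
    rwa [hβzero j h1 h2 hneq] at h
end

section
/- Suppose the reduced gradient-flow system holds with s(0) > 0 and a_i(0) + b_i(0) = 0 for all 1 ≤ i ≤ d. Then for every t ≥ 0, s(t)^{2−2/N} ≤ (s(0)^{2/N−2} + (2N−2)·t)^{−1}; in particular s(t) → 0 as t → ∞, so the induced weight converges to the zero matrix. -/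
open Filter Topology Set Real

theorem stmt10
    (N d dy dx : ℕ) (hN : 2 ≤ N) (hd : 1 ≤ d) (hdy : d ≤ dy) (hdx : d ≤ dx)
    (σ : ℕ → ℝ)
    (hσpos : ∀ i, 1 ≤ i → i ≤ d → 0 < σ i)
    (hσmono : ∀ i j, 1 ≤ i → i < j → j ≤ d → σ j < σ i)
    (hσzero : ∀ i, d < i → σ i = 0)
    (s : ℝ → ℝ) (a b : ℕ → ℝ → ℝ) (P : ℝ → ℝ)
    (hs_nonneg : ∀ t, 0 ≤ t → 0 ≤ s t)
    (ha_norm : ∀ t, 0 ≤ t → ∑ i ∈ Finset.Icc 1 dy, (a i t) ^ 2 = 1)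
    (hb_norm : ∀ t, 0 ≤ t → ∑ j ∈ Finset.Icc 1 dx, (b j t) ^ 2 = 1)
    (hP : ∀ t, P t = ∑ j ∈ Finset.Icc 1 d, σ j * a j t * b j t)
    (hs' : ∀ t, 0 ≤ t →
      HasDerivAt s ((N : ℝ) * s t ^ ((2 : ℝ) - 2 / (N : ℝ)) * (P t - s t)) t)
    (ha' : ∀ i, 1 ≤ i → i ≤ dy → ∀ t, 0 ≤ t →
      HasDerivAt (a i) (s t ^ ((1 : ℝ) - 2 / (N : ℝ)) * (σ i * b i t - a i t * P t)) t)
    (hb' : ∀ j, 1 ≤ j → j ≤ dx → ∀ t, 0 ≤ t →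
      HasDerivAt (b j) (s t ^ ((1 : ℝ) - 2 / (N : ℝ)) * (σ j * a j t - b j t * P t)) t)
    (hs0 : 0 < s 0)
    (hzero : ∀ i, 1 ≤ i → i ≤ d → a i 0 + b i 0 = 0) :
    (∀ t, 0 ≤ t → s t ^ ((2 : ℝ) - 2 / (N : ℝ)) ≤
      (s 0 ^ ((2 : ℝ) / (N : ℝ) - 2) + (2 * (N : ℝ) - 2) * t)⁻¹) ∧
    Tendsto s atTop (nhds 0) := by
  have hN2 : (2:ℝ) ≤ (N:ℝ) := by exact_mod_cast hN
  have hNpos : (0:ℝ) < (N:ℝ) := by linarith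
  set q : ℝ := (2:ℝ) - 2 / (N:ℝ) with hq_def
  have hq1 : 1 ≤ q := by
    have h2N : 2 / (N:ℝ) ≤ 1 := by
      rw [div_le_one hNpos]; exact hN2
    simp only [hq_def]; linarith
  have hq0 : 0 < q := by linarith
  have hq1' : 0 ≤ q - 1 := by linarith
  have hqe : (1:ℝ) - 2 / (N:ℝ) = q - 1 := by simp only [hq_def]; ring
  set C : ℝ := ∑ j ∈ Finset.Icc 1 d, σ j with hC_def
  have hCnn : 0 ≤ C := by
    apply Finset.sum_nonneg
    intro j hj
    rw [Finset.mem_Icc] at hj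
    exact (hσpos j hj.1 hj.2).le
  -- |a i t| ≤ 1, |b j t| ≤ 1
  have ha_abs : ∀ i, 1 ≤ i → i ≤ dy → ∀ t, 0 ≤ t → |a i t| ≤ 1 := by
    intro i h1 h2 t ht
    rw [← sq_le_one_iff_abs_le_one, ← ha_norm t ht]
    exact Finset.single_le_sum (fun j _ => sq_nonneg (a j t))
      (Finset.mem_Icc.mpr ⟨h1, h2⟩)
  have hb_abs : ∀ i, 1 ≤ i → i ≤ dx → ∀ t, 0 ≤ t → |b i t| ≤ 1 := by
    intro i h1 h2 t ht
    rw [← sq_le_one_iff_abs_le_one, ← hb_norm t ht]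
    exact Finset.single_le_sum (fun j _ => sq_nonneg (b j t))
      (Finset.mem_Icc.mpr ⟨h1, h2⟩)
  have hPabs : ∀ t, 0 ≤ t → |P t| ≤ C := by
    intro t ht
    rw [hP t]
    refine (Finset.abs_sum_le_sum_abs _ _).trans (Finset.sum_le_sum ?_)
    intro j hj
    rw [Finset.mem_Icc] at hj
    have hσj := hσpos j hj.1 hj.2
    have haj := ha_abs j hj.1 (hj.2.trans hdy) t ht
    have hbj := hb_abs j hj.1 (hj.2.trans hdx) t ht
    calc |σ j * a j t * b j t| = σ j * (|a j t| * |b j t|) := by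
          rw [abs_mul, abs_mul, abs_of_pos hσj, mul_assoc]
      _ ≤ σ j * 1 := by
          apply mul_le_mul_of_nonneg_left _ hσj.le
          exact mul_le_one₀ haj (abs_nonneg _) hbj
      _ = σ j := mul_one _
  -- continuity of s on [0, ∞)
  have hscont : ContinuousOn s (Ici (0:ℝ)) := fun t ht =>
    (hs' t ht).continuousAt.continuousWithinAt
  -- a i + b i = 0 on [0, ∞) for i ≤ d
  have hab : ∀ i, 1 ≤ i → i ≤ d → ∀ t, 0 ≤ t → a i t + b i t = 0 := by
    intro i hi1 hid t ht
    have hidy : i ≤ dy := hid.trans hdy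
    have hidx : i ≤ dx := hid.trans hdx
    obtain ⟨M, hM⟩ := (isCompact_Icc : IsCompact (Icc (0:ℝ) t)).exists_bound_of_continuousOn
      (hscont.mono Icc_subset_Ici_self)
    set B : ℝ := max 1 (M ^ (q - 1)) with hB_def
    have hB1 : (1:ℝ) ≤ B := le_max_left _ _
    have hsB : ∀ τ, τ ∈ Icc (0:ℝ) t → s τ ^ (q - 1) ≤ B := by
      intro τ hτ
      rcases le_total (s τ) 1 with h | h
      · exact (Real.rpow_le_one (hs_nonneg τ hτ.1) h hq1').trans hB1
      · have h2 : s τ ≤ M := le_trans (le_abs_self _) (hM τ hτ)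
        exact (Real.rpow_le_rpow (hs_nonneg τ hτ.1) h2 hq1').trans (le_max_right _ _)
    set K : ℝ := B * (σ i + C) with hK_def
    set f : ℝ → ℝ := fun τ => a i τ + b i τ with hf_def
    have hfd : ∀ τ, 0 ≤ τ → HasDerivAt f (s τ ^ (q - 1) * ((σ i - P τ) * f τ)) τ := by
      intro τ hτ
      have h1 := (ha' i hi1 hidy τ hτ).add (hb' i hi1 hidx τ hτ)
      rw [hqe] at h1
      exact h1.congr_deriv (by simp only [hf_def]; ring)
    have key := norm_le_gronwallBound_of_norm_deriv_right_le
      (f := f) (f' := fun τ => s τ ^ (q - 1) * ((σ i - P τ) * f τ))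
      (δ := 0) (K := K) (ε := 0) (a := 0) (b := t)
      (fun τ hτ => (hfd τ hτ.1).continuousAt.continuousWithinAt)
      (fun τ hτ => (hfd τ hτ.1).hasDerivWithinAt)
      (by simp [hf_def, hzero i hi1 hid])
      ?_
    · have h2 := key t ⟨ht, le_refl t⟩
      rw [gronwallBound_ε0, zero_mul] at h2
      have := norm_le_zero_iff.mp h2
      simpa [hf_def] using this
    · intro τ hτ
      have hτ0 : 0 ≤ τ := hτ.1
      have hτIcc : τ ∈ Icc (0:ℝ) t := ⟨hτ.1, hτ.2.le⟩
      have e1 : ‖s τ ^ (q - 1) * ((σ i - P τ) * f τ)‖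
          = s τ ^ (q - 1) * (|σ i - P τ| * ‖f τ‖) := by
        rw [Real.norm_eq_abs, abs_mul, abs_mul,
          abs_of_nonneg (Real.rpow_nonneg (hs_nonneg τ hτ0) _), Real.norm_eq_abs]
      rw [e1]
      have h3 : |σ i - P τ| ≤ σ i + C := by
        have := hPabs τ hτ0
        have hσi := hσpos i hi1 hid
        rw [abs_sub_comm]
        calc |P τ - σ i| ≤ |P τ| + |σ i| := abs_sub _ _
          _ ≤ C + σ i := by rw [abs_of_pos hσi]; linarith
          _ = σ i + C := by ring
      have h4 : s τ ^ (q - 1) * (|σ i - P τ| * ‖f τ‖) ≤ B * ((σ i + C) * ‖f τ‖) := by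
        apply mul_le_mul (hsB τ hτIcc)
          (mul_le_mul_of_nonneg_right h3 (norm_nonneg _))
          (by positivity) (by linarith)
      calc s τ ^ (q - 1) * (|σ i - P τ| * ‖f τ‖) ≤ B * ((σ i + C) * ‖f τ‖) := h4
        _ = K * ‖f τ‖ + 0 := by rw [hK_def]; ring
  -- P ≤ 0
  have hPle : ∀ t, 0 ≤ t → P t ≤ 0 := by
    intro t ht
    rw [hP t]
    apply Finset.sum_nonpos
    intro j hj
    rw [Finset.mem_Icc] at hj
    have hb0 : b j t = -(a j t) := by
      have := hab j hj.1 hj.2 t ht; linarith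
    rw [hb0]
    have hσj := (hσpos j hj.1 hj.2).le
    nlinarith [sq_nonneg (a j t)]
  -- s is bounded by s 0
  have hsle : ∀ t, 0 ≤ t → s t ≤ s 0 := by
    intro t ht
    have hanti : AntitoneOn s (Icc 0 t) := by
      apply antitoneOn_of_deriv_nonpos (convex_Icc 0 t)
        (hscont.mono Icc_subset_Ici_self)
      · intro τ hτ
        rw [interior_Icc] at hτ
        exact (hs' τ hτ.1.le).differentiableAt.differentiableWithinAt
      · intro τ hτ
        rw [interior_Icc] at hτ
        rw [(hs' τ hτ.1.le).deriv]
        apply mul_nonpos_of_nonneg_of_nonpos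
        · exact mul_nonneg (Nat.cast_nonneg N)
            (Real.rpow_nonneg (hs_nonneg τ hτ.1.le) _)
        · have := hPle τ hτ.1.le
          have := hs_nonneg τ hτ.1.le
          linarith
    exact hanti ⟨le_refl 0, ht⟩ ⟨ht, le_refl t⟩ ht
  -- s stays positive
  have hspos : ∀ t, 0 ≤ t → 0 < s t := by
    intro t₁ ht₁
    by_contra hcon
    have hst : s t₁ = 0 := le_antisymm (not_lt.mp hcon) (hs_nonneg t₁ ht₁)
    set B : ℝ := max 1 (s 0 ^ (q - 1)) with hB_def
    have hB0 : (0:ℝ) ≤ B := le_trans zero_le_one (le_max_left _ _)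
    have hsq : ∀ τ, 0 ≤ τ → s τ ^ q ≤ B * s τ := by
      intro τ hτ
      rcases eq_or_lt_of_le (hs_nonneg τ hτ) with h | h
      · rw [← h, Real.zero_rpow hq0.ne', mul_zero]
      · have e : s τ ^ q = s τ ^ (q - 1) * s τ := by
          have h2 := Real.rpow_add h (q - 1) 1
          rw [Real.rpow_one] at h2
          calc s τ ^ q = s τ ^ (q - 1 + 1) := by congr 1; ring
            _ = s τ ^ (q - 1) * s τ := h2
        rw [e]
        apply mul_le_mul_of_nonneg_right _ h.le
        rcases le_total (s τ) 1 with h1 | h1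
        · exact (Real.rpow_le_one h.le h1 hq1').trans (le_max_left _ _)
        · exact (Real.rpow_le_rpow h.le (hsle τ hτ) hq1').trans (le_max_right _ _)
    set K : ℝ := (N:ℝ) * B * (C + s 0) with hK_def
    set f : ℝ → ℝ := fun τ => s (t₁ - τ) with hf_def
    have key := norm_le_gronwallBound_of_norm_deriv_right_le
      (f := f)
      (f' := fun τ => ((N:ℝ) * s (t₁ - τ) ^ q * (P (t₁ - τ) - s (t₁ - τ))) * (-1))
      (δ := 0) (K := K) (ε := 0) (a := 0) (b := t₁)
      ?_ ?_ (by simp [hf_def, hst]) ?_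
    · have h2 := key t₁ ⟨ht₁, le_refl t₁⟩
      rw [gronwallBound_ε0, zero_mul] at h2
      have h3 := norm_le_zero_iff.mp h2
      simp only [hf_def, sub_self] at h3
      exact absurd h3 (by linarith)
    · -- continuity
      apply hscont.comp ((continuous_const.sub continuous_id).continuousOn)
      intro τ hτ
      simp only [Pi.sub_apply, id_eq, mem_Ici]
      linarith [hτ.2]
    · -- derivative
      intro τ hτ
      have h0 : (0:ℝ) ≤ t₁ - τ := by linarith [hτ.2]
      have inner : HasDerivAt (fun τ : ℝ => t₁ - τ) (-1) τ := by
        simpa using (hasDerivAt_id τ).const_sub t₁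
      exact ((hs' _ h0).comp τ inner).hasDerivWithinAt
    · -- bound
      intro τ hτ
      have h0 : (0:ℝ) ≤ t₁ - τ := by linarith [hτ.2]
      have hsx := hs_nonneg _ h0
      have e1 : ‖((N:ℝ) * s (t₁ - τ) ^ q * (P (t₁ - τ) - s (t₁ - τ))) * (-1)‖
          = (N:ℝ) * s (t₁ - τ) ^ q * |P (t₁ - τ) - s (t₁ - τ)| := by
        rw [Real.norm_eq_abs, abs_mul, abs_mul, abs_mul, abs_neg, abs_one, mul_one,
          abs_of_nonneg (Nat.cast_nonneg N : (0:ℝ) ≤ (N:ℝ)),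
          abs_of_nonneg (Real.rpow_nonneg hsx q)]
      have e2 : ‖f τ‖ = s (t₁ - τ) := by
        rw [hf_def, Real.norm_eq_abs, abs_of_nonneg hsx]
      rw [e1, e2]
      have h3 : |P (t₁ - τ) - s (t₁ - τ)| ≤ C + s 0 := by
        have h4 := hPabs _ h0
        have h5 := hsle _ h0
        calc |P (t₁ - τ) - s (t₁ - τ)| ≤ |P (t₁ - τ)| + |s (t₁ - τ)| := abs_sub _ _
          _ ≤ C + s 0 := by rw [abs_of_nonneg hsx]; linarith
      have h6 : (N:ℝ) * s (t₁ - τ) ^ q * |P (t₁ - τ) - s (t₁ - τ)|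
          ≤ (N:ℝ) * (B * s (t₁ - τ)) * (C + s 0) := by
        apply mul_le_mul _ h3 (abs_nonneg _) (by positivity)
        exact mul_le_mul_of_nonneg_left (hsq _ h0) (Nat.cast_nonneg N)
      calc (N:ℝ) * s (t₁ - τ) ^ q * |P (t₁ - τ) - s (t₁ - τ)|
          ≤ (N:ℝ) * (B * s (t₁ - τ)) * (C + s 0) := h6
        _ = K * s (t₁ - τ) + 0 := by rw [hK_def]; ring
  -- main inequality
  have hmain : ∀ t, 0 ≤ t → s t ^ q ≤ (s 0 ^ (-q) + (2 * (N:ℝ) - 2) * t)⁻¹ := by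
    intro t ht
    set φ : ℝ → ℝ := fun τ => s τ ^ (-q) - (2 * (N:ℝ) - 2) * τ with hφ_def
    have hφd : ∀ τ, 0 ≤ τ → HasDerivAt φ
        (((N:ℝ) * s τ ^ q * (P τ - s τ)) * (-q) * s τ ^ (-q - 1) - (2 * (N:ℝ) - 2)) τ := by
      intro τ hτ
      have h1 : HasDerivAt (fun τ => s τ ^ (-q))
          (((N:ℝ) * s τ ^ q * (P τ - s τ)) * (-q) * s τ ^ (-q - 1)) τ :=
        (hs' τ hτ).rpow_const (Or.inl (hspos τ hτ).ne')
      have h2 : HasDerivAt (fun τ : ℝ => (2 * (N:ℝ) - 2) * τ) (2 * (N:ℝ) - 2) τ := by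
        simpa using (hasDerivAt_id τ).const_mul (2 * (N:ℝ) - 2)
      exact h1.sub h2
    have hφnonneg : ∀ τ, 0 ≤ τ →
        0 ≤ ((N:ℝ) * s τ ^ q * (P τ - s τ)) * (-q) * s τ ^ (-q - 1) - (2 * (N:ℝ) - 2) := by
      intro τ hτ
      have hx : 0 < s τ := hspos τ hτ
      have e1 : s τ ^ q * s τ ^ (-q - 1) * s τ = 1 := by
        have h2 : s τ ^ q * s τ ^ (-q - 1) * s τ = s τ ^ (q + (-q - 1) + 1) := by
          rw [Real.rpow_add hx, Real.rpow_add hx, Real.rpow_one]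
        rw [h2, show q + (-q - 1) + 1 = 0 by ring, Real.rpow_zero]
      have h2 : s τ ≤ s τ - P τ := by linarith [hPle τ hτ]
      have h3 : 0 < s τ ^ q * s τ ^ (-q - 1) :=
        mul_pos (Real.rpow_pos_of_pos hx q) (Real.rpow_pos_of_pos hx _)
      have h4 : (N:ℝ) * q * (s τ ^ q * s τ ^ (-q - 1)) * s τ
          ≤ (N:ℝ) * q * (s τ ^ q * s τ ^ (-q - 1)) * (s τ - P τ) := by
        apply mul_le_mul_of_nonneg_left h2 (by positivity)
      have h5 : (N:ℝ) * q * (s τ ^ q * s τ ^ (-q - 1)) * s τ = (N:ℝ) * q := by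
        rw [mul_assoc ((N:ℝ) * q), e1, mul_one]
      have hNq : (N:ℝ) * q = 2 * (N:ℝ) - 2 := by
        rw [hq_def]; field_simp
      have e3 : ((N:ℝ) * s τ ^ q * (P τ - s τ)) * (-q) * s τ ^ (-q - 1)
          = (N:ℝ) * q * (s τ ^ q * s τ ^ (-q - 1)) * (s τ - P τ) := by ring
      rw [e3]
      linarith
    have hmono : MonotoneOn φ (Icc 0 t) := by
      apply monotoneOn_of_deriv_nonneg (convex_Icc 0 t)
        (fun τ hτ => (hφd τ hτ.1).continuousAt.continuousWithinAt)
      · intro τ hτ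
        rw [interior_Icc] at hτ
        exact (hφd τ hτ.1.le).differentiableAt.differentiableWithinAt
      · intro τ hτ
        rw [interior_Icc] at hτ
        rw [(hφd τ hτ.1.le).deriv]
        exact hφnonneg τ hτ.1.le
    have h6 : φ 0 ≤ φ t := hmono ⟨le_refl 0, ht⟩ ⟨ht, le_refl t⟩ ht
    have h7 : s 0 ^ (-q) + (2 * (N:ℝ) - 2) * t ≤ s t ^ (-q) := by
      simp only [hφ_def] at h6
      have : s 0 ^ (-q) - (2 * (N:ℝ) - 2) * 0 = s 0 ^ (-q) := by ring
      linarith [h6]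
    have hu : 0 < s 0 ^ (-q) + (2 * (N:ℝ) - 2) * t := by
      have h8 := Real.rpow_pos_of_pos hs0 (-q)
      have h9 : (0:ℝ) ≤ (2 * (N:ℝ) - 2) * t := mul_nonneg (by linarith) ht
      linarith
    have h8 : s t ^ (-q) = (s t ^ q)⁻¹ := Real.rpow_neg (hs_nonneg t ht) q
    rw [h8] at h7
    calc s t ^ q = ((s t ^ q)⁻¹)⁻¹ := (inv_inv _).symm
      _ ≤ (s 0 ^ (-q) + (2 * (N:ℝ) - 2) * t)⁻¹ := inv_anti₀ hu h7
  constructor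
  · intro t ht
    rw [show (2:ℝ) / (N:ℝ) - 2 = -q by rw [hq_def]; ring]
    exact hmain t ht
  · -- tendsto
    have hub : Tendsto (fun t : ℝ => s 0 ^ (-q) + (2 * (N:ℝ) - 2) * t) atTop atTop :=
      tendsto_atTop_add_const_left _ _ (Tendsto.const_mul_atTop (by linarith) tendsto_id)
    have hinv : Tendsto (fun t : ℝ => (s 0 ^ (-q) + (2 * (N:ℝ) - 2) * t)⁻¹) atTop (𝓝 0) :=
      hub.inv_tendsto_atTop
    have hqinv : (0:ℝ) < q⁻¹ := by positivity
    have hrt : Tendsto (fun t : ℝ => ((s 0 ^ (-q) + (2 * (N:ℝ) - 2) * t)⁻¹) ^ q⁻¹)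
        atTop (𝓝 0) := by
      have hc : ContinuousAt (fun x : ℝ => x ^ q⁻¹) 0 :=
        Real.continuousAt_rpow_const 0 q⁻¹ (Or.inr hqinv.le)
      have h1 := hc.tendsto.comp hinv
      simpa [Function.comp_def, Real.zero_rpow hqinv.ne'] using h1
    apply tendsto_of_tendsto_of_tendsto_of_le_of_le' tendsto_const_nhds hrt
    · filter_upwards [eventually_ge_atTop (0:ℝ)] with t ht
      exact hs_nonneg t ht
    · filter_upwards [eventually_ge_atTop (0:ℝ)] with t ht
      have h1 := hmain t ht
      have h2 : s t = (s t ^ q) ^ q⁻¹ := by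
        rw [← Real.rpow_mul (hs_nonneg t ht), mul_inv_cancel₀ hq0.ne', Real.rpow_one]
      rw [h2]
      exact Real.rpow_le_rpow (Real.rpow_nonneg (hs_nonneg t ht) q) h1 hqinv.le
end
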